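/- arXiv:0805.1525 — 8 statements merged into one kernel-verified Lean document; each statement's English description precedes it below -/
import Mathlib

section
/- Let k ≡ 1 or 3 (mod 4). Then SI_k(α_1,...,α_k) = 2^k (-1)^{(r+1)/2} (∏_{j=1}^k sin(α_j/2)) · cos((α_1+...+α_k)/2), where r ∈ {1,3} with k ≡ r (mod 4); and if k ≡ 2 or 4 (mod 4) with r ∈ {2,4}, then SI_k(α_1,...,α_k) = 2^k (-1)^{r/2} (∏_{j=1}^k sin(α_j/2)) · sin((α_1+...+α_k)/2). -/
open Real Finset

/-- Alternating sine sum `SI_k`. -/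
noncomputable def SI (k : ℕ) (α : Fin k → ℝ) : ℝ :=
  ∑ j : Fin k → Fin 2, (-1 : ℝ) ^ (∑ i, (j i : ℕ)) * Real.sin (∑ i, (j i : ℕ) * α i)

lemma SI_factor (a : ℝ) : (1 : ℂ) - Complex.exp ((a:ℂ) * Complex.I) =
    (-2 * Complex.I) * (Real.sin (a/2) : ℂ) * Complex.exp (((a/2 : ℝ) : ℂ) * Complex.I) := by
  have h2 : Complex.exp (((a/2:ℝ):ℂ)*Complex.I) * Complex.exp (((a/2:ℝ):ℂ)*Complex.I)
      = Complex.exp ((a:ℂ)*Complex.I) := by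
    rw [← Complex.exp_add]; congr 1; push_cast; ring
  have h1 : Complex.exp (-(((a/2:ℝ):ℂ))*Complex.I) * Complex.exp (((a/2:ℝ):ℂ)*Complex.I) = 1 := by
    rw [← Complex.exp_add]; norm_num
  rw [Complex.ofReal_sin, Complex.sin]
  linear_combination -h1 + h2 + (Complex.exp (-(((a/2:ℝ):ℂ))*Complex.I) -
    Complex.exp (((a/2:ℝ):ℂ)*Complex.I)) * Complex.exp (((a/2:ℝ):ℂ)*Complex.I) * Complex.I_sq

lemma SI_sum_prod (k : ℕ) (α : Fin k → ℝ) :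
    (∑ j : Fin k → Fin 2, ((-1 : ℂ)) ^ (∑ i, (j i : ℕ)) *
      Complex.exp (((∑ i, (j i : ℕ) * α i : ℝ) : ℂ) * Complex.I)) =
    ∏ i, ((1 : ℂ) - Complex.exp (((α i : ℝ) : ℂ) * Complex.I)) := by
  have h := Finset.prod_univ_sum (fun _ : Fin k => (univ : Finset (Fin 2)))
    (fun i j => ((-1 : ℂ)) ^ (j : ℕ) * Complex.exp ((((j : ℕ) * α i : ℝ) : ℂ) * Complex.I))
  rw [Fintype.piFinset_univ] at h
  have lhs_eq : ∀ j : Fin k → Fin 2,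
      ((-1 : ℂ)) ^ (∑ i, (j i : ℕ)) * Complex.exp (((∑ i, (j i : ℕ) * α i : ℝ) : ℂ) * Complex.I)
      = ∏ i, ((-1 : ℂ)) ^ ((j i : ℕ)) * Complex.exp ((((j i : ℕ) * α i : ℝ) : ℂ) * Complex.I) := by
    intro j
    rw [Finset.prod_mul_distrib, Finset.prod_pow_eq_pow_sum]
    congr 1
    rw [← Complex.exp_sum]
    congr 1
    push_cast
    rw [Finset.sum_mul]
  have rhs_eq : ∀ i : Fin k, (∑ j : Fin 2, ((-1 : ℂ)) ^ (j : ℕ) *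
      Complex.exp ((((j : ℕ) * α i : ℝ) : ℂ) * Complex.I))
      = (1 : ℂ) - Complex.exp (((α i : ℝ) : ℂ) * Complex.I) := by
    intro i
    rw [Fin.sum_univ_two]
    norm_num
    ring
  calc (∑ j : Fin k → Fin 2, ((-1 : ℂ)) ^ (∑ i, (j i : ℕ)) *
      Complex.exp (((∑ i, (j i : ℕ) * α i : ℝ) : ℂ) * Complex.I))
      = ∑ j : Fin k → Fin 2, ∏ i, ((-1 : ℂ)) ^ ((j i : ℕ)) *
        Complex.exp ((((j i : ℕ) * α i : ℝ) : ℂ) * Complex.I) :=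
        Finset.sum_congr rfl (fun j _ => lhs_eq j)
    _ = ∏ i, ∑ j : Fin 2, ((-1 : ℂ)) ^ (j : ℕ) *
        Complex.exp ((((j : ℕ) * α i : ℝ) : ℂ) * Complex.I) := h.symm
    _ = _ := Finset.prod_congr rfl (fun i _ => rhs_eq i)

lemma SI_key (k : ℕ) (α : Fin k → ℝ) :
    SI k α = ((-2 * Complex.I) ^ k * ((∏ j, Real.sin (α j / 2) : ℝ) : ℂ) *
      Complex.exp ((((∑ j, α j) / 2 : ℝ) : ℂ) * Complex.I)).im := by
  have step1 : SI k α = (∑ j : Fin k → Fin 2, ((-1 : ℂ)) ^ (∑ i, (j i : ℕ)) *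
      Complex.exp (((∑ i, (j i : ℕ) * α i : ℝ) : ℂ) * Complex.I)).im := by
    rw [Complex.im_sum, SI]
    refine Finset.sum_congr rfl (fun j _ => ?_)
    rw [show ((-1 : ℂ)) ^ (∑ i, (j i : ℕ)) = (((-1 : ℝ) ^ (∑ i, (j i : ℕ)) : ℝ) : ℂ) by
      push_cast; ring, Complex.im_ofReal_mul, Complex.exp_ofReal_mul_I_im]
  rw [step1, SI_sum_prod]
  congr 1
  calc (∏ i, ((1 : ℂ) - Complex.exp (((α i : ℝ) : ℂ) * Complex.I)))
      = ∏ i, ((-2 * Complex.I) * (Real.sin (α i / 2) : ℂ) *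
        Complex.exp (((α i / 2 : ℝ) : ℂ) * Complex.I)) :=
        Finset.prod_congr rfl (fun i _ => SI_factor (α i))
    _ = (-2 * Complex.I) ^ k * ((∏ j, Real.sin (α j / 2) : ℝ) : ℂ) *
        Complex.exp ((((∑ j, α j) / 2 : ℝ) : ℂ) * Complex.I) := by
        rw [Finset.prod_mul_distrib, Finset.prod_mul_distrib, Finset.prod_const,
          Finset.card_univ, Fintype.card_fin, ← Complex.exp_sum, Complex.ofReal_prod]
        congr 1
        rw [← Finset.sum_mul]
        congr 1
        push_cast
        rw [Finset.sum_div]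

lemma neg_I_pow_mod (k : ℕ) : (-Complex.I) ^ k = (-Complex.I) ^ (k % 4) := by
  have h4 : (-Complex.I) ^ 4 = 1 := by
    have h := Complex.I_sq
    rw [show (4 : ℕ) = 2 * 2 by rfl, pow_mul, neg_sq, h]
    norm_num
  conv_lhs => rw [← Nat.div_add_mod k 4]
  rw [pow_add, pow_mul, h4, one_pow, one_mul]

theorem stmt4 (k r : ℕ) (hr : r ∈ ({1, 2, 3, 4} : Set ℕ)) (hk : k % 4 = r % 4)
    (hk1 : 1 ≤ k) (α : Fin k → ℝ) :
    (r = 1 ∨ r = 3 →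
      SI k α = 2 ^ k * (-1 : ℝ) ^ ((r + 1) / 2) * (∏ j, Real.sin (α j / 2)) *
        Real.cos ((∑ j, α j) / 2)) ∧
    (r = 2 ∨ r = 4 →
      SI k α = 2 ^ k * (-1 : ℝ) ^ (r / 2) * (∏ j, Real.sin (α j / 2)) *
        Real.sin ((∑ j, α j) / 2)) := by
  set P : ℝ := ∏ j, Real.sin (α j / 2) with hP
  set x : ℝ := (∑ j, α j) / 2 with hx
  have key : SI k α = (2 : ℝ) ^ k * P * ((-Complex.I) ^ (k % 4) *
      Complex.exp ((x : ℂ) * Complex.I)).im := by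
    rw [SI_key]
    rw [show (-2 * Complex.I) ^ k * (P : ℂ) * Complex.exp ((x : ℂ) * Complex.I)
        = (((2 : ℝ) ^ k * P : ℝ) : ℂ) * ((-Complex.I) ^ (k % 4) *
          Complex.exp ((x : ℂ) * Complex.I)) by
      rw [show (-2 * Complex.I) = 2 * (-Complex.I) by ring, mul_pow, ← neg_I_pow_mod]
      push_cast; ring]
    rw [Complex.im_ofReal_mul]
  simp only [Set.mem_insert_iff, Set.mem_singleton_iff] at hr
  rcases hr with rfl | rfl | rfl | rfl
  · refine ⟨fun _ => ?_, fun h => by omega⟩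
    rw [key, hk]
    simp [Complex.mul_im, Complex.exp_ofReal_mul_I_re, Complex.exp_ofReal_mul_I_im]
  · refine ⟨fun h => by omega, fun _ => ?_⟩
    rw [key, hk]
    simp [Complex.mul_im, Complex.exp_ofReal_mul_I_re, Complex.exp_ofReal_mul_I_im, pow_two,
      Complex.mul_re, Complex.I_re, Complex.I_im]
  · refine ⟨fun _ => ?_, fun h => by omega⟩
    rw [key, hk]
    simp [Complex.mul_im, Complex.exp_ofReal_mul_I_re, Complex.exp_ofReal_mul_I_im, pow_succ,
      pow_two, Complex.mul_re, Complex.I_re, Complex.I_im]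
  · refine ⟨fun h => by omega, fun _ => ?_⟩
    rw [key, hk]
    simp [Complex.exp_ofReal_mul_I_im]
end

section
/- Let k ≡ r (mod 4). If r ∈ {1,3}, then CO_k(α_1,...,α_k) = 2^k (-1)^{(r-1)/2} (∏_{j=1}^k sin(α_j/2)) · sin((α_1+...+α_k)/2); if r ∈ {2,4}, then CO_k(α_1,...,α_k) = 2^k (-1)^{r/2} (∏_{j=1}^k sin(α_j/2)) · cos((α_1+...+α_k)/2). -/
open Real Finset

/-- Alternating cosine sum `CO_k`. -/
noncomputable def CO (k : ℕ) (α : Fin k → ℝ) : ℝ :=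
  ∑ j : Fin k → Fin 2, (-1 : ℝ) ^ (∑ i, (j i : ℕ)) * Real.cos (∑ i, (j i : ℕ) * α i)

lemma one_sub_exp (θ : ℝ) : 1 - Complex.exp (θ * Complex.I) =
    (-2 * Complex.I) * Real.sin (θ/2) * Complex.exp ((θ/2 : ℝ) * Complex.I) := by
  have h1 : Complex.exp (-(((θ/2:ℝ)) : ℂ) * Complex.I) * Complex.exp (((θ/2:ℝ):ℂ) * Complex.I) = 1 := by
    rw [← Complex.exp_add]; ring_nf; exact Complex.exp_zero
  have h2 : Complex.exp (((θ/2:ℝ):ℂ) * Complex.I) * Complex.exp (((θ/2:ℝ):ℂ) * Complex.I) = Complex.exp (θ * Complex.I) := by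
    rw [← Complex.exp_add]; push_cast; ring_nf
  rw [Complex.ofReal_sin, Complex.sin]
  linear_combination -h1 + h2 + ((Complex.exp (-(((θ/2:ℝ)) : ℂ) * Complex.I) - Complex.exp (((θ/2:ℝ):ℂ) * Complex.I)) * Complex.exp (((θ/2:ℝ):ℂ) * Complex.I)) * Complex.I_sq

lemma prod_eq_sum (k : ℕ) (α : Fin k → ℝ) :
    ∏ i, (1 - Complex.exp ((α i : ℂ) * Complex.I)) =
      ∑ g : Fin k → Fin 2, (-1:ℂ)^(∑ i, (g i:ℕ)) *
        Complex.exp (((∑ i, ((g i:ℕ) * α i) : ℝ) : ℂ) * Complex.I) := by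
  have : ∀ i : Fin k, (1 - Complex.exp ((α i : ℂ) * Complex.I)) =
      ∑ j : Fin 2, (-1:ℂ)^(j:ℕ) * Complex.exp ((((j:ℕ) * α i : ℝ) : ℂ) * Complex.I) := by
    intro i
    rw [Fin.sum_univ_two]
    push_cast
    simp [Complex.exp_zero]
    ring
  rw [Finset.prod_congr rfl (fun i _ => this i)]
  rw [Finset.prod_univ_sum]
  rw [Fintype.piFinset_univ]
  refine Finset.sum_congr rfl (fun g _ => ?_)
  rw [Finset.prod_mul_distrib, Finset.prod_pow_eq_pow_sum, ← Complex.exp_sum]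
  congr 1
  push_cast
  rw [← Finset.sum_mul]

lemma CO_eq_re (k : ℕ) (α : Fin k → ℝ) :
    CO k α = (((2:ℝ)^k * ∏ j, Real.sin (α j / 2) : ℝ) *
      ((-Complex.I)^k * Complex.exp ((((∑ j, α j)/2 : ℝ) : ℂ) * Complex.I))).re := by
  have h1 : CO k α = (∏ i, (1 - Complex.exp ((α i : ℂ) * Complex.I))).re := by
    rw [prod_eq_sum, Complex.re_sum]
    unfold CO
    refine Finset.sum_congr rfl (fun g _ => ?_)
    rw [show ((-1:ℂ)^(∑ i, (g i:ℕ))) = (((-1:ℝ)^(∑ i, (g i:ℕ)) : ℝ) : ℂ) by push_cast; ring]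
    rw [Complex.re_ofReal_mul, Complex.exp_ofReal_mul_I_re]
  rw [h1]
  congr 1
  calc ∏ i, (1 - Complex.exp ((α i : ℂ) * Complex.I))
      = ∏ i, ((-2 * Complex.I) * Real.sin (α i / 2) * Complex.exp (((α i / 2 : ℝ) : ℂ) * Complex.I)) :=
        Finset.prod_congr rfl (fun i _ => one_sub_exp (α i))
    _ = _ := by
        rw [Finset.prod_mul_distrib, Finset.prod_mul_distrib, Finset.prod_const, ← Complex.exp_sum]
        rw [show (-2 * Complex.I) = (2:ℂ) * (-Complex.I) by ring, mul_pow]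
        push_cast
        rw [← Finset.sum_mul, ← Finset.sum_div]
        simp only [Finset.card_univ, Fintype.card_fin]
        ring


lemma negI_pow (k : ℕ) : (-Complex.I)^k = (-Complex.I)^(k % 4) := by
  conv_lhs => rw [← Nat.div_add_mod k 4]
  rw [pow_add, pow_mul]
  norm_num [show (-Complex.I)^(4:ℕ) = 1 from by
    rw [show (4:ℕ) = 2*2 from rfl, pow_mul]; norm_num [Complex.I_sq]]

theorem stmt5 (k r : ℕ) (hr : r ∈ ({1, 2, 3, 4} : Set ℕ)) (hk : k % 4 = r % 4)
    (hk1 : 1 ≤ k) (α : Fin k → ℝ) :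
    (r = 1 ∨ r = 3 →
      CO k α = 2 ^ k * (-1 : ℝ) ^ ((r - 1) / 2) * (∏ j, Real.sin (α j / 2)) *
        Real.sin ((∑ j, α j) / 2)) ∧
    (r = 2 ∨ r = 4 →
      CO k α = 2 ^ k * (-1 : ℝ) ^ (r / 2) * (∏ j, Real.sin (α j / 2)) *
        Real.cos ((∑ j, α j) / 2)) := by
  simp only [Set.mem_insert_iff, Set.mem_singleton_iff] at hr
  rcases hr with rfl | rfl | rfl | rfl
  · refine ⟨fun _ => ?_, fun h => by omega⟩
    norm_num at hk
    have he : Complex.exp ((((∑ j, α j)/2 : ℝ) : ℂ) * Complex.I)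
        = (Real.cos ((∑ j, α j)/2) : ℂ) + (Real.sin ((∑ j, α j)/2) : ℂ) * Complex.I := by
      rw [Complex.exp_mul_I, Complex.ofReal_cos, Complex.ofReal_sin]
    rw [CO_eq_re, negI_pow, hk, Complex.re_ofReal_mul, he]
    simp only [pow_succ, pow_zero, one_mul, Complex.mul_re, Complex.mul_im, Complex.add_re,
      Complex.add_im, Complex.neg_re, Complex.neg_im, Complex.I_re, Complex.I_im,
      Complex.ofReal_re, Complex.ofReal_im]
    ring
  · refine ⟨fun h => by omega, fun _ => ?_⟩
    norm_num at hk
    have he : Complex.exp ((((∑ j, α j)/2 : ℝ) : ℂ) * Complex.I)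
        = (Real.cos ((∑ j, α j)/2) : ℂ) + (Real.sin ((∑ j, α j)/2) : ℂ) * Complex.I := by
      rw [Complex.exp_mul_I, Complex.ofReal_cos, Complex.ofReal_sin]
    rw [CO_eq_re, negI_pow, hk, Complex.re_ofReal_mul, he]
    simp only [pow_succ, pow_zero, one_mul, Complex.mul_re, Complex.mul_im, Complex.add_re,
      Complex.add_im, Complex.neg_re, Complex.neg_im, Complex.I_re, Complex.I_im,
      Complex.ofReal_re, Complex.ofReal_im]
    ring
  · refine ⟨fun _ => ?_, fun h => by omega⟩
    norm_num at hk
    have he : Complex.exp ((((∑ j, α j)/2 : ℝ) : ℂ) * Complex.I)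
        = (Real.cos ((∑ j, α j)/2) : ℂ) + (Real.sin ((∑ j, α j)/2) : ℂ) * Complex.I := by
      rw [Complex.exp_mul_I, Complex.ofReal_cos, Complex.ofReal_sin]
    rw [CO_eq_re, negI_pow, hk, Complex.re_ofReal_mul, he]
    simp only [pow_succ, pow_zero, one_mul, Complex.mul_re, Complex.mul_im, Complex.add_re,
      Complex.add_im, Complex.neg_re, Complex.neg_im, Complex.I_re, Complex.I_im,
      Complex.ofReal_re, Complex.ofReal_im]
    ring
  · refine ⟨fun h => by omega, fun _ => ?_⟩
    norm_num at hk
    have he : Complex.exp ((((∑ j, α j)/2 : ℝ) : ℂ) * Complex.I)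
        = (Real.cos ((∑ j, α j)/2) : ℂ) + (Real.sin ((∑ j, α j)/2) : ℂ) * Complex.I := by
      rw [Complex.exp_mul_I, Complex.ofReal_cos, Complex.ofReal_sin]
    rw [CO_eq_re, negI_pow, hk, Complex.re_ofReal_mul, he]
    simp only [pow_succ, pow_zero, one_mul, Complex.mul_re, Complex.mul_im, Complex.add_re,
      Complex.add_im, Complex.neg_re, Complex.neg_im, Complex.I_re, Complex.I_im,
      Complex.ofReal_re, Complex.ofReal_im]
    ring
end

section
/- There exist positive constants c_1, c_2 such that for all real z ≥ 10, c_1 · z^{1/2} (log z)^3 ≤ Σ_{n ≤ z} d(n)² n^{-1/2} ≤ c_2 · z^{1/2} (log z)^3, where d(n) is the number of divisors of n. -/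
open Real Finset ArithmeticFunction
open scoped ArithmeticFunction.zeta

noncomputable section
namespace Stmt8

/-- squarefree indicator -/
def sqf : ArithmeticFunction ℕ :=
  ⟨fun n => if Squarefree n then 1 else 0, by simp [not_squarefree_zero]⟩

lemma sqf_apply (n : ℕ) : sqf n = if Squarefree n then 1 else 0 := rfl

lemma isMultiplicative_sqf : IsMultiplicative sqf := by
  rw [IsMultiplicative.iff_ne_zero]
  constructor
  · simp [sqf_apply]
  · intro m n hm hn h
    simp only [sqf_apply, Nat.squarefree_mul h]
    by_cases h1 : Squarefree m <;> by_cases h2 : Squarefree n <;> simp [h1, h2]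

lemma sqf_pp {p : ℕ} (hp : p.Prime) (w : ℕ) : sqf (p ^ w) = if w ≤ 1 then 1 else 0 := by
  rcases w with _ | w
  · simp [sqf_apply, squarefree_one]
  rcases w with _ | w
  · simp [sqf_apply, hp.squarefree]
  have : ¬ Squarefree (p ^ (w + 2)) := by
    intro hs
    have hd : p * p ∣ p ^ (w + 2) := by
      have : p ^ 2 ∣ p ^ (w + 2) := pow_dvd_pow p (by omega)
      simpa [sq] using this
    exact hp.one_lt.ne' (Nat.isUnit_iff.mp (hs p hd))
  simp [sqf_apply, this]

lemma A0 (y : ℕ) : ∑ w ∈ range (y + 1), (if w ≤ 1 then (1 : ℕ) else 0) = min (y + 1) 2 := by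
  induction y with
  | zero => decide
  | succ y ih =>
    rw [Finset.sum_range_succ, ih]
    rcases y with _ | y
    · decide
    · rw [if_neg (by omega)]
      omega

lemma A1 (x : ℕ) : ∑ y ∈ range (x + 1), min (y + 1) 2 = 2 * x + 1 := by
  induction x with
  | zero => simp
  | succ x ih => rw [Finset.sum_range_succ, ih]; omega

lemma A2 (i : ℕ) : ∑ x ∈ range (i + 1), (2 * x + 1) = (i + 1) * (i + 1) := by
  induction i with
  | zero => simp
  | succ i ih => rw [Finset.sum_range_succ, ih]; ring

lemma key : (ζ * ζ).pmul (ζ * ζ) = ζ * (ζ * (ζ * sqf)) := by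
  rw [IsMultiplicative.eq_iff_eq_on_prime_powers _
    ((isMultiplicative_zeta.mul isMultiplicative_zeta).pmul
      (isMultiplicative_zeta.mul isMultiplicative_zeta))
    _ (isMultiplicative_zeta.mul (isMultiplicative_zeta.mul
      (isMultiplicative_zeta.mul isMultiplicative_sqf)))]
  intro p i hp
  have hzz : ∀ k : ℕ, (ζ * ζ) (p ^ k) = k + 1 := by
    intro k
    rw [zeta_mul_apply, Nat.sum_divisors_prime_pow hp]
    have : ∀ x ∈ range (k + 1), ζ (p ^ x) = 1 := fun x _ =>
      zeta_apply_ne (pow_ne_zero _ hp.pos.ne')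
    rw [Finset.sum_congr rfl this]
    simp
  have h1 : ∀ k : ℕ, (ζ * sqf) (p ^ k) = min (k + 1) 2 := by
    intro k
    rw [zeta_mul_apply, Nat.sum_divisors_prime_pow hp]
    rw [Finset.sum_congr rfl (fun w _ => sqf_pp hp w), A0]
  have h2 : ∀ k : ℕ, (ζ * (ζ * sqf)) (p ^ k) = 2 * k + 1 := by
    intro k
    rw [zeta_mul_apply, Nat.sum_divisors_prime_pow hp]
    rw [Finset.sum_congr rfl (fun w _ => h1 w), A1]
  have h3 : (ζ * (ζ * (ζ * sqf))) (p ^ i) = (i + 1) * (i + 1) := by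
    rw [zeta_mul_apply, Nat.sum_divisors_prime_pow hp]
    rw [Finset.sum_congr rfl (fun w _ => h2 w), A2]
  rw [pmul_apply, hzz, h3]

def E : ℕ → ArithmeticFunction ℕ
  | 0 => sqf
  | (k + 1) => ζ * E k

lemma card_divisors_sq (n : ℕ) : n.divisors.card ^ 2 = E 3 n := by
  have hzz : (ζ * ζ) n = n.divisors.card := by
    rcases Nat.eq_zero_or_pos n with rfl | hn
    · simp
    rw [zeta_mul_apply]
    rw [Finset.sum_congr rfl (fun d hd => zeta_apply_ne (Nat.pos_of_mem_divisors hd).ne')]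
    simp
  have := congrFun (congrArg (fun f => f.toFun) key) n
  change (ζ * ζ) n * (ζ * ζ) n = (ζ * (ζ * (ζ * sqf))) n at this
  have h3 : E 3 = ζ * (ζ * (ζ * sqf)) := rfl
  rw [h3]
  rw [← hzz, sq]
  exact this


def g (n : ℕ) : ℝ := (Real.sqrt n)⁻¹

lemma g_nonneg (n : ℕ) : 0 ≤ g n := inv_nonneg.mpr (Real.sqrt_nonneg _)

lemma g_mul (a b : ℕ) : g (a * b) = g a * g b := by
  unfold g
  rw [Nat.cast_mul, Real.sqrt_mul (by positivity), mul_inv]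

def A (F : ℕ → ℝ) (y : ℕ) : ℝ := ∑ n ∈ Icc 1 y, F n * g n

lemma biUnion_eq (N : ℕ) :
    (Icc 1 N).biUnion Nat.divisorsAntidiagonal
      = (Icc 1 N ×ˢ Icc 1 N).filter (fun p => p.1 * p.2 ≤ N) := by
  ext ⟨a, b⟩
  simp only [mem_biUnion, Nat.mem_divisorsAntidiagonal, mem_filter, mem_product, mem_Icc]
  constructor
  · rintro ⟨n, ⟨hn1, hn2⟩, heq, hne⟩
    subst heq
    have ha : a ≠ 0 := by rintro rfl; simp at hn1
    have hb : b ≠ 0 := by rintro rfl; simp at hn1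
    refine ⟨⟨⟨Nat.pos_of_ne_zero ha,
      le_trans (Nat.le_mul_of_pos_right a (Nat.pos_of_ne_zero hb)) hn2⟩,
      Nat.pos_of_ne_zero hb,
      le_trans (Nat.le_mul_of_pos_left b (Nat.pos_of_ne_zero ha)) hn2⟩, hn2⟩
  · rintro ⟨⟨⟨ha1, _⟩, hb1, _⟩, hab⟩
    exact ⟨a * b, ⟨Nat.mul_pos ha1 hb1, hab⟩, rfl, (Nat.mul_pos ha1 hb1).ne'⟩

lemma swap (F : ℕ → ℝ) (N : ℕ) :
    A (fun n => ∑ d ∈ n.divisors, F d) N = ∑ a ∈ Icc 1 N, g a * A F (N / a) := by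
  unfold A
  have step1 : ∑ n ∈ Icc 1 N, (∑ d ∈ n.divisors, F d) * g n
      = ∑ n ∈ Icc 1 N, ∑ p ∈ n.divisorsAntidiagonal, F p.2 * g (p.1 * p.2) := by
    refine Finset.sum_congr rfl fun n hn => ?_
    rw [Finset.sum_mul, Nat.sum_divisorsAntidiagonal' (f := fun a b => F b * g (a * b))]
    refine Finset.sum_congr rfl fun d hd => ?_
    rw [Nat.div_mul_cancel (Nat.dvd_of_mem_divisors hd)]
  have hdisj : ((Icc 1 N : Finset ℕ) : Set ℕ).PairwiseDisjoint Nat.divisorsAntidiagonal := by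
    intro m hm n hn hmn
    refine Finset.disjoint_left.mpr fun p hpm hpn => hmn ?_
    have h1 := (Nat.mem_divisorsAntidiagonal.mp hpm).1
    have h2 := (Nat.mem_divisorsAntidiagonal.mp hpn).1
    rw [← h1, ← h2]
  have step2 : ∑ n ∈ Icc 1 N, ∑ p ∈ n.divisorsAntidiagonal, F p.2 * g (p.1 * p.2)
      = ∑ p ∈ (Icc 1 N).biUnion Nat.divisorsAntidiagonal, F p.2 * g (p.1 * p.2) :=
    (Finset.sum_biUnion hdisj).symm
  have step3 : ∑ p ∈ (Icc 1 N).biUnion Nat.divisorsAntidiagonal, F p.2 * g (p.1 * p.2)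
      = ∑ a ∈ Icc 1 N, ∑ b ∈ Icc 1 N, if a * b ≤ N then F b * g (a * b) else 0 := by
    rw [biUnion_eq, Finset.sum_filter, Finset.sum_product]
  have step4 : ∀ a ∈ Icc 1 N,
      (∑ b ∈ Icc 1 N, if a * b ≤ N then F b * g (a * b) else 0) = g a * A F (N / a) := by
    intro a ha
    obtain ⟨ha1, ha2⟩ := mem_Icc.mp ha
    rw [← Finset.sum_filter]
    have hfil : (Icc 1 N).filter (fun b => a * b ≤ N) = Icc 1 (N / a) := by
      ext b
      simp only [mem_filter, mem_Icc]
      constructor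
      · rintro ⟨⟨hb1, _⟩, hab⟩
        exact ⟨hb1, (Nat.le_div_iff_mul_le ha1).mpr (by rwa [mul_comm] at hab)⟩
      · rintro ⟨hb1, hb2⟩
        have h3 : b * a ≤ N := (Nat.le_div_iff_mul_le ha1).mp hb2
        have h4 : b ≤ b * a := Nat.le_mul_of_pos_right b ha1
        exact ⟨⟨hb1, le_trans h4 h3⟩, by rwa [mul_comm] at h3⟩
    rw [hfil]
    unfold A
    rw [Finset.mul_sum]
    refine Finset.sum_congr rfl fun b _ => ?_
    rw [g_mul]; ring
  rw [step1, step2, step3]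
  exact Finset.sum_congr rfl step4

def D : ℕ → ℕ → ℝ
  | 0, e => if Squarefree e then (1 : ℝ) else 0
  | (k + 1), n => ∑ d ∈ n.divisors, D k d

lemma D_nonneg (k n : ℕ) : 0 ≤ D k n := by
  induction k generalizing n with
  | zero => unfold D; split <;> norm_num
  | succ k ih => exact Finset.sum_nonneg fun d _ => ih d

lemma D_cast (k n : ℕ) : D k n = ((E k) n : ℝ) := by
  induction k generalizing n with
  | zero =>
    show (if Squarefree n then (1:ℝ) else 0) = _
    show _ = ((if Squarefree n then 1 else 0 : ℕ) : ℝ)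
    split <;> simp
  | succ k ih =>
    show ∑ d ∈ n.divisors, D k d = ((ζ * E k) n : ℝ)
    rw [zeta_mul_apply, Nat.cast_sum]
    exact Finset.sum_congr rfl fun d _ => ih d

lemma D3_eq (n : ℕ) : ((n.divisors.card : ℝ)) ^ 2 = D 3 n := by
  rw [D_cast]
  exact_mod_cast congrArg (fun x : ℕ => (x : ℝ)) (card_divisors_sq n)

lemma swapD (k y : ℕ) : A (D (k + 1)) y = ∑ a ∈ Icc 1 y, g a * A (D k) (y / a) :=
  swap (D k) y

lemma A_D_nonneg (k m : ℕ) : 0 ≤ A (D k) m :=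
  Finset.sum_nonneg fun n _ => mul_nonneg (D_nonneg k n) (g_nonneg n)

lemma lognat_nonneg (n : ℕ) : 0 ≤ Real.log n := by
  rcases Nat.eq_zero_or_pos n with rfl | hn
  · simp
  · exact Real.log_nonneg (by exact_mod_cast hn)

lemma lognat_mono {u v : ℕ} (h : u ≤ v) : Real.log u ≤ Real.log v := by
  rcases Nat.eq_zero_or_pos u with rfl | hu
  · simpa using lognat_nonneg v
  · exact Real.log_le_log (by exact_mod_cast hu) (by exact_mod_cast h)

lemma sum_g_le (m : ℕ) : ∑ n ∈ Icc 1 m, g n ≤ 2 * Real.sqrt m := by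
  induction m with
  | zero => simp [g]
  | succ m ih =>
    rw [Finset.sum_Icc_succ_top (by omega)]
    have hb : (0:ℝ) < Real.sqrt (m + 1 : ℕ) := Real.sqrt_pos.mpr (by positivity)
    have ha2 : Real.sqrt (m:ℝ) ^ 2 = m := Real.sq_sqrt (by positivity)
    have hb2 : Real.sqrt ((m+1:ℕ):ℝ) ^ 2 = ((m+1:ℕ):ℝ) := Real.sq_sqrt (by positivity)
    have key : g (m + 1) ≤ 2 * Real.sqrt ((m+1:ℕ):ℝ) - 2 * Real.sqrt m := by
      unfold g
      rw [← one_div, div_le_iff₀ hb]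
      have hcast : ((m+1:ℕ):ℝ) = (m:ℝ) + 1 := by push_cast; ring
      nlinarith [sq_nonneg (Real.sqrt (m:ℝ) - Real.sqrt ((m+1:ℕ):ℝ)),
        Real.sqrt_nonneg (m:ℝ), Real.sqrt_nonneg ((m+1:ℕ):ℝ)]
    have : (((m+1:ℕ)):ℝ) = (m:ℝ) + 1 := by push_cast; ring
    linarith [ih, key]

lemma sum_inv_le (m : ℕ) : ∑ n ∈ Icc 1 m, ((n:ℝ))⁻¹ ≤ 1 + Real.log m := by
  have h := harmonic_le_one_add_log m
  rw [harmonic_eq_sum_Icc] at h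
  push_cast at h
  exact h

lemma log_le_sum_inv (m : ℕ) : Real.log m ≤ ∑ n ∈ Icc 1 m, ((n:ℝ))⁻¹ := by
  have h := log_add_one_le_harmonic m
  rw [harmonic_eq_sum_Icc] at h
  push_cast at h
  have h2 : Real.log m ≤ Real.log ((m:ℝ) + 1) := by
    rcases Nat.eq_zero_or_pos m with rfl | hm
    · simp
    · exact Real.log_le_log (by exact_mod_cast hm) (by linarith)
  linarith

lemma sum_inv_sq_le (m : ℕ) : ∑ d ∈ Icc 2 m, ((d:ℝ) * d)⁻¹ ≤ 3/4 := by
  have key : ∀ m : ℕ, 2 ≤ m → ∑ d ∈ Icc 2 m, ((d:ℝ) * d)⁻¹ ≤ 3/4 - ((m:ℝ))⁻¹ := by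
    intro m hm
    induction m, hm using Nat.le_induction with
    | base => norm_num
    | succ n hn ih =>
      rw [Finset.sum_Icc_succ_top (by omega)]
      have hn' : (2:ℝ) ≤ (n:ℝ) := by exact_mod_cast hn
      have h1 : (0:ℝ) < n := by linarith
      have h2 : (0:ℝ) < (n:ℝ) + 1 := by linarith
      have hcast : ((n+1:ℕ):ℝ) = (n:ℝ) + 1 := by push_cast; ring
      rw [hcast]
      have h3 : (((n:ℝ)+1) * ((n:ℝ)+1))⁻¹ ≤ (n:ℝ)⁻¹ - ((n:ℝ)+1)⁻¹ := by
        have heq : (n:ℝ)⁻¹ - ((n:ℝ)+1)⁻¹ = ((n:ℝ) * ((n:ℝ)+1))⁻¹ := by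
          rw [inv_sub_inv h1.ne' h2.ne']
          norm_num
        rw [heq]
        gcongr
        nlinarith
      linarith
  rcases lt_or_ge m 2 with h | h
  · rw [Finset.Icc_eq_empty (by omega)]
    norm_num
  · have := key m h
    have : (0:ℝ) ≤ ((m:ℝ))⁻¹ := by positivity
    linarith [key m h]


lemma sf_card (m : ℕ) : (m : ℝ) / 4 ≤ (((Icc 1 m).filter Squarefree).card : ℝ) := by
  classical
  set B := (Icc 1 m).filter (fun e => ¬ Squarefree e) with hB
  have hsub : B ⊆ (Icc 2 m).biUnion (fun d => (Icc 1 m).filter (fun e => d * d ∣ e)) := by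
    intro e he
    simp only [hB, mem_filter, mem_Icc] at he
    obtain ⟨⟨he1, he2⟩, hns⟩ := he
    have h2 : ¬ ∀ p, Nat.Prime p → ¬ p * p ∣ e := by
      rwa [← Nat.squarefree_iff_prime_squarefree]
    push_neg at h2
    obtain ⟨p, hp', hpd⟩ := h2
    have hpp : p ≤ p * p := Nat.le_mul_of_pos_right p hp'.pos
    have hpm : p ≤ m := le_trans (le_trans hpp (Nat.le_of_dvd (by omega) hpd)) he2
    simp only [mem_biUnion, mem_Icc, mem_filter]
    exact ⟨p, ⟨hp'.two_le, hpm⟩, ⟨he1, he2⟩, hpd⟩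
  have hBcard : (B.card : ℝ) ≤ 3/4 * m := by
    have h1 : B.card ≤ ∑ d ∈ Icc 2 m, ((Icc 1 m).filter (fun e => d * d ∣ e)).card :=
      le_trans (Finset.card_le_card hsub) Finset.card_biUnion_le
    have h2 : ∀ d : ℕ, ((Icc 1 m).filter (fun e => d * d ∣ e)).card = m / (d * d) := by
      intro d
      rw [show Icc 1 m = Ioc 0 m from by rw [← Finset.Icc_add_one_left_eq_Ioc]; rfl]
      exact Nat.Ioc_filter_dvd_card_eq_div m (d * d)
    calc (B.card : ℝ) ≤ ((∑ d ∈ Icc 2 m, ((Icc 1 m).filter (fun e => d * d ∣ e)).card : ℕ) : ℝ) := by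
          exact_mod_cast h1
      _ = ∑ d ∈ Icc 2 m, (((m / (d * d) : ℕ)) : ℝ) := by
          rw [Nat.cast_sum]
          exact Finset.sum_congr rfl fun d _ => by rw [h2]
      _ ≤ ∑ d ∈ Icc 2 m, (m : ℝ) * ((d:ℝ) * d)⁻¹ := by
          refine Finset.sum_le_sum fun d hd => ?_
          have h3 : ((m / (d * d) : ℕ) : ℝ) ≤ (m : ℝ) / ((d * d : ℕ) : ℝ) := Nat.cast_div_le
          rw [div_eq_mul_inv] at h3
          push_cast at h3 ⊢
          exact h3
      _ = (m : ℝ) * ∑ d ∈ Icc 2 m, ((d:ℝ) * d)⁻¹ := (Finset.mul_sum _ _ _).symm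
      _ ≤ (m : ℝ) * (3/4) := by
          exact mul_le_mul_of_nonneg_left (sum_inv_sq_le m) (by positivity)
      _ = 3/4 * m := by ring
  have htot : ((Icc 1 m).filter Squarefree).card + B.card = m := by
    rw [hB]
    rw [Finset.card_filter_add_card_filter_not]
    simp [Nat.card_Icc]
  have htot' : (((Icc 1 m).filter Squarefree).card : ℝ) + (B.card : ℝ) = (m : ℝ) := by
    exact_mod_cast congrArg (fun x : ℕ => (x : ℝ)) htot
  linarith

lemma A_D0_ge (m : ℕ) : Real.sqrt m / 4 ≤ A (D 0) m := by
  rcases Nat.eq_zero_or_pos m with rfl | hm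
  · simp [A]
  have hAeq : A (D 0) m = ∑ e ∈ (Icc 1 m).filter Squarefree, g e := by
    unfold A
    rw [Finset.sum_filter]
    refine Finset.sum_congr rfl fun e _ => ?_
    show (if Squarefree e then (1:ℝ) else 0) * g e = _
    split <;> simp
  have hsm : (0:ℝ) < Real.sqrt m := Real.sqrt_pos.mpr (by exact_mod_cast hm)
  have h2 : ∀ e ∈ (Icc 1 m).filter Squarefree, (Real.sqrt m)⁻¹ ≤ g e := by
    intro e he
    obtain ⟨he', _⟩ := mem_filter.mp he
    obtain ⟨he1, he2⟩ := mem_Icc.mp he'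
    unfold g
    have : Real.sqrt e ≤ Real.sqrt m := Real.sqrt_le_sqrt (by exact_mod_cast he2)
    have he0 : (0:ℝ) < Real.sqrt e := Real.sqrt_pos.mpr (by exact_mod_cast he1)
    exact inv_anti₀ he0 this
  have h3 : (((Icc 1 m).filter Squarefree).card : ℝ) * (Real.sqrt m)⁻¹
      ≤ ∑ e ∈ (Icc 1 m).filter Squarefree, g e := by
    have := Finset.card_nsmul_le_sum ((Icc 1 m).filter Squarefree) g ((Real.sqrt m)⁻¹) h2
    simpa [nsmul_eq_mul] using this
  have h4 : (m : ℝ) / 4 * (Real.sqrt m)⁻¹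
      ≤ (((Icc 1 m).filter Squarefree).card : ℝ) * (Real.sqrt m)⁻¹ :=
    mul_le_mul_of_nonneg_right (sf_card m) (by positivity)
  have h5 : (m : ℝ) / 4 * (Real.sqrt m)⁻¹ = Real.sqrt m / 4 := by
    calc (m:ℝ)/4 * (Real.sqrt m)⁻¹ = ((Real.sqrt m)⁻¹ * m)/4 := by ring
      _ = Real.sqrt m / 4 := by rw [inv_mul_eq_div, Real.div_sqrt]
  rw [hAeq]
  calc Real.sqrt m / 4 = (m : ℝ) / 4 * (Real.sqrt m)⁻¹ := h5.symm
    _ ≤ _ := le_trans h4 h3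


lemma A_D_le : ∀ k m : ℕ, A (D k) m ≤ 2 * Real.sqrt m * (1 + Real.log m) ^ k := by
  intro k
  induction k with
  | zero =>
    intro m
    have h1 : A (D 0) m ≤ ∑ n ∈ Icc 1 m, g n := by
      refine Finset.sum_le_sum fun n _ => ?_
      show (if Squarefree n then (1:ℝ) else 0) * g n ≤ g n
      split <;> simp [g_nonneg]
    simpa using le_trans h1 (sum_g_le m)
  | succ k ih =>
    intro m
    have hlm := lognat_nonneg m
    rw [swapD]
    have hterm : ∀ a ∈ Icc 1 m, g a * A (D k) (m / a)
        ≤ 2 * Real.sqrt m * (1 + Real.log m) ^ k * ((a:ℝ))⁻¹ := by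
      intro a ha
      obtain ⟨ha1, ha2⟩ := mem_Icc.mp ha
      have ha0 : (0:ℝ) < (a:ℝ) := by exact_mod_cast ha1
      have hsa : (0:ℝ) < Real.sqrt a := Real.sqrt_pos.mpr ha0
      have h1 : A (D k) (m / a) ≤ 2 * Real.sqrt ((m/a : ℕ)) * (1 + Real.log ((m/a:ℕ))) ^ k := ih _
      have h2 : Real.sqrt (((m/a:ℕ)):ℝ) ≤ Real.sqrt m / Real.sqrt a := by
        rw [← Real.sqrt_div (by positivity : (0:ℝ) ≤ (m:ℝ))]
        exact Real.sqrt_le_sqrt Nat.cast_div_le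
      have h3 : (1 + Real.log ((m/a:ℕ))) ^ k ≤ (1 + Real.log m) ^ k := by
        apply pow_le_pow_left₀ (by linarith [lognat_nonneg (m/a)])
        have := lognat_mono (Nat.div_le_self m a)
        linarith
      have h4 : A (D k) (m/a) ≤ 2 * (Real.sqrt m / Real.sqrt a) * (1 + Real.log m)^k := by
        refine le_trans h1 ?_
        apply mul_le_mul (mul_le_mul_of_nonneg_left h2 (by norm_num)) h3
          (pow_nonneg (by linarith [lognat_nonneg (m/a)]) k) (by positivity)
      have h5 : g a * (2 * (Real.sqrt m / Real.sqrt a) * (1 + Real.log m)^k)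
          = 2 * Real.sqrt m * (1 + Real.log m)^k * ((a:ℝ))⁻¹ := by
        show (Real.sqrt (a:ℕ))⁻¹ * _ = _
        rw [div_eq_mul_inv,
          show ((a:ℝ))⁻¹ = (Real.sqrt a)⁻¹ * (Real.sqrt a)⁻¹ from by
            rw [← mul_inv, Real.mul_self_sqrt ha0.le]]
        ring
      calc g a * A (D k) (m/a)
          ≤ g a * (2 * (Real.sqrt m / Real.sqrt a) * (1 + Real.log m)^k) :=
            mul_le_mul_of_nonneg_left h4 (g_nonneg a)
        _ = 2 * Real.sqrt m * (1 + Real.log m)^k * ((a:ℝ))⁻¹ := h5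
    calc ∑ a ∈ Icc 1 m, g a * A (D k) (m / a)
        ≤ ∑ a ∈ Icc 1 m, 2 * Real.sqrt m * (1 + Real.log m)^k * ((a:ℝ))⁻¹ :=
          Finset.sum_le_sum hterm
      _ = 2 * Real.sqrt m * (1 + Real.log m)^k * ∑ a ∈ Icc 1 m, ((a:ℝ))⁻¹ :=
          (Finset.mul_sum _ _ _).symm
      _ ≤ 2 * Real.sqrt m * (1 + Real.log m)^k * (1 + Real.log m) := by
          apply mul_le_mul_of_nonneg_left (sum_inv_le m)
          exact mul_nonneg (mul_nonneg (by norm_num) (Real.sqrt_nonneg _))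
            (pow_nonneg (by linarith) k)
      _ = 2 * Real.sqrt m * (1 + Real.log m)^(k+1) := by ring

lemma step_low (T : ℕ → ℝ) (c : ℝ) (j Y : ℕ) (hc : 0 < c) (hY : 4 ≤ Y)
    (hT0 : ∀ m, 0 ≤ T m)
    (h : ∀ m : ℕ, Y ≤ m → c * Real.sqrt m * Real.log m ^ j ≤ T m)
    (y : ℕ) (hy : Y * Y ≤ y) :
    c / 2 * (1/4 : ℝ) ^ (j+1) * Real.sqrt y * Real.log y ^ (j+1)
      ≤ ∑ a ∈ Icc 1 y, g a * T (y / a) := by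
  have h24 : Real.sqrt (4:ℝ) = 2 := by
    rw [show (4:ℝ) = 2^2 by norm_num, Real.sqrt_sq (by norm_num : (0:ℝ) ≤ 2)]
  set R := Nat.sqrt y with hR
  have hRY : Y ≤ R := Nat.le_sqrt.mpr hy
  have hR4 : 4 ≤ R := le_trans hY hRY
  have hRy : R * R ≤ y := Nat.sqrt_le y
  have hRley : R ≤ y := Nat.sqrt_le_self y
  have hy16 : 16 ≤ y := le_trans (Nat.mul_le_mul hY hY) hy
  have hy0 : (0:ℝ) < y := by exact_mod_cast (by omega : 0 < y)
  have hsy : (0:ℝ) < Real.sqrt y := Real.sqrt_pos.mpr hy0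
  have hsy4 : (4:ℝ) ≤ Real.sqrt y := by
    have h1 : Real.sqrt 16 ≤ Real.sqrt y := Real.sqrt_le_sqrt (by exact_mod_cast hy16)
    have h2 : Real.sqrt (16:ℝ) = 4 := by
      rw [show (16:ℝ) = 4^2 by norm_num, Real.sqrt_sq (by norm_num : (0:ℝ) ≤ 4)]
    linarith
  have hRreal_low : Real.sqrt y / 2 ≤ (R:ℝ) := by
    have h1 : Real.sqrt y < (R:ℝ) + 1 := by
      rw [Real.sqrt_lt' (by positivity)]
      have := Nat.lt_succ_sqrt y
      push_cast [← hR]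
      have h2 : (y:ℝ) < ((R:ℝ)+1) * ((R:ℝ)+1) := by exact_mod_cast this
      nlinarith
    linarith
  have hlog2 : Real.log 2 ≤ 1/4 * Real.log y := by
    have h16 : (16:ℝ) ≤ y := by exact_mod_cast hy16
    have hll : Real.log 16 ≤ Real.log y := Real.log_le_log (by norm_num) h16
    have h4 : Real.log 16 = 4 * Real.log 2 := by
      rw [show (16:ℝ) = 2^4 by norm_num, Real.log_pow]; push_cast; ring
    linarith
  have hlogy0 : (0:ℝ) ≤ Real.log y := lognat_nonneg y
  have hlogR : 1/4 * Real.log y ≤ Real.log R := by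
    have h0 : (0:ℝ) < Real.sqrt y / 2 := by positivity
    have h1 : Real.log (Real.sqrt y / 2) ≤ Real.log R := Real.log_le_log h0 hRreal_low
    rw [Real.log_div (ne_of_gt hsy) (by norm_num), Real.log_sqrt hy0.le] at h1
    linarith
  have hterm : ∀ a ∈ Icc 1 R,
      c/2 * (1/4:ℝ)^j * Real.sqrt y * Real.log y ^ j * ((a:ℝ))⁻¹ ≤ g a * T (y / a) := by
    intro a ha
    obtain ⟨ha1, haR⟩ := mem_Icc.mp ha
    have ha0 : (0:ℝ) < (a:ℝ) := by exact_mod_cast ha1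
    have hsa : (0:ℝ) < Real.sqrt a := Real.sqrt_pos.mpr ha0
    set q := y / a with hq
    have hqR : R ≤ q :=
      (Nat.le_div_iff_mul_le (by omega)).mpr (le_trans (Nat.mul_le_mul (le_refl R) haR) hRy)
    have hqY : Y ≤ q := le_trans hRY hqR
    have hq4 : (4:ℝ) ≤ (q:ℝ) := by exact_mod_cast le_trans hR4 hqR
    have hq0 : (0:ℝ) < q := by linarith
    have hdivlt : y < a * q + a := by
      have hmod : a * q + y % a = y := Nat.div_add_mod y a
      have hlt : y % a < a := Nat.mod_lt y (by omega)
      omega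
    have hdiv : (y:ℝ) < (a:ℝ) * q + a := by exact_mod_cast hdivlt
    have hq_real : (y:ℝ) / (2*a) ≤ (q:ℝ) := by
      rw [div_le_iff₀ (by positivity)]
      nlinarith [mul_le_mul_of_nonneg_left (by linarith : (1:ℝ) ≤ (q:ℝ)) ha0.le]
    have hsq : Real.sqrt y / (2 * Real.sqrt a) ≤ Real.sqrt q := by
      have e1 : Real.sqrt ((y:ℝ)/(2*a)) ≤ Real.sqrt q := Real.sqrt_le_sqrt hq_real
      have e2 : Real.sqrt ((y:ℝ)/(2*a)) = Real.sqrt y / Real.sqrt (2*(a:ℝ)) :=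
        Real.sqrt_div hy0.le _
      have e3 : Real.sqrt (2*(a:ℝ)) ≤ 2 * Real.sqrt a := by
        rw [Real.sqrt_mul (by norm_num : (0:ℝ) ≤ 2)]
        have hs2 : Real.sqrt 2 ≤ 2 := by
          have := Real.sqrt_le_sqrt (by norm_num : (2:ℝ) ≤ 4)
          rwa [h24] at this
        exact mul_le_mul_of_nonneg_right hs2 (Real.sqrt_nonneg _)
      have e4 : Real.sqrt y / (2 * Real.sqrt a) ≤ Real.sqrt y / Real.sqrt (2*(a:ℝ)) := by
        gcongr
      rw [e2] at e1
      linarith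
    have hlogq : 1/4 * Real.log y ≤ Real.log q := le_trans hlogR (lognat_mono hqR)
    have hTq : c * Real.sqrt q * Real.log q ^ j ≤ T q := h q hqY
    have hmid : c * (Real.sqrt y / (2 * Real.sqrt a)) * (1/4 * Real.log y)^j
        ≤ c * Real.sqrt q * Real.log q ^ j := by
      apply mul_le_mul (mul_le_mul_of_nonneg_left hsq hc.le)
        (pow_le_pow_left₀ (mul_nonneg (by norm_num) hlogy0) hlogq j)
        (pow_nonneg (mul_nonneg (by norm_num) hlogy0) j)
        (mul_nonneg hc.le (Real.sqrt_nonneg _))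
    have heq : g a * (c * (Real.sqrt y / (2 * Real.sqrt a)) * (1/4 * Real.log y)^j)
        = c/2 * (1/4:ℝ)^j * Real.sqrt y * Real.log y ^ j * ((a:ℝ))⁻¹ := by
      show (Real.sqrt (a:ℕ))⁻¹ * _ = _
      rw [mul_pow, div_eq_mul_inv, mul_inv,
        show ((a:ℝ))⁻¹ = (Real.sqrt a)⁻¹ * (Real.sqrt a)⁻¹ from by
          rw [← mul_inv, Real.mul_self_sqrt ha0.le]]
      ring
    calc c/2 * (1/4:ℝ)^j * Real.sqrt y * Real.log y ^ j * ((a:ℝ))⁻¹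
        = g a * (c * (Real.sqrt y / (2*Real.sqrt a)) * (1/4 * Real.log y)^j) := heq.symm
      _ ≤ g a * (c * Real.sqrt q * Real.log q ^ j) := mul_le_mul_of_nonneg_left hmid (g_nonneg a)
      _ ≤ g a * T q := mul_le_mul_of_nonneg_left hTq (g_nonneg a)
  have hK : (0:ℝ) ≤ c/2 * (1/4:ℝ)^j * Real.sqrt y * Real.log y ^ j :=
    mul_nonneg (mul_nonneg (mul_nonneg (by linarith) (by positivity)) (Real.sqrt_nonneg _))
      (pow_nonneg hlogy0 j)
  calc c / 2 * (1/4:ℝ)^(j+1) * Real.sqrt y * Real.log y ^ (j+1)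
      = (c/2 * (1/4:ℝ)^j * Real.sqrt y * Real.log y ^ j) * (1/4 * Real.log y) := by ring
    _ ≤ (c/2 * (1/4:ℝ)^j * Real.sqrt y * Real.log y ^ j) * Real.log R :=
        mul_le_mul_of_nonneg_left hlogR hK
    _ ≤ (c/2 * (1/4:ℝ)^j * Real.sqrt y * Real.log y ^ j) * ∑ a ∈ Icc 1 R, ((a:ℝ))⁻¹ :=
        mul_le_mul_of_nonneg_left (log_le_sum_inv R) hK
    _ = ∑ a ∈ Icc 1 R, (c/2 * (1/4:ℝ)^j * Real.sqrt y * Real.log y ^ j) * ((a:ℝ))⁻¹ :=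
        Finset.mul_sum _ _ _
    _ ≤ ∑ a ∈ Icc 1 R, g a * T (y / a) := Finset.sum_le_sum hterm
    _ ≤ ∑ a ∈ Icc 1 y, g a * T (y / a) :=
        Finset.sum_le_sum_of_subset_of_nonneg (Finset.Icc_subset_Icc_right hRley)
          (fun a _ _ => mul_nonneg (g_nonneg a) (hT0 _))

lemma low1 (y : ℕ) (hy : 16 ≤ y) :
    (1/32 : ℝ) * Real.sqrt y * Real.log y ^ 1 ≤ A (D 1) y := by
  rw [swapD]
  have := step_low (A (D 0)) (1/4) 0 4 (by norm_num) (le_refl 4) (A_D_nonneg 0)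
    (fun m _ => by have := A_D0_ge m; simp only [pow_zero, mul_one]; linarith) y (by omega)
  calc (1/32:ℝ) * Real.sqrt y * Real.log y ^ 1
      = (1/4:ℝ)/2 * (1/4)^(0+1) * Real.sqrt y * Real.log y ^ (0+1) := by norm_num
    _ ≤ _ := this

lemma low2 (y : ℕ) (hy : 256 ≤ y) :
    (1/1024 : ℝ) * Real.sqrt y * Real.log y ^ 2 ≤ A (D 2) y := by
  rw [swapD]
  have := step_low (A (D 1)) (1/32) 1 16 (by norm_num) (by norm_num) (A_D_nonneg 1)
    (fun m hm => low1 m hm) y (by omega)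
  calc (1/1024:ℝ) * Real.sqrt y * Real.log y ^ 2
      = (1/32:ℝ)/2 * (1/4)^(1+1) * Real.sqrt y * Real.log y ^ (1+1) := by norm_num
    _ ≤ _ := this

lemma low3 (y : ℕ) (hy : 65536 ≤ y) :
    (1/131072 : ℝ) * Real.sqrt y * Real.log y ^ 3 ≤ A (D 3) y := by
  rw [swapD]
  have := step_low (A (D 2)) (1/1024) 2 256 (by norm_num) (by norm_num) (A_D_nonneg 2)
    (fun m hm => low2 m hm) y (by omega)
  calc (1/131072:ℝ) * Real.sqrt y * Real.log y ^ 3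
      = (1/1024:ℝ)/2 * (1/4)^(2+1) * Real.sqrt y * Real.log y ^ (2+1) := by norm_num
    _ ≤ _ := this



end Stmt8

open Stmt8 in
theorem stmt8 :
    ∃ c₁ c₂ : ℝ, 0 < c₁ ∧ 0 < c₂ ∧ ∀ z : ℝ, 10 ≤ z →
      c₁ * z ^ ((1 : ℝ) / 2) * Real.log z ^ 3 ≤
        (∑ n ∈ Finset.Icc 1 ⌊z⌋₊,
          ((n.divisors.card : ℝ)) ^ 2 / (n : ℝ) ^ ((1 : ℝ) / 2)) ∧
      (∑ n ∈ Finset.Icc 1 ⌊z⌋₊,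
          ((n.divisors.card : ℝ)) ^ 2 / (n : ℝ) ^ ((1 : ℝ) / 2)) ≤
        c₂ * z ^ ((1 : ℝ) / 2) * Real.log z ^ 3 := by
  refine ⟨1/2097152, 7, by norm_num, by norm_num, fun z hz => ?_⟩
  set N := ⌊z⌋₊ with hN
  have hz0 : (0:ℝ) < z := by linarith
  have hN10 : 10 ≤ N := Nat.le_floor (by exact_mod_cast hz)
  have hNz : (N:ℝ) ≤ z := Nat.floor_le hz0.le
  have hzN1 : z < N + 1 := Nat.lt_floor_add_one z
  have hSA : (∑ n ∈ Finset.Icc 1 N,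
      ((n.divisors.card : ℝ)) ^ 2 / (n : ℝ) ^ ((1:ℝ)/2)) = A (D 3) N := by
    unfold A
    refine Finset.sum_congr rfl fun n _ => ?_
    rw [← Real.sqrt_eq_rpow, D3_eq, div_eq_mul_inv]
    rfl
  have hlz2 : (2:ℝ) ≤ Real.log z := by
    rw [Real.le_log_iff_exp_le hz0]
    have he : Real.exp 1 < 2.7182818286 := Real.exp_one_lt_d9
    have h2 : Real.exp 2 = Real.exp 1 * Real.exp 1 := by rw [← Real.exp_add]; norm_num
    nlinarith [Real.exp_pos 1]
  have hlz0 : (0:ℝ) ≤ Real.log z := by linarith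
  have hsz : (0:ℝ) ≤ Real.sqrt z := Real.sqrt_nonneg z
  have hsqrt2 : Real.sqrt 2 ≤ 2 := by
    have h1 := Real.sqrt_le_sqrt (by norm_num : (2:ℝ) ≤ 4)
    have h2 : Real.sqrt (4:ℝ) = 2 := by
      rw [show (4:ℝ) = 2^2 by norm_num, Real.sqrt_sq (by norm_num : (0:ℝ) ≤ 2)]
    linarith
  rw [show z ^ ((1:ℝ)/2) = Real.sqrt z from (Real.sqrt_eq_rpow z).symm, hSA]
  constructor
  · rcases le_or_gt 65537 z with hbig | hsmall
    · have hN65536 : 65536 ≤ N := Nat.le_floor (by exact_mod_cast (by linarith : (65536:ℝ) ≤ z))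
      have hlow := low3 N hN65536
      have hNz2 : z/2 ≤ (N:ℝ) := by linarith
      have hsN : Real.sqrt z / 2 ≤ Real.sqrt N := by
        have e1 : Real.sqrt (z/2) ≤ Real.sqrt N := Real.sqrt_le_sqrt hNz2
        have e2 : Real.sqrt (z/2) = Real.sqrt z / Real.sqrt 2 := Real.sqrt_div hz0.le _
        have e4 : Real.sqrt z / 2 ≤ Real.sqrt z / Real.sqrt 2 := by gcongr
        rw [e2] at e1
        linarith
      have hlogN : Real.log z / 2 ≤ Real.log N := by
        have h1 : Real.log (z/2) ≤ Real.log N := Real.log_le_log (by linarith) hNz2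
        rw [Real.log_div hz0.ne' (by norm_num)] at h1
        have hl2 : Real.log 2 ≤ 1 := by
          have := Real.log_le_sub_one_of_pos (by norm_num : (0:ℝ) < 2)
          linarith
        linarith
      have hlogN0 : (0:ℝ) ≤ Real.log z / 2 := by linarith
      calc 1/2097152 * Real.sqrt z * Real.log z ^ 3
          = 1/131072 * (Real.sqrt z / 2) * (Real.log z / 2)^3 := by ring
        _ ≤ 1/131072 * Real.sqrt N * (Real.log N)^3 := by
            apply mul_le_mul (mul_le_mul_of_nonneg_left hsN (by norm_num))
              (pow_le_pow_left₀ hlogN0 hlogN 3) (pow_nonneg hlogN0 3)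
              (mul_nonneg (by norm_num) (Real.sqrt_nonneg _))
        _ ≤ A (D 3) N := hlow
    · have hone : (1:ℝ) ≤ A (D 3) N := by
        have h1m : (1:ℕ) ∈ Icc 1 N := mem_Icc.mpr ⟨le_refl 1, by omega⟩
        have hsum := Finset.single_le_sum (f := fun n => D 3 n * g n)
          (fun n _ => mul_nonneg (D_nonneg 3 n) (g_nonneg n)) h1m
        have hD1 : D 3 1 = 1 := by
          rw [← D3_eq]; simp
        have hg1 : g 1 = 1 := by
          show (Real.sqrt ((1:ℕ):ℝ))⁻¹ = 1
          rw [Nat.cast_one, Real.sqrt_one, inv_one]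
        have hsum' : D 3 1 * g 1 ≤ ∑ n ∈ Icc 1 N, D 3 n * g n := hsum
        rw [hD1, hg1] at hsum'
        unfold A
        simpa using hsum'
      have hup1 : 1/2097152 * Real.sqrt z * Real.log z ^ 3 ≤ 1 := by
        have hs : Real.sqrt z ≤ 257 := by
          have e1 : Real.sqrt z ≤ Real.sqrt 66049 := Real.sqrt_le_sqrt (by linarith)
          have e2 : Real.sqrt (66049:ℝ) = 257 := by
            rw [show (66049:ℝ) = 257^2 by norm_num, Real.sqrt_sq (by norm_num : (0:ℝ) ≤ 257)]
          linarith
        have hl : Real.log z ≤ 12 := by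
          rw [Real.log_le_iff_le_exp hz0]
          have h1 : (2.7:ℝ)^(12:ℕ) ≤ Real.exp 1 ^ (12:ℕ) :=
            pow_le_pow_left₀ (by norm_num) (by nlinarith [Real.exp_one_gt_d9]) 12
          have h2 : Real.exp 1 ^ (12:ℕ) = Real.exp 12 := by
            rw [← Real.exp_nat_mul]; norm_num
          have h3 : (65537:ℝ) ≤ (2.7:ℝ)^(12:ℕ) := by norm_num
          linarith
        calc 1/2097152 * Real.sqrt z * Real.log z^3
            ≤ 1/2097152 * 257 * 12^3 := by
              apply mul_le_mul (mul_le_mul_of_nonneg_left hs (by norm_num))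
                (pow_le_pow_left₀ hlz0 hl 3) (pow_nonneg hlz0 3) (by norm_num)
          _ ≤ 1 := by norm_num
      linarith
  · have hup := A_D_le 3 N
    have hsNz : Real.sqrt N ≤ Real.sqrt z := Real.sqrt_le_sqrt hNz
    have hlNz : Real.log N ≤ Real.log z :=
      Real.log_le_log (by exact_mod_cast (by omega : 0 < N)) hNz
    have hlN0 : (0:ℝ) ≤ Real.log N := lognat_nonneg N
    have h13 : (1 + Real.log z)^3 ≤ (27/8) * Real.log z^3 := by
      have h1 : 1 + Real.log z ≤ 3/2 * Real.log z := by linarith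
      have h2 := pow_le_pow_left₀ (by linarith : (0:ℝ) ≤ 1 + Real.log z) h1 3
      have h3 : (3/2 * Real.log z)^3 = 27/8 * Real.log z^3 := by ring
      linarith
    calc A (D 3) N ≤ 2 * Real.sqrt N * (1 + Real.log N)^3 := hup
      _ ≤ 2 * Real.sqrt z * (1 + Real.log z)^3 := by
          apply mul_le_mul (mul_le_mul_of_nonneg_left hsNz (by norm_num))
            (pow_le_pow_left₀ (by linarith) (by linarith) 3)
            (pow_nonneg (by linarith) 3) (by positivity)
      _ ≤ 2 * Real.sqrt z * ((27/8) * Real.log z^3) :=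
          mul_le_mul_of_nonneg_left h13 (by positivity)
      _ ≤ 7 * Real.sqrt z * Real.log z ^ 3 := by nlinarith [pow_nonneg hlz0 3, hsz]



end
end

section
/- There exist positive constants c_1, c_2 such that for all real z ≥ 10, c_1 · z^{-1/2} (log z)^3 ≤ Σ_{n > z} d(n)² n^{-3/2} ≤ c_2 · z^{-1/2} (log z)^3, where d(n) is the number of divisors of n. -/
open Real Finset
open scoped ENNReal

namespace Stmt9


noncomputable def w3 (n : ℕ) : ℝ := 1 / (n : ℝ) ^ ((3:ℝ)/2)

lemma w3_nonneg (n : ℕ) : 0 ≤ w3 n := by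
  unfold w3; positivity

lemma w3_eq {n : ℕ} (hn : 1 ≤ n) : w3 n = 1 / ((n : ℝ) * Real.sqrt n) := by
  have h0 : (0:ℝ) ≤ n := Nat.cast_nonneg n
  unfold w3
  rw [show ((3:ℝ)/2) = 1 + 1/2 by norm_num, Real.rpow_add (by exact_mod_cast hn), Real.rpow_one,
    ← Real.sqrt_eq_rpow]

lemma w3_pos {n : ℕ} (hn : 1 ≤ n) : 0 < w3 n := by
  rw [w3_eq hn]
  have : (0:ℝ) < n := by exact_mod_cast hn
  positivity

lemma w3_mul (a b : ℕ) : w3 (a*b) = w3 a * w3 b := by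
  unfold w3
  rw [Nat.cast_mul, Real.mul_rpow (Nat.cast_nonneg a) (Nat.cast_nonneg b)]
  rw [div_mul_div_comm, one_mul]

lemma tele {n : ℕ} (hn : 2 ≤ n) :
    w3 n ≤ 2 / Real.sqrt ((n:ℝ) - 1) - 2 / Real.sqrt n := by
  have hn1 : (1:ℝ) ≤ (n:ℝ) - 1 := by
    have : (2:ℝ) ≤ n := by exact_mod_cast hn
    linarith
  have hnn : (1:ℝ) ≤ (n:ℝ) := by linarith
  set s := Real.sqrt ((n:ℝ) - 1) with hs
  set t := Real.sqrt (n:ℝ) with ht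
  have hs1 : 1 ≤ s := by
    have := Real.sqrt_le_sqrt hn1
    rwa [Real.sqrt_one] at this
  have ht1 : 1 ≤ t := by
    have := Real.sqrt_le_sqrt hnn
    rwa [Real.sqrt_one] at this
  have hst : s ≤ t := Real.sqrt_le_sqrt (by linarith)
  have hs2 : s^2 = (n:ℝ) - 1 := Real.sq_sqrt (by linarith)
  have ht2 : t^2 = (n:ℝ) := Real.sq_sqrt (by linarith)
  have hw : w3 n = 1/(t^2*t) := by rw [w3_eq (by omega), ht2]
  rw [hw]
  have hsp : (0:ℝ) < s := by linarith
  have htp : (0:ℝ) < t := by linarith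
  rw [div_sub_div _ _ (ne_of_gt hsp) (ne_of_gt htp), div_le_div_iff₀ (by positivity) (by positivity)]
  nlinarith [sq_nonneg (t-s), sq_nonneg (t+s), mul_pos hsp htp]

lemma sum_tail_aux (N : ℕ) (hN : 2 ≤ N) (n : ℕ) :
    ∑ a ∈ range n, (if N ≤ a then w3 a else 0) ≤
      2 / Real.sqrt ((N:ℝ)-1) - 2 / Real.sqrt (max ((n:ℝ)-1) ((N:ℝ)-1)) := by
  induction n with
  | zero =>
    simp only [range_zero, sum_empty]
    rw [max_eq_right (by push_cast; norm_num)]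
    simp
  | succ n ih =>
    rw [Finset.sum_range_succ]
    by_cases h : N ≤ n
    · have h1 : max ((n:ℝ) - 1) ((N:ℝ)-1) = (n:ℝ) - 1 := by
        rw [max_eq_left]; have : (N:ℝ) ≤ n := by exact_mod_cast h
        linarith
      have h2 : max ((n:ℝ) + 1 - 1) ((N:ℝ)-1) = (n:ℝ) := by
        rw [show (n:ℝ)+1-1 = (n:ℝ) by ring, max_eq_left]
        have : (N:ℝ) ≤ n := by exact_mod_cast h
        linarith
      rw [if_pos h]
      push_cast
      rw [h2]
      have := tele (show 2 ≤ n by omega)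
      rw [h1] at ih
      linarith
    · rw [if_neg h, add_zero]
      refine ih.trans ?_
      have : max ((n:ℝ) + 1 - 1) ((N:ℝ)-1) = (N:ℝ)-1 := by
        rw [show (n:ℝ)+1-1 = (n:ℝ) by ring, max_eq_right]
        have : (n:ℝ) ≤ (N:ℝ) - 1 := by
          have : n + 1 ≤ N := by omega
          have := (Nat.cast_le (α := ℝ)).2 this
          push_cast at this; linarith
        exact this
      have h2 : max ((n:ℝ) - 1) ((N:ℝ)-1) = (N:ℝ)-1 := by
        rw [max_eq_right]
        have : (n:ℝ) ≤ (N:ℝ) := by exact_mod_cast Nat.le_of_lt (Nat.lt_of_not_le h)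
        linarith
      push_cast
      rw [this, h2]




lemma w3_zero : w3 0 = 0 := by
  unfold w3
  rw [Nat.cast_zero, Real.zero_rpow (by norm_num), div_zero]

lemma w3_one : w3 1 = 1 := by
  unfold w3
  rw [Nat.cast_one, Real.one_rpow, div_one]

noncomputable def D : ℕ → ℝ → ℝ≥0∞
  | 0, T => if T < 1 then 1 else 0
  | (k+1), T => ∑' c : ℕ, (ENNReal.ofReal (w3 c) * D k (T / c))

noncomputable def Phi (k : ℕ) (c : ℕ) (T : ℝ) : ℝ≥0∞ :=
  ENNReal.ofReal (w3 c) * D k (T / c)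

lemma D_succ (k : ℕ) (T : ℝ) : D (k+1) T = ∑' c : ℕ, Phi k c T := rfl



lemma Phi_mul (k : ℕ) (c x : ℕ) (T : ℝ) :
    Phi k (c*x) T = ENNReal.ofReal (w3 c) * Phi k x (T/c) := by
  unfold Phi
  rcases Nat.eq_zero_or_pos c with rfl | hc
  · simp [w3_zero]
  rcases Nat.eq_zero_or_pos x with rfl | hx
  · simp [w3_zero]
  rw [w3_mul, ENNReal.ofReal_mul (w3_nonneg c), Nat.cast_mul, ← div_div, mul_assoc]

lemma peel (k : ℕ) (c : ℕ) (T : ℝ) :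
    ∑' x : ℕ, Phi k (c*x) T = ENNReal.ofReal (w3 c) * D (k+1) (T/c) := by
  rw [D_succ]
  rw [← ENNReal.tsum_mul_left]
  exact tsum_congr fun x => Phi_mul k c x T


lemma sum_tail (N : ℕ) (hN : 2 ≤ N) (n : ℕ) :
    ∑ a ∈ range n, (if N ≤ a then w3 a else 0) ≤ 2 / Real.sqrt ((N:ℝ)-1) := by
  refine (sum_tail_aux N hN n).trans ?_
  have h : 0 ≤ 2 / Real.sqrt (max ((n:ℝ)-1) ((N:ℝ)-1)) := by positivity
  linarith

lemma tail_le (N : ℕ) (hN : 2 ≤ N) :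
    ∑' c : ℕ, (if N ≤ c then ENNReal.ofReal (w3 c) else 0) ≤
      ENNReal.ofReal (2 / Real.sqrt ((N:ℝ)-1)) := by
  rw [ENNReal.tsum_eq_iSup_sum]
  refine iSup_le fun s => ?_
  have hsub : s ⊆ range (s.sup id + 1) :=
    fun x hx => mem_range.2 (Nat.lt_succ_of_le (le_sup (f := id) hx))
  calc ∑ c ∈ s, (if N ≤ c then ENNReal.ofReal (w3 c) else 0)
      ≤ ∑ c ∈ range (s.sup id + 1), (if N ≤ c then ENNReal.ofReal (w3 c) else 0) :=
        Finset.sum_le_sum_of_subset hsub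
    _ = ENNReal.ofReal (∑ c ∈ range (s.sup id + 1), (if N ≤ c then w3 c else 0)) := by
        rw [ENNReal.ofReal_sum_of_nonneg (fun c _ => by split_ifs <;> simp [w3_nonneg])]
        refine Finset.sum_congr rfl fun c _ => ?_
        split_ifs <;> simp
    _ ≤ _ := ENNReal.ofReal_le_ofReal (sum_tail N hN _)

lemma D1_eq {T : ℝ} (hT : 0 ≤ T) :
    D 1 T = ∑' c : ℕ, (if T < (c:ℝ) then ENNReal.ofReal (w3 c) else 0) := by
  rw [D_succ]
  refine tsum_congr fun c => ?_
  unfold Phi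
  rcases Nat.eq_zero_or_pos c with rfl | hc
  · simp [w3_zero, not_lt.2 hT]
  · have hc' : (0:ℝ) < c := by exact_mod_cast hc
    show ENNReal.ofReal (w3 c) * (if T / c < 1 then 1 else 0) = _
    simp only [div_lt_one hc']
    split_ifs <;> simp

lemma D1_le {T : ℝ} (hT : 0 ≤ T) :
    D 1 T ≤ ENNReal.ofReal (3 / Real.sqrt (max T 1)) := by
  rw [D1_eq hT]
  rcases lt_or_ge T 1 with h1 | h1
  · rw [max_eq_right h1.le, Real.sqrt_one, div_one]
    calc ∑' c : ℕ, (if T < (c:ℝ) then ENNReal.ofReal (w3 c) else 0)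
        ≤ ∑' c : ℕ, ((if c = 1 then ENNReal.ofReal (w3 1) else 0)
            + (if 2 ≤ c then ENNReal.ofReal (w3 c) else 0)) := by
          refine ENNReal.tsum_le_tsum fun c => ?_
          match c with
          | 0 => simp [not_lt.2 hT]
          | 1 => split_ifs <;> simp_all
          | (n+2) => split_ifs <;> simp_all <;> omega
      _ = ENNReal.ofReal (w3 1) + ∑' c : ℕ, (if 2 ≤ c then ENNReal.ofReal (w3 c) else 0) := by
          rw [ENNReal.tsum_add, tsum_ite_eq]
      _ ≤ ENNReal.ofReal (w3 1) + ENNReal.ofReal (2 / Real.sqrt (((2:ℕ):ℝ)-1)) :=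
          add_le_add_right (tail_le 2 le_rfl) _
      _ ≤ ENNReal.ofReal 3 := by
          rw [w3_one, ← ENNReal.ofReal_add (by norm_num) (by positivity)]
          refine ENNReal.ofReal_le_ofReal ?_
          push_cast
          rw [show (2:ℝ)-1 = 1 by norm_num, Real.sqrt_one]
          norm_num
  · have hM : max T 1 = T := max_eq_left h1
    set N := ⌊T⌋₊ with hNdef
    have hN1 : 1 ≤ N := Nat.le_floor (by exact_mod_cast h1)
    have hNT : (N:ℝ) ≤ T := Nat.floor_le hT
    have hTN : T < (N:ℝ) + 1 := Nat.lt_floor_add_one T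
    have key : ∀ c : ℕ, (T < (c:ℝ)) ↔ (N + 1 ≤ c) := by
      intro c
      rw [← Nat.floor_lt hT]
      omega
    calc ∑' c : ℕ, (if T < (c:ℝ) then ENNReal.ofReal (w3 c) else 0)
        = ∑' c : ℕ, (if N + 1 ≤ c then ENNReal.ofReal (w3 c) else 0) := by
          refine tsum_congr fun c => ?_
          rw [if_congr (key c) rfl rfl]
      _ ≤ ENNReal.ofReal (2 / Real.sqrt ((N:ℝ)+1-1)) := by
          have := tail_le (N+1) (by omega)
          push_cast at this ⊢
          exact this
      _ ≤ ENNReal.ofReal (3 / Real.sqrt (max T 1)) := by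
          refine ENNReal.ofReal_le_ofReal ?_
          rw [hM]
          have hsN : (0:ℝ) < Real.sqrt N := Real.sqrt_pos.2 (by exact_mod_cast hN1)
          have hsT : (0:ℝ) < Real.sqrt T := Real.sqrt_pos.2 (by linarith)
          rw [show (N:ℝ)+1-1 = (N:ℝ) by ring, div_le_div_iff₀ hsN hsT]
          have h2 : Real.sqrt T ^ 2 = T := Real.sq_sqrt (by linarith)
          have h3 : Real.sqrt (N:ℝ) ^ 2 = (N:ℝ) := Real.sq_sqrt (by positivity)
          have h4 : T ≤ 2 * N := by
            have : (1:ℝ) ≤ N := by exact_mod_cast hN1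
            linarith
          nlinarith [hsN.le, hsT.le]

lemma harmonic_bound (N : ℕ) (hN : 1 ≤ N) :
    ∑ c ∈ Icc 1 N, (1 / (c:ℝ)) ≤ 1 + Real.log N := by
  have h := harmonic_le_one_add_log N
  have he : (harmonic N : ℝ) = ∑ c ∈ Icc 1 N, (1 / (c:ℝ)) := by
    rw [harmonic_eq_sum_Icc]
    push_cast
    simp [one_div]
  linarith [he ▸ h]

lemma level {K : ℝ} (hK : 1 ≤ K) {j : ℕ}
    (IH : ∀ T, 0 ≤ T → D (j+1) T ≤
      ENNReal.ofReal (K / Real.sqrt (max T 1) * (1 + Real.log (max T 1))^j)) :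
    ∀ T, 0 ≤ T → D (j+2) T ≤
      ENNReal.ofReal ((4*K) / Real.sqrt (max T 1) * (1 + Real.log (max T 1))^(j+1)) := by
  intro T hT
  set M := max T 1 with hMdef
  have hM1 : (1:ℝ) ≤ M := le_max_right _ _
  have hMT : T ≤ M := le_max_left _ _
  have hM0 : (0:ℝ) < M := by linarith
  set N := ⌊M⌋₊ with hNdef
  have hN1 : 1 ≤ N := Nat.le_floor (by exact_mod_cast hM1)
  have hNM : (N:ℝ) ≤ M := Nat.floor_le hM0.le
  have hMN1 : M < (N:ℝ) + 1 := Nat.lt_floor_add_one M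
  have hM2N : M ≤ 2 * N := by
    have : (1:ℝ) ≤ N := by exact_mod_cast hN1
    linarith
  have hsM : (0:ℝ) < Real.sqrt M := Real.sqrt_pos.2 hM0
  have hLM : (0:ℝ) ≤ Real.log M := Real.log_nonneg hM1
  set L : ℝ := 1 + Real.log M with hLdef
  have hL1 : (1:ℝ) ≤ L := by simp [hLdef]; linarith
  -- pointwise bound
  have point : ∀ c : ℕ, Phi (j+1) c T ≤
      (if c ∈ Icc 1 N then ENNReal.ofReal (K / Real.sqrt M * L^j * (1/c)) else 0)
      + (if N + 1 ≤ c then ENNReal.ofReal (K * w3 c) else 0) := by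
    intro c
    rcases Nat.eq_zero_or_pos c with rfl | hc
    · unfold Phi
      simp [w3_zero]
    have hcR : (1:ℝ) ≤ (c:ℝ) := by exact_mod_cast hc
    have hc0 : (0:ℝ) < c := by linarith
    have hTc : 0 ≤ T / c := by positivity
    rcases le_or_gt c N with hcN | hcN
    · -- main range
      rw [if_pos (Finset.mem_Icc.2 ⟨hc, hcN⟩), if_neg (by omega)]
      rw [add_zero]
      refine le_trans (mul_le_mul_right (IH (T/c) hTc) _) ?_
      rw [← ENNReal.ofReal_mul (w3_nonneg c)]
      refine ENNReal.ofReal_le_ofReal ?_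
      set M' := max (T/c) 1 with hM'def
      have hM'1 : (1:ℝ) ≤ M' := le_max_right _ _
      have hM'M : M' ≤ M := by
        refine max_le ?_ hM1
        refine le_trans (div_le_self hT hcR) hMT
      have hlog : (1 + Real.log M')^j ≤ L^j := by
        refine pow_le_pow_left₀ (by linarith [Real.log_nonneg hM'1]) ?_ j
        have := Real.log_le_log (by linarith) hM'M
        simp [hLdef]; linarith
      have hMcM' : M ≤ (c:ℝ) * M' := by
        have h1 : (c:ℝ) * M' = max T c := by
          rw [hM'def, mul_max_of_nonneg _ _ (by positivity : (0:ℝ) ≤ (c:ℝ)), mul_one,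
            mul_div_cancel₀ _ (ne_of_gt hc0)]
        rw [h1, hMdef]
        exact max_le_max le_rfl hcR
      have hsqrt : Real.sqrt M ≤ Real.sqrt c * Real.sqrt M' := by
        rw [← Real.sqrt_mul (by positivity)]
        exact Real.sqrt_le_sqrt hMcM'
      have hw3c : w3 c = 1 / ((c:ℝ) * Real.sqrt c) := w3_eq hc
      have hsM' : (0:ℝ) < Real.sqrt M' := Real.sqrt_pos.2 (by linarith)
      have hsc : (0:ℝ) < Real.sqrt c := Real.sqrt_pos.2 hc0
      -- w3 c * (K / √M' * (1+log M')^j) ≤ K / √M * L^j * (1/c)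
      calc w3 c * (K / Real.sqrt M' * (1 + Real.log M')^j)
          ≤ w3 c * (K / Real.sqrt M' * L^j) := by
            refine mul_le_mul_of_nonneg_left ?_ (w3_nonneg c)
            refine mul_le_mul_of_nonneg_left hlog (by positivity)
        _ ≤ K / Real.sqrt M * L^j * (1/c) := by
            rw [hw3c]
            rw [show (1:ℝ) / ((c:ℝ) * Real.sqrt c) * (K / Real.sqrt M' * L^j)
              = K * L^j * (1 / ((c:ℝ) * (Real.sqrt c * Real.sqrt M'))) by field_simp]
            rw [show K / Real.sqrt M * L^j * (1/(c:ℝ)) = K * L^j * (1 / ((c:ℝ) * Real.sqrt M)) by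
              field_simp]
            refine mul_le_mul_of_nonneg_left ?_ (by positivity)
            refine one_div_le_one_div_of_le (by positivity) ?_
            exact mul_le_mul_of_nonneg_left hsqrt (by positivity)
    · -- tail range
      rw [if_neg (by simp [Finset.mem_Icc]; omega), if_pos (by omega), zero_add]
      have hTltc : T < c := by
        have : (N:ℝ) + 1 ≤ c := by exact_mod_cast hcN
        linarith
      have hM' : max (T/c) 1 = 1 := by
        rw [max_eq_right]
        exact le_of_lt ((div_lt_one hc0).2 hTltc)
      have := IH (T/c) hTc
      rw [hM'] at this
      simp only [Real.sqrt_one, Real.log_one, add_zero, div_one, one_pow, mul_one] at this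
      unfold Phi
      refine le_trans (mul_le_mul_right this _) ?_
      rw [← ENNReal.ofReal_mul (w3_nonneg c), mul_comm]
  calc D (j+2) T = ∑' c : ℕ, Phi (j+1) c T := D_succ _ _
    _ ≤ ∑' c : ℕ, ((if c ∈ Icc 1 N then ENNReal.ofReal (K / Real.sqrt M * L^j * (1/c)) else 0)
          + (if N + 1 ≤ c then ENNReal.ofReal (K * w3 c) else 0)) := ENNReal.tsum_le_tsum point
    _ = (∑' c : ℕ, if c ∈ Icc 1 N then ENNReal.ofReal (K / Real.sqrt M * L^j * (1/c)) else 0)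
          + ∑' c : ℕ, (if N + 1 ≤ c then ENNReal.ofReal (K * w3 c) else 0) := ENNReal.tsum_add
    _ ≤ ENNReal.ofReal (K / Real.sqrt M * L^j * (1 + Real.log M))
          + ENNReal.ofReal (3 * K / Real.sqrt M) := by
        refine add_le_add ?_ ?_
        · rw [tsum_eq_sum (s := Icc 1 N) (fun c hc => by rw [if_neg hc])]
          rw [Finset.sum_congr rfl (fun c hc => if_pos hc),
            ← ENNReal.ofReal_sum_of_nonneg (fun c _ => by positivity)]
          refine ENNReal.ofReal_le_ofReal ?_
          rw [← Finset.mul_sum]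
          refine mul_le_mul_of_nonneg_left ?_ (by positivity)
          refine le_trans (harmonic_bound N hN1) ?_
          have : Real.log N ≤ Real.log M := Real.log_le_log (by exact_mod_cast hN1) hNM
          linarith
        · calc ∑' c : ℕ, (if N + 1 ≤ c then ENNReal.ofReal (K * w3 c) else 0)
              = ENNReal.ofReal K * ∑' c : ℕ, (if N + 1 ≤ c then ENNReal.ofReal (w3 c) else 0) := by
                rw [← ENNReal.tsum_mul_left]
                refine tsum_congr fun c => ?_
                rw [ENNReal.ofReal_mul (by linarith)]
                split_ifs <;> simp
            _ ≤ ENNReal.ofReal K * ENNReal.ofReal (2 / Real.sqrt ((N:ℝ)+1-1)) := by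
                refine mul_le_mul_right ?_ _
                have := tail_le (N+1) (by omega)
                push_cast at this ⊢
                exact this
            _ ≤ ENNReal.ofReal (3 * K / Real.sqrt M) := by
                rw [← ENNReal.ofReal_mul (by linarith)]
                refine ENNReal.ofReal_le_ofReal ?_
                rw [show (N:ℝ)+1-1 = (N:ℝ) by ring]
                have hsN : (0:ℝ) < Real.sqrt N := Real.sqrt_pos.2 (by exact_mod_cast hN1)
                have key : 2 / Real.sqrt N ≤ 3 / Real.sqrt M := by
                  rw [div_le_div_iff₀ hsN hsM]
                  have h2 : Real.sqrt M ^ 2 = M := Real.sq_sqrt hM0.le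
                  have h3 : Real.sqrt (N:ℝ) ^ 2 = (N:ℝ) := Real.sq_sqrt (by positivity)
                  nlinarith [hsN.le, hsM.le]
                calc K * (2 / Real.sqrt N) ≤ K * (3 / Real.sqrt M) :=
                      mul_le_mul_of_nonneg_left key (by linarith)
                  _ = 3 * K / Real.sqrt M := by ring
    _ ≤ ENNReal.ofReal ((4*K) / Real.sqrt M * L^(j+1)) := by
        rw [← ENNReal.ofReal_add (by positivity) (by positivity)]
        refine ENNReal.ofReal_le_ofReal ?_
        have hLpow : (1:ℝ) ≤ L^(j+1) := one_le_pow₀ hL1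
        have h1 : K / Real.sqrt M * L^j * (1 + Real.log M) = K / Real.sqrt M * L^(j+1) := by
          rw [hLdef]; ring
        rw [h1]
        have h2 : 3 * K / Real.sqrt M ≤ 3 * (K / Real.sqrt M * L^(j+1)) := by
          rw [mul_div_assoc]
          refine mul_le_mul_of_nonneg_left ?_ (by norm_num)
          exact le_mul_of_one_le_right (div_pos (by linarith) hsM).le hLpow
        have h3 : (4*K) / Real.sqrt M * L^(j+1) = 4 * (K / Real.sqrt M * L^(j+1)) := by ring
        rw [h3]
        linarith

lemma D1_bound : ∀ T, 0 ≤ T → D 1 T ≤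
    ENNReal.ofReal ((3:ℝ) / Real.sqrt (max T 1) * (1 + Real.log (max T 1))^0) := by
  intro T hT
  simpa using D1_le hT

lemma D4_bound : ∀ T, 0 ≤ T → D 4 T ≤
    ENNReal.ofReal ((192:ℝ) / Real.sqrt (max T 1) * (1 + Real.log (max T 1))^3) := by
  have h2 := level (K := 3) (by norm_num) (j := 0) D1_bound
  have h3 := level (K := 12) (by norm_num) (j := 1) (by
    intro T hT
    simpa [show (4:ℝ)*3 = 12 by norm_num] using h2 T hT)
  have h4 := level (K := 48) (by norm_num) (j := 2) (by
    intro T hT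
    simpa [show (4:ℝ)*12 = 48 by norm_num] using h3 T hT)
  intro T hT
  simpa [show (4:ℝ)*48 = 192 by norm_num] using h4 T hT

lemma lcm_eq {x y : ℕ} (hx : 0 < x) (hy : 0 < y) :
    Nat.lcm x y = Nat.gcd x y * (x / Nat.gcd x y) * (y / Nat.gcd x y) := by
  have hg : 0 < Nat.gcd x y := Nat.gcd_pos_of_pos_left y hx
  have h1 : Nat.gcd x y * (x / Nat.gcd x y) = x := Nat.mul_div_cancel' (Nat.gcd_dvd_left x y)
  have h2 : Nat.gcd x y * (y / Nat.gcd x y) = y := Nat.mul_div_cancel' (Nat.gcd_dvd_right x y)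
  have key : Nat.gcd x y * Nat.lcm x y =
      Nat.gcd x y * (Nat.gcd x y * (x / Nat.gcd x y) * (y / Nat.gcd x y)) := by
    rw [Nat.gcd_mul_lcm]
    calc x * y = (Nat.gcd x y * (x / Nat.gcd x y)) * (Nat.gcd x y * (y / Nat.gcd x y)) := by
          rw [h1, h2]
      _ = Nat.gcd x y * (Nat.gcd x y * (x / Nat.gcd x y) * (y / Nat.gcd x y)) := by ring
  exact Nat.eq_of_mul_eq_mul_left hg key

lemma quad_eq {n x y : ℕ} (hx : x ∈ n.divisors) (hy : y ∈ n.divisors) :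
    Nat.gcd x y * (x / Nat.gcd x y) * (y / Nat.gcd x y) * (n / Nat.lcm x y) = n := by
  have hxp : 0 < x := Nat.pos_of_mem_divisors hx
  have hyp : 0 < y := Nat.pos_of_mem_divisors hy
  have hxd : x ∣ n := (Nat.mem_divisors.1 hx).1
  have hyd : y ∣ n := (Nat.mem_divisors.1 hy).1
  have hlcm : Nat.lcm x y ∣ n := Nat.lcm_dvd hxd hyd
  rw [← lcm_eq hxp hyp]
  exact Nat.mul_div_cancel' hlcm

lemma Phi0_eq {T : ℝ} (hT : 0 ≤ T) (n : ℕ) :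
    Phi 0 n T = if T < (n:ℝ) then ENNReal.ofReal (w3 n) else 0 := by
  unfold Phi
  rcases Nat.eq_zero_or_pos n with rfl | hn
  · simp [w3_zero, not_lt.2 hT]
  · have hn' : (0:ℝ) < n := by exact_mod_cast hn
    show ENNReal.ofReal (w3 n) * (if T / n < 1 then 1 else 0) = _
    simp only [div_lt_one hn']
    split_ifs <;> simp

def emb (x : Σ _ : ℕ, ℕ × ℕ) : ℕ × ℕ × ℕ × ℕ :=
  (Nat.gcd x.2.1 x.2.2, x.2.1 / Nat.gcd x.2.1 x.2.2, x.2.2 / Nat.gcd x.2.1 x.2.2,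
   x.1 / Nat.lcm x.2.1 x.2.2)

lemma emb_inj {n x y n' x' y' : ℕ}
    (hx : x ∈ n.divisors) (hy : y ∈ n.divisors)
    (hx' : x' ∈ n'.divisors) (hy' : y' ∈ n'.divisors)
    (heq : emb ⟨n, (x, y)⟩ = emb ⟨n', (x', y')⟩) : n = n' ∧ x = x' ∧ y = y' := by
  unfold emb at heq
  simp only [Prod.mk.injEq] at heq
  obtain ⟨h1, h2, h3, h4⟩ := heq
  have ex : x = Nat.gcd x y * (x / Nat.gcd x y) := (Nat.mul_div_cancel' (Nat.gcd_dvd_left x y)).symm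
  have ey : y = Nat.gcd x y * (y / Nat.gcd x y) := (Nat.mul_div_cancel' (Nat.gcd_dvd_right x y)).symm
  have ex' : x' = Nat.gcd x' y' * (x' / Nat.gcd x' y') :=
    (Nat.mul_div_cancel' (Nat.gcd_dvd_left x' y')).symm
  have ey' : y' = Nat.gcd x' y' * (y' / Nat.gcd x' y') :=
    (Nat.mul_div_cancel' (Nat.gcd_dvd_right x' y')).symm
  have hxx : x = x' := by rw [ex, h2, h1, ← ex']
  have hyy : y = y' := by rw [ey, h3, h1, ← ey']
  refine ⟨?_, hxx, hyy⟩
  have en := (quad_eq hx hy).symm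
  have en' := (quad_eq hx' hy').symm
  rw [en, h2, h3, h4, h1, ← en']

lemma upper {z : ℝ} (hz : 10 ≤ z) :
    (∑' n : ℕ, ENNReal.ofReal (if z < (n : ℝ) then
      ((n.divisors.card : ℝ)) ^ 2 / (n : ℝ) ^ ((3 : ℝ) / 2) else 0)) ≤ D 4 z := by
  have hz0 : (0:ℝ) ≤ z := by linarith
  set ψ : (Σ _ : ℕ, ℕ × ℕ) → ℝ≥0∞ :=
    fun x => if x.2 ∈ x.1.divisors ×ˢ x.1.divisors then Phi 0 x.1 z else 0 with hψ
  have step1 : (∑' n : ℕ, ENNReal.ofReal (if z < (n : ℝ) then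
      ((n.divisors.card : ℝ)) ^ 2 / (n : ℝ) ^ ((3 : ℝ) / 2) else 0)) = ∑' x, ψ x := by
    rw [ENNReal.tsum_sigma' ψ]
    refine tsum_congr fun n => ?_
    have inner : ∑' p : ℕ × ℕ, ψ ⟨n, p⟩ = ∑ p ∈ n.divisors ×ˢ n.divisors, Phi 0 n z := by
      rw [tsum_eq_sum (s := n.divisors ×ˢ n.divisors) (fun p hp => by
        simp only [hψ]; exact if_neg hp)]
      exact Finset.sum_congr rfl fun p hp => by simp only [hψ]; exact if_pos hp
    rw [inner, Finset.sum_const, Finset.card_product, Phi0_eq hz0, nsmul_eq_mul]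
    split_ifs with h
    · have hn1 : 1 ≤ n := by
        by_contra hn
        push_neg at hn
        interval_cases n <;> simp_all <;> linarith
      rw [show ((n.divisors.card : ℝ)) ^ 2 / (n : ℝ) ^ ((3 : ℝ) / 2)
          = ((n.divisors.card * n.divisors.card : ℕ) : ℝ) * w3 n by
        unfold w3; push_cast; ring]
      rw [ENNReal.ofReal_mul (by positivity), ENNReal.ofReal_natCast]
    · simp
  rw [step1]
  set s : Set (Σ _ : ℕ, ℕ × ℕ) := {x | x.2 ∈ x.1.divisors ×ˢ x.1.divisors} with hs
  have hsupp : Function.support ψ ⊆ s := by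
    intro x hx
    by_contra hxs
    exact hx (by simp only [hψ]; exact if_neg hxs)
  rw [← tsum_subtype_eq_of_support_subset hsupp]
  set F : ℕ × ℕ × ℕ × ℕ → ℝ≥0∞ :=
    fun q => Phi 0 (q.1 * q.2.1 * q.2.2.1 * q.2.2.2) z with hF
  have hinj : Function.Injective (fun b : ↥s => emb b.1) := by
    rintro ⟨⟨n, x, y⟩, hb⟩ ⟨⟨n', x', y'⟩, hb'⟩ h
    simp only at h
    have hb2 := hb
    have hb2' := hb'
    simp only [hs, Set.mem_setOf_eq, Finset.mem_product] at hb2 hb2'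
    obtain ⟨e1, e2, e3⟩ := emb_inj hb2.1 hb2.2 hb2'.1 hb2'.2 h
    subst e1; subst e2; subst e3; rfl
  have hle : ∀ b : ↥s, ψ b.1 ≤ F (emb b.1) := by
    rintro ⟨⟨n, x, y⟩, hb⟩
    have hb2 := hb
    simp only [hs, Set.mem_setOf_eq, Finset.mem_product] at hb2
    simp only [hψ, hF, emb]
    rw [if_pos (show (x, y) ∈ n.divisors ×ˢ n.divisors from hb)]
    rw [quad_eq hb2.1 hb2.2]
  refine le_trans (Summable.tsum_le_tsum_of_inj _ hinj (fun c _ => zero_le) hle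
    ENNReal.summable ENNReal.summable) ?_
  -- now compute ∑' q, F q = D 4 z
  have : (∑' q : ℕ × ℕ × ℕ × ℕ, F q) = D 4 z := by
    rw [hF]
    rw [ENNReal.tsum_prod']
    have e1 : ∀ g : ℕ, (∑' p : ℕ × ℕ × ℕ, Phi 0 (g * p.1 * p.2.1 * p.2.2) z) = Phi 3 g z := by
      intro g
      rw [ENNReal.tsum_prod']
      have e2 : ∀ a : ℕ, (∑' p : ℕ × ℕ, Phi 0 (g * a * p.1 * p.2) z) = Phi 2 (g * a) z := by
        intro a
        rw [ENNReal.tsum_prod']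
        have e3 : ∀ b : ℕ, (∑' m : ℕ, Phi 0 (g * a * b * m) z) = Phi 1 (g * a * b) z := by
          intro b
          exact peel 0 (g * a * b) z
        rw [tsum_congr e3]
        exact peel 1 (g * a) z
      rw [tsum_congr e2]
      exact peel 2 g z
    rw [tsum_congr e1]
    have := peel 3 1 z
    simp only [one_mul] at this
    rw [this, w3_one, ENNReal.ofReal_one, one_mul, Nat.cast_one, div_one]
  rw [this]

lemma inv_sq_sum_strong : ∀ M : ℕ, 5 ≤ M →
    ∑ d ∈ Icc 2 M, (1/(d:ℝ))^2 ≤ 2/3 - 1/(M:ℝ) := by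
  intro M
  induction M with
  | zero => omega
  | succ M ih =>
    intro hM
    rcases Nat.lt_or_ge M 5 with h5 | h5
    · have : M = 4 := by omega
      subst this
      simp only [show (Icc 2 5 : Finset ℕ) = {2,3,4,5} by decide]
      rw [Finset.sum_insert (by decide), Finset.sum_insert (by decide),
        Finset.sum_insert (by decide), Finset.sum_singleton]
      norm_num
    · have hMR : (5:ℝ) ≤ M := by exact_mod_cast h5
      rw [Finset.sum_Icc_succ_top (show 2 ≤ M + 1 by omega)]
      have hM0 : (0:ℝ) < M := by linarith
      have key : (1/((M:ℝ)+1))^2 ≤ 1/(M:ℝ) - 1/((M:ℝ)+1) := by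
        rw [div_sub_div _ _ (by positivity) (by positivity)]
        rw [div_pow]
        rw [div_le_div_iff₀ (by positivity) (by positivity)]
        nlinarith
      have h2 := ih h5
      push_cast
      linarith

lemma inv_sq_sum (M : ℕ) : ∑ d ∈ Icc 2 M, (1/(d:ℝ))^2 ≤ 2/3 := by
  calc ∑ d ∈ Icc 2 M, (1/(d:ℝ))^2 ≤ ∑ d ∈ Icc 2 (max M 5), (1/(d:ℝ))^2 := by
        refine Finset.sum_le_sum_of_subset_of_nonneg ?_ (fun i _ _ => by positivity)
        exact Finset.Icc_subset_Icc le_rfl (le_max_left M 5)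
    _ ≤ 2/3 - 1/((max M 5 : ℕ):ℝ) := inv_sq_sum_strong _ (le_max_right M 5)
    _ ≤ 2/3 := by
        have h : (0:ℝ) ≤ 1/((max M 5 : ℕ):ℝ) := by positivity
        linarith

lemma mult_sum (M d : ℕ) (hd : 1 ≤ d) :
    ∑ a ∈ (Icc 1 M).filter (fun a => d ∣ a), (1/(a:ℝ)) ≤
      (∑ a ∈ Icc 1 M, (1/(a:ℝ))) / d := by
  have hstep : ∀ a ∈ (Icc 1 M).filter (fun a => d ∣ a),
      (1/(a:ℝ)) = (1/(d:ℝ)) * (1/((a/d : ℕ):ℝ)) := by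
    intro a ha
    simp only [Finset.mem_filter, Finset.mem_Icc] at ha
    obtain ⟨⟨ha1, haM⟩, hdvd⟩ := ha
    have : (a:ℝ) = (d:ℝ) * ((a/d : ℕ):ℝ) := by
      rw [← Nat.cast_mul]
      exact_mod_cast (Nat.mul_div_cancel' hdvd).symm
    rw [this]
    have hd0 : (0:ℝ) < d := by exact_mod_cast hd
    have had : 1 ≤ a / d := Nat.one_le_div_iff (by omega) |>.2 (Nat.le_of_dvd (by omega) hdvd)
    have had0 : (0:ℝ) < ((a/d : ℕ):ℝ) := by exact_mod_cast had
    field_simp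
  rw [Finset.sum_congr rfl hstep, ← Finset.mul_sum]
  have himg : ∑ a ∈ (Icc 1 M).filter (fun a => d ∣ a), (1/((a/d : ℕ):ℝ))
      = ∑ k ∈ ((Icc 1 M).filter (fun a => d ∣ a)).image (· / d), (1/(k:ℝ)) := by
    rw [Finset.sum_image]
    intro a ha b hb hab
    simp only [Finset.mem_coe, Finset.mem_filter] at ha hb
    have : d * (a/d) = d * (b/d) := by rw [show a/d = b/d from hab]
    rwa [Nat.mul_div_cancel' ha.2, Nat.mul_div_cancel' hb.2] at this
  rw [himg]
  have hsub : ((Icc 1 M).filter (fun a => d ∣ a)).image (· / d) ⊆ Icc 1 M := by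
    intro k hk
    simp only [Finset.mem_image, Finset.mem_filter, Finset.mem_Icc] at hk ⊢
    obtain ⟨a, ⟨⟨ha1, haM⟩, hdvd⟩, rfl⟩ := hk
    constructor
    · exact (Nat.one_le_div_iff (by omega)).2 (Nat.le_of_dvd (by omega) hdvd)
    · exact le_trans (Nat.div_le_self a d) haM
  have := Finset.sum_le_sum_of_subset_of_nonneg (f := fun k : ℕ => (1/(k:ℝ))) hsub (fun i _ _ => by positivity)
  calc (1/(d:ℝ)) * ∑ k ∈ ((Icc 1 M).filter (fun a => d ∣ a)).image (· / d), (1/(k:ℝ))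
      ≤ (1/(d:ℝ)) * ∑ a ∈ Icc 1 M, (1/(a:ℝ)) := by
        refine mul_le_mul_of_nonneg_left this (by positivity)
    _ = (∑ a ∈ Icc 1 M, (1/(a:ℝ))) / d := by ring

lemma coprime_sum_lower (M : ℕ) (hM : 1 ≤ M) :
    (∑ a ∈ Icc 1 M, (1/(a:ℝ)))^2 / 3 ≤
      ∑ p ∈ ((Icc 1 M) ×ˢ (Icc 1 M)).filter (fun p => Nat.gcd p.1 p.2 = 1),
        (1/((p.1:ℝ) * (p.2:ℝ))) := by
  set H := ∑ a ∈ Icc 1 M, (1/(a:ℝ)) with hH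
  set P := (Icc 1 M) ×ˢ (Icc 1 M) with hP
  have htot : ∑ p ∈ P, (1/((p.1:ℝ) * (p.2:ℝ))) = H^2 := by
    rw [hP, Finset.sum_product]
    rw [show H^2 = H * H by ring, hH, Finset.sum_mul_sum]
    refine Finset.sum_congr rfl fun a _ => Finset.sum_congr rfl fun b _ => ?_
    rw [one_div_mul_one_div]
  have hsplit := Finset.sum_filter_add_sum_filter_not P (fun p => Nat.gcd p.1 p.2 = 1)
    (fun p => (1/((p.1:ℝ) * (p.2:ℝ))))
  have hbad : ∑ p ∈ P.filter (fun p => ¬ Nat.gcd p.1 p.2 = 1), (1/((p.1:ℝ) * (p.2:ℝ)))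
      ≤ (2/3) * H^2 := by
    have hmap : ∀ p ∈ P.filter (fun p => ¬ Nat.gcd p.1 p.2 = 1),
        Nat.gcd p.1 p.2 ∈ Icc 2 M := by
      intro p hp
      simp only [Finset.mem_filter, hP, Finset.mem_product, Finset.mem_Icc] at hp ⊢
      obtain ⟨⟨⟨h11, h1M⟩, ⟨h21, h2M⟩⟩, hne⟩ := hp
      have hg1 : 1 ≤ Nat.gcd p.1 p.2 := Nat.one_le_iff_ne_zero.2 (Nat.gcd_ne_zero_left (by omega))
      exact ⟨by omega, le_trans (Nat.gcd_le_left p.2 (by omega)) h1M⟩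
    rw [← Finset.sum_fiberwise_of_maps_to hmap]
    have hfib : ∀ d ∈ Icc 2 M,
        ∑ p ∈ (P.filter (fun p => ¬ Nat.gcd p.1 p.2 = 1)).filter (fun p => Nat.gcd p.1 p.2 = d),
          (1/((p.1:ℝ) * (p.2:ℝ))) ≤ (H/d)^2 := by
      intro d hd
      simp only [Finset.mem_Icc] at hd
      have hsubfib : (P.filter (fun p => ¬ Nat.gcd p.1 p.2 = 1)).filter
            (fun p => Nat.gcd p.1 p.2 = d) ⊆
          ((Icc 1 M).filter (fun a => d ∣ a)) ×ˢ ((Icc 1 M).filter (fun a => d ∣ a)) := by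
        intro p hp
        simp only [Finset.mem_filter, hP, Finset.mem_product] at hp ⊢
        obtain ⟨⟨⟨hp1, hp2⟩, _⟩, hgcd⟩ := hp
        exact ⟨⟨hp1, hgcd ▸ Nat.gcd_dvd_left _ _⟩, ⟨hp2, hgcd ▸ Nat.gcd_dvd_right _ _⟩⟩
      refine le_trans (Finset.sum_le_sum_of_subset_of_nonneg hsubfib
        (fun i _ _ => by positivity)) ?_
      rw [Finset.sum_product]
      have : ∑ a ∈ (Icc 1 M).filter (fun a => d ∣ a),
          ∑ b ∈ (Icc 1 M).filter (fun a => d ∣ a), (1/((a:ℝ) * (b:ℝ)))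
          = (∑ a ∈ (Icc 1 M).filter (fun a => d ∣ a), (1/(a:ℝ)))^2 := by
        rw [show ∀ x : ℝ, x^2 = x * x from fun x => by ring, Finset.sum_mul_sum]
        refine Finset.sum_congr rfl fun a _ => Finset.sum_congr rfl fun b _ => ?_
        rw [one_div_mul_one_div]
      rw [this]
      have hms := mult_sum M d (by omega)
      have hnn : (0:ℝ) ≤ ∑ a ∈ (Icc 1 M).filter (fun a => d ∣ a), (1/(a:ℝ)) :=
        Finset.sum_nonneg fun i _ => by positivity
      calc (∑ a ∈ (Icc 1 M).filter (fun a => d ∣ a), (1/(a:ℝ)))^2 ≤ (H/d)^2 := by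
            exact pow_le_pow_left₀ hnn hms 2
        _ = (H/d)^2 := rfl
    refine le_trans (Finset.sum_le_sum hfib) ?_
    have : ∑ d ∈ Icc 2 M, (H/(d:ℝ))^2 = H^2 * ∑ d ∈ Icc 2 M, (1/(d:ℝ))^2 := by
      rw [Finset.mul_sum]
      refine Finset.sum_congr rfl fun d _ => ?_
      rw [div_pow, div_pow]
      ring
    rw [this]
    have hH2 : (0:ℝ) ≤ H^2 := sq_nonneg H
    calc H^2 * ∑ d ∈ Icc 2 M, (1/(d:ℝ))^2 ≤ H^2 * (2/3) :=
          mul_le_mul_of_nonneg_left (inv_sq_sum M) hH2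
      _ = (2/3) * H^2 := by ring
  linarith [htot ▸ hsplit]

lemma sqrt_two_le : Real.sqrt 2 ≤ 3/2 := by
  rw [show (3/2:ℝ) = Real.sqrt ((3/2)^2) by rw [Real.sqrt_sq (by norm_num)]]
  exact Real.sqrt_le_sqrt (by norm_num)

lemma D1_lower {T : ℝ} (hT : 1 ≤ T) :
    ENNReal.ofReal (1/(6*Real.sqrt T)) ≤ D 1 T := by
  have hT0 : (0:ℝ) ≤ T := by linarith
  set N := ⌊T⌋₊ with hN
  have hN1 : 1 ≤ N := Nat.le_floor (by exact_mod_cast hT)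
  have hNT : (N:ℝ) ≤ T := Nat.floor_le hT0
  have hTN : T < (N:ℝ) + 1 := Nat.lt_floor_add_one T
  have hTN2 : T ≤ 2*N := by
    have : (1:ℝ) ≤ N := by exact_mod_cast hN1
    linarith
  rw [D1_eq hT0]
  have hterm : ∀ c ∈ Finset.Ioc N (2*N),
      ENNReal.ofReal (1/((2*T) * Real.sqrt (2*T))) ≤
        (if T < (c:ℝ) then ENNReal.ofReal (w3 c) else 0) := by
    intro c hc
    simp only [Finset.mem_Ioc] at hc
    have hc1 : T < (c:ℝ) := by
      have : (N:ℝ) + 1 ≤ c := by exact_mod_cast hc.1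
      linarith
    have hcpos : 1 ≤ c := by omega
    rw [if_pos hc1]
    refine ENNReal.ofReal_le_ofReal ?_
    rw [w3_eq hcpos]
    have hc2T : (c:ℝ) ≤ 2*T := by
      have : (c:ℝ) ≤ 2*(N:ℝ) := by exact_mod_cast hc.2
      linarith
    have hcpos' : (0:ℝ) < c := by exact_mod_cast hcpos
    refine one_div_le_one_div_of_le (by positivity) ?_
    refine mul_le_mul hc2T (Real.sqrt_le_sqrt hc2T) (Real.sqrt_nonneg _) (by linarith)
  calc ENNReal.ofReal (1/(6*Real.sqrt T))
      ≤ (Finset.Ioc N (2*N)).card • ENNReal.ofReal (1/((2*T) * Real.sqrt (2*T))) := by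
        rw [Nat.card_Ioc, show 2*N - N = N by omega, nsmul_eq_mul,
          ← ENNReal.ofReal_natCast, ← ENNReal.ofReal_mul (by positivity)]
        refine ENNReal.ofReal_le_ofReal ?_
        have hs2T : Real.sqrt (2*T) = Real.sqrt 2 * Real.sqrt T := Real.sqrt_mul (by norm_num) T
        have hsT : (0:ℝ) < Real.sqrt T := Real.sqrt_pos.2 (by linarith)
        have hs2 : (0:ℝ) < Real.sqrt 2 := Real.sqrt_pos.2 (by norm_num)
        rw [hs2T]
        rw [show (2*T) * (Real.sqrt 2 * Real.sqrt T) = (2*Real.sqrt 2) * (T * Real.sqrt T) by ring]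
        rw [mul_one_div]
        rw [div_le_div_iff₀ (by positivity) (by positivity)]
        have hNT2 : T/2 ≤ (N:ℝ) := by linarith
        have h32 : Real.sqrt 2 ≤ 3/2 := sqrt_two_le
        -- goal: 1 * ((2√2) * (T * √T)) ≤ N * (1/?) ... check shape
        nlinarith [mul_le_mul_of_nonneg_right hNT2 (by positivity : (0:ℝ) ≤ Real.sqrt T),
          mul_pos hsT (show (0:ℝ) < T by linarith)]
    _ ≤ ∑ c ∈ Finset.Ioc N (2*N), (if T < (c:ℝ) then ENNReal.ofReal (w3 c) else 0) :=
        Finset.card_nsmul_le_sum _ _ _ hterm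
    _ ≤ ∑' c : ℕ, (if T < (c:ℝ) then ENNReal.ofReal (w3 c) else 0) :=
        ENNReal.sum_le_tsum _

lemma G_eq {z : ℝ} (hz0 : 0 ≤ z) (n : ℕ) :
    ENNReal.ofReal (if z < (n : ℝ) then
        ((n.divisors.card : ℝ)) ^ 2 / (n : ℝ) ^ ((3 : ℝ) / 2) else 0)
      = ((n.divisors.card * n.divisors.card : ℕ) : ℝ≥0∞) * Phi 0 n z := by
  rw [Phi0_eq hz0]
  split_ifs with h
  · have hn1 : 1 ≤ n := by
      rcases Nat.eq_zero_or_pos n with rfl | hn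
      · simp only [Nat.cast_zero] at h; linarith
      · exact hn
    rw [show ((n.divisors.card : ℝ)) ^ 2 / (n : ℝ) ^ ((3 : ℝ) / 2)
        = ((n.divisors.card * n.divisors.card : ℕ) : ℝ) * w3 n by unfold w3; push_cast; ring]
    rw [ENNReal.ofReal_mul (by positivity), ENNReal.ofReal_natCast]
  · simp

lemma card_le_dd {n M : ℕ} (hn : n ≠ 0) :
    (((Icc 1 M) ×ˢ ((Icc 1 M ×ˢ Icc 1 M).filter fun p => Nat.gcd p.1 p.2 = 1)).filter
        (fun t => t.1 * t.2.1 * t.2.2 ∣ n)).card ≤ n.divisors.card * n.divisors.card := by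
  rw [← Finset.card_product]
  refine Finset.card_le_card_of_injOn (fun t => (t.1 * t.2.1, t.1 * t.2.2)) ?_ ?_
  · intro t ht
    simp only [Finset.mem_coe, Finset.mem_filter, Finset.mem_product, Finset.mem_Icc] at ht
    obtain ⟨⟨hg, ⟨⟨ha, hb⟩, hcop⟩⟩, hdvd⟩ := ht
    simp only [Finset.mem_coe, Finset.mem_product, Nat.mem_divisors]
    have h1 : t.1 * t.2.1 ∣ t.1 * t.2.1 * t.2.2 := dvd_mul_right _ _
    have h2 : t.1 * t.2.2 ∣ t.1 * t.2.1 * t.2.2 := ⟨t.2.1, by ring⟩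
    exact ⟨⟨h1.trans hdvd, hn⟩, ⟨h2.trans hdvd, hn⟩⟩
  · intro t ht t' ht' heq
    simp only [Finset.mem_coe, Finset.mem_filter, Finset.mem_product, Finset.mem_Icc] at ht ht'
    obtain ⟨⟨⟨hg1, _⟩, ⟨_, hcop⟩⟩, _⟩ := ht
    obtain ⟨⟨⟨hg1', _⟩, ⟨_, hcop'⟩⟩, _⟩ := ht'
    simp only [Prod.mk.injEq] at heq
    obtain ⟨e1, e2⟩ := heq
    have hgg : t.1 = t'.1 := by
      have h1 : Nat.gcd (t.1 * t.2.1) (t.1 * t.2.2) = t.1 := by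
        rw [Nat.gcd_mul_left, hcop, mul_one]
      have h2 : Nat.gcd (t'.1 * t'.2.1) (t'.1 * t'.2.2) = t'.1 := by
        rw [Nat.gcd_mul_left, hcop', mul_one]
      rw [← h1, ← h2, e1, e2]
    have ha' : t.2.1 = t'.2.1 := Nat.eq_of_mul_eq_mul_left (by omega) (hgg ▸ e1)
    have hb' : t.2.2 = t'.2.2 := Nat.eq_of_mul_eq_mul_left (by omega) (hgg ▸ e2)
    exact Prod.ext hgg (Prod.ext ha' hb')

lemma lower {z : ℝ} (hz : 10 ≤ z) :
    ENNReal.ofReal ((1/486) / Real.sqrt z * Real.log z ^ 3) ≤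
      ∑' n : ℕ, ENNReal.ofReal (if z < (n : ℝ) then
        ((n.divisors.card : ℝ)) ^ 2 / (n : ℝ) ^ ((3 : ℝ) / 2) else 0) := by
  have hz0 : (0:ℝ) ≤ z := by linarith
  have hz1 : (1:ℝ) ≤ z := by linarith
  set M := ⌊z ^ ((1:ℝ)/3)⌋₊ with hM
  have hz3 : (2:ℝ) ≤ z ^ ((1:ℝ)/3) := by
    have h8 : ((8:ℝ)) ^ ((1:ℝ)/3) = 2 := by
      rw [show (8:ℝ) = 2^(3:ℕ) by norm_num, ← Real.rpow_natCast 2 3,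
        ← Real.rpow_mul (by norm_num)]
      norm_num
    rw [← h8]
    exact Real.rpow_le_rpow (by norm_num) (by linarith) (by norm_num)
  have hM2 : 2 ≤ M := Nat.le_floor (by exact_mod_cast hz3)
  have hM1 : 1 ≤ M := by omega
  have hMle : (M:ℝ) ≤ z ^ ((1:ℝ)/3) := Nat.floor_le (by positivity)
  have hM3z : ((M:ℝ))^3 ≤ z := by
    calc ((M:ℝ))^3 ≤ (z ^ ((1:ℝ)/3))^3 := pow_le_pow_left₀ (by positivity) hMle 3
      _ = z := by
        rw [← Real.rpow_natCast (z ^ ((1:ℝ)/3)) 3, ← Real.rpow_mul hz0]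
        norm_num
  set Pc := ((Icc 1 M ×ˢ Icc 1 M).filter fun p : ℕ × ℕ => Nat.gcd p.1 p.2 = 1) with hPc
  set Q := (Icc 1 M) ×ˢ Pc with hQ
  have stepA : ∀ n : ℕ,
      ((Q.filter (fun t => t.1 * t.2.1 * t.2.2 ∣ n)).card : ℝ≥0∞) * Phi 0 n z ≤
        ENNReal.ofReal (if z < (n : ℝ) then
          ((n.divisors.card : ℝ)) ^ 2 / (n : ℝ) ^ ((3 : ℝ) / 2) else 0) := by
    intro n
    rw [G_eq hz0 n]
    rcases lt_or_ge z (n:ℝ) with h | h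
    · have hn0 : n ≠ 0 := by
        rintro rfl
        simp only [Nat.cast_zero] at h
        linarith
      refine mul_le_mul_left ?_ _
      exact_mod_cast Nat.cast_le.2 (card_le_dd (M := M) hn0)
    · rw [Phi0_eq hz0, if_neg (not_lt.2 h), mul_zero, mul_zero]
  have stepB : ∀ n : ℕ,
      ((Q.filter (fun t => t.1 * t.2.1 * t.2.2 ∣ n)).card : ℝ≥0∞) * Phi 0 n z
      = ∑ t ∈ Q, (if t.1 * t.2.1 * t.2.2 ∣ n then Phi 0 n z else 0) := by
    intro n
    rw [← Finset.sum_filter, Finset.sum_const, nsmul_eq_mul]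
  have swap : ∑' n : ℕ, ∑ t ∈ Q, (if t.1 * t.2.1 * t.2.2 ∣ n then Phi 0 n z else 0)
      = ∑ t ∈ Q, ∑' n : ℕ, (if t.1 * t.2.1 * t.2.2 ∣ n then Phi 0 n z else 0) :=
    Summable.tsum_finsetSum (fun t _ => ENNReal.summable)
  have stepC : ∀ t ∈ Q, ENNReal.ofReal
        (1/(6 * ((t.1 * t.2.1 * t.2.2 : ℕ) : ℝ) * Real.sqrt z)) ≤
      ∑' n : ℕ, (if t.1 * t.2.1 * t.2.2 ∣ n then Phi 0 n z else 0) := by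
    intro t ht
    simp only [hQ, hPc, Finset.mem_product, Finset.mem_filter, Finset.mem_Icc] at ht
    obtain ⟨⟨hg1, hgM⟩, ⟨⟨ha1, haM⟩, ⟨hb1, hbM⟩⟩, hcop⟩ := ht
    set c := t.1 * t.2.1 * t.2.2 with hc
    have hc1 : 1 ≤ c := Nat.mul_pos (Nat.mul_pos hg1 ha1) hb1
    have hcM3 : c ≤ M^3 := by
      calc c ≤ M * M * M := by exact Nat.mul_le_mul (Nat.mul_le_mul hgM haM) hbM
        _ = M^3 := by ring
    have hcz : ((c:ℕ):ℝ) ≤ z := by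
      refine le_trans ?_ hM3z
      have h' : (c:ℝ) ≤ ((M^3:ℕ):ℝ) := by exact_mod_cast hcM3
      rwa [Nat.cast_pow] at h'
    have hcpos : (0:ℝ) < c := by exact_mod_cast hc1
    have hinj : (∑' m : ℕ, Phi 0 (c * m) z) ≤
        ∑' n : ℕ, (if c ∣ n then Phi 0 n z else 0) := by
      refine Summable.tsum_le_tsum_of_inj (fun m => c * m)
        (fun a b hab => Nat.eq_of_mul_eq_mul_left (by omega) hab)
        (fun n _ => zero_le) (fun m => ?_) ENNReal.summable ENNReal.summable
      rw [if_pos (dvd_mul_right c m)]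
    refine le_trans ?_ hinj
    rw [peel 0 c z]
    have hz_c : 1 ≤ z / c := (one_le_div hcpos).2 hcz
    refine le_trans ?_ (mul_le_mul_right (D1_lower hz_c) _)
    rw [← ENNReal.ofReal_mul (w3_nonneg c)]
    refine ENNReal.ofReal_le_ofReal ?_
    rw [w3_eq hc1]
    have hsc : Real.sqrt c * Real.sqrt c = (c:ℝ) := Real.mul_self_sqrt hcpos.le
    have hscpos : (0:ℝ) < Real.sqrt c := Real.sqrt_pos.2 hcpos
    have hszpos : (0:ℝ) < Real.sqrt z := Real.sqrt_pos.2 (by linarith)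
    have hdiv : Real.sqrt (z / c) = Real.sqrt z / Real.sqrt c := Real.sqrt_div hz0 c
    rw [hdiv]
    rw [div_mul_div_comm, one_mul]
    refine le_of_eq ?_
    rw [eq_div_iff (by positivity)]
    field_simp
  calc ENNReal.ofReal ((1/486) / Real.sqrt z * Real.log z ^ 3)
      ≤ ∑ t ∈ Q, ENNReal.ofReal (1/(6 * ((t.1 * t.2.1 * t.2.2 : ℕ) : ℝ) * Real.sqrt z)) := by
        rw [← ENNReal.ofReal_sum_of_nonneg (fun t _ => by positivity)]
        refine ENNReal.ofReal_le_ofReal ?_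
        -- real inequality
        set H := ∑ a ∈ Icc 1 M, (1/(a:ℝ)) with hH
        have hHnn : 0 ≤ H := Finset.sum_nonneg fun a _ => by positivity
        set L := Real.log z with hL
        have hLnn : 0 ≤ L := Real.log_nonneg hz1
        have hszpos : (0:ℝ) < Real.sqrt z := Real.sqrt_pos.2 (by linarith)
        have hHL : L / 3 ≤ H := by
          have h1 : Real.log ((M:ℝ)+1) ≤ H := by
            have := log_add_one_le_harmonic M
            have he : (harmonic M : ℝ) = H := by
              rw [harmonic_eq_sum_Icc]
              push_cast
              simp [hH, one_div]
            rw [he] at this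
            exact_mod_cast this
          have h2 : Real.log (z ^ ((1:ℝ)/3)) ≤ Real.log ((M:ℝ)+1) := by
            refine Real.log_le_log (by positivity) ?_
            exact le_of_lt (Nat.lt_floor_add_one _)
          have h3 : Real.log (z ^ ((1:ℝ)/3)) = (1/3) * L := by
            rw [Real.log_rpow (by linarith)]
          linarith
        set S := ∑ p ∈ Pc, (1/((p.1:ℝ) * (p.2:ℝ))) with hS
        have hSnn : 0 ≤ S := Finset.sum_nonneg fun p _ => by positivity
        have hsum : ∑ t ∈ Q, (1/(6 * ((t.1 * t.2.1 * t.2.2 : ℕ) : ℝ) * Real.sqrt z))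
            = (1/(6 * Real.sqrt z)) * H * S := by
          rw [hQ, Finset.sum_product]
          have inner : ∀ g ∈ Icc 1 M,
              (∑ p ∈ Pc, (1/(6 * (((g, p).1 * (g, p).2.1 * (g, p).2.2 : ℕ) : ℝ) * Real.sqrt z)))
              = (1/(g:ℝ)) * ((1/(6 * Real.sqrt z)) * S) := by
            intro g hg
            simp only [Finset.mem_Icc] at hg
            have hg0 : (0:ℝ) < g := by exact_mod_cast hg.1
            rw [hS, Finset.mul_sum, Finset.mul_sum]
            refine Finset.sum_congr rfl fun p hp => ?_
            simp only [hPc, Finset.mem_filter, Finset.mem_product, Finset.mem_Icc] at hp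
            have hp1 : (0:ℝ) < p.1 := by exact_mod_cast hp.1.1.1
            have hp2 : (0:ℝ) < p.2 := by exact_mod_cast hp.1.2.1
            push_cast
            field_simp
          rw [Finset.sum_congr rfl inner, ← Finset.sum_mul, ← hH]
          ring
        rw [hsum]
        have hSlow : H^2/3 ≤ S := hS ▸ coprime_sum_lower M hM1
        have hH3 : (L/3)^3 ≤ H^3 := pow_le_pow_left₀ (by positivity) hHL 3
        calc (1/486)/Real.sqrt z * L^3 = (L/3)^3/(18*Real.sqrt z) := by ring
          _ ≤ H^3/(18*Real.sqrt z) := by gcongr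
          _ = (1/(6 * Real.sqrt z)) * H * (H^2/3) := by ring
          _ ≤ (1/(6 * Real.sqrt z)) * H * S := by
              refine mul_le_mul_of_nonneg_left hSlow ?_
              positivity
    _ ≤ ∑ t ∈ Q, ∑' n : ℕ, (if t.1 * t.2.1 * t.2.2 ∣ n then Phi 0 n z else 0) :=
        Finset.sum_le_sum stepC
    _ = ∑' n : ℕ, ∑ t ∈ Q, (if t.1 * t.2.1 * t.2.2 ∣ n then Phi 0 n z else 0) := swap.symm
    _ ≤ _ := by
        refine ENNReal.tsum_le_tsum fun n => ?_
        rw [← stepB n]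
        exact stepA n

lemma log_ge {z : ℝ} (hz : 10 ≤ z) : (2.07:ℝ) ≤ Real.log z := by
  have h8 : Real.log 8 ≤ Real.log z := Real.log_le_log (by norm_num) (by linarith)
  have he : Real.log 8 = 3 * Real.log 2 := by
    rw [show (8:ℝ) = 2^(3:ℕ) by norm_num, Real.log_pow]
    push_cast
    ring
  nlinarith [Real.log_two_gt_d9]

lemma poly_ineq {L : ℝ} (hL : (2.07:ℝ) ≤ L) : 192*(1+L)^3 ≤ 700*L^3 := by
  have hL0 : (0:ℝ) ≤ L := by linarith
  have e1 : 2.07*L^2 ≤ L^3 := by nlinarith [mul_nonneg (sq_nonneg L) (sub_nonneg.2 hL)]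
  have e2 : 2.07*L ≤ L^2 := by nlinarith [mul_nonneg hL0 (sub_nonneg.2 hL)]
  nlinarith

end Stmt9

open Stmt9 in
theorem stmt9 :
    ∃ c₁ c₂ : ℝ, 0 < c₁ ∧ 0 < c₂ ∧ ∀ z : ℝ, 10 ≤ z →
      c₁ * z ^ (-(1 : ℝ) / 2) * Real.log z ^ 3 ≤
        (∑' n : ℕ, if z < (n : ℝ) then
          ((n.divisors.card : ℝ)) ^ 2 / (n : ℝ) ^ ((3 : ℝ) / 2) else 0) ∧
      (∑' n : ℕ, if z < (n : ℝ) then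
          ((n.divisors.card : ℝ)) ^ 2 / (n : ℝ) ^ ((3 : ℝ) / 2) else 0) ≤
        c₂ * z ^ (-(1 : ℝ) / 2) * Real.log z ^ 3 := by
  refine ⟨1/486, 700, by norm_num, by norm_num, fun z hz => ?_⟩
  have hz0 : (0:ℝ) ≤ z := by linarith
  have hz1 : (1:ℝ) ≤ z := by linarith
  have hsz : (0:ℝ) < Real.sqrt z := Real.sqrt_pos.2 (by linarith)
  have hLnn : (0:ℝ) ≤ Real.log z := Real.log_nonneg hz1
  have hrpow : z ^ (-(1:ℝ)/2) = (Real.sqrt z)⁻¹ := by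
    rw [show -(1:ℝ)/2 = -(1/2) by norm_num, Real.rpow_neg hz0, Real.sqrt_eq_rpow]
  set f : ℕ → ℝ := fun n => if z < (n : ℝ) then
    ((n.divisors.card : ℝ)) ^ 2 / (n : ℝ) ^ ((3 : ℝ) / 2) else 0 with hf
  have hfnn : ∀ n, 0 ≤ f n := fun n => by
    rw [hf]
    dsimp only
    split_ifs
    · positivity
    · exact le_rfl
  have hup : (∑' n : ℕ, ENNReal.ofReal (f n)) ≤
      ENNReal.ofReal (192 / Real.sqrt z * (1 + Real.log z)^3) := by
    refine le_trans (upper hz) ?_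
    have h := D4_bound z hz0
    rwa [max_eq_left hz1] at h
  have hlow := lower hz
  have hne : (∑' n : ℕ, ENNReal.ofReal (f n)) ≠ ⊤ :=
    ne_top_of_le_ne_top ENNReal.ofReal_ne_top hup
  have heq : ∑' n : ℕ, f n = (∑' n : ℕ, ENNReal.ofReal (f n)).toReal := by
    rw [ENNReal.tsum_toReal_eq (fun n => ENNReal.ofReal_ne_top)]
    exact tsum_congr fun n => (ENNReal.toReal_ofReal (hfnn n)).symm
  constructor
  · -- lower bound
    have h1 : ((1:ℝ)/486) / Real.sqrt z * Real.log z ^ 3 ≤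
        (∑' n : ℕ, ENNReal.ofReal (f n)).toReal := by
      have h2 := ENNReal.toReal_mono hne hlow
      rwa [ENNReal.toReal_ofReal (by positivity)] at h2
    rw [← heq] at h1
    calc (1/486) * z ^ (-(1:ℝ)/2) * Real.log z ^ 3
        = ((1:ℝ)/486) / Real.sqrt z * Real.log z ^ 3 := by
          rw [hrpow]
          ring
      _ ≤ ∑' n : ℕ, f n := h1
  · -- upper bound
    have h1 : (∑' n : ℕ, ENNReal.ofReal (f n)).toReal ≤
        192 / Real.sqrt z * (1 + Real.log z)^3 := by
      have h2 := ENNReal.toReal_mono ENNReal.ofReal_ne_top hup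
      rwa [ENNReal.toReal_ofReal (by positivity)] at h2
    rw [← heq] at h1
    refine le_trans h1 ?_
    have hkey := poly_ineq (log_ge hz)
    rw [hrpow]
    calc 192 / Real.sqrt z * (1 + Real.log z)^3
        = (192 * (1 + Real.log z)^3) / Real.sqrt z := by ring
      _ ≤ (700 * Real.log z^3) / Real.sqrt z := by gcongr
      _ = 700 * (Real.sqrt z)⁻¹ * Real.log z ^ 3 := by ring
end

section
/- There is an absolute constant C such that for all z ≥ 10, the sum c_1(z) := Σ d(n_1)d(n_2)d(n_3)d(n_4) / ((n_1 n_2 n_3)^{3/4} n_4^{1/4}), taken over quadruples of positive integers n_1, n_2, n_3, n_4 ≤ z satisfying √n_1 + √n_2 + √n_3 = √n_4, is at most C (i.e., c_1(z) is bounded uniformly in z). -/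
open Real Finset

/-- Dirichlet divisor function. -/
def d (n : ℕ) : ℕ := n.divisors.card

lemma pow8 : ∀ k : ℕ, (k+1)^8 ≤ 2^(k+18) := by
  intro k
  rcases lt_or_ge k 12 with h | h
  · interval_cases k <;> norm_num
  · induction k with
    | zero => norm_num
    | succ n ih =>
      rcases lt_or_ge n 12 with h2 | h2
      · interval_cases n <;> norm_num
      · have ihn := ih h2
        have h1 : 12*(n+2) ≤ 13*(n+1) := by omega
        have h3 : (n+2)^8 * 12^8 ≤ 13^8 * (n+1)^8 := by
          calc (n+2)^8 * 12^8 = (12*(n+2))^8 := by ring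
          _ ≤ (13*(n+1))^8 := Nat.pow_le_pow_left h1 8
          _ = 13^8 * (n+1)^8 := by ring
        have h4 : 13^8 * (n+1)^8 ≤ 13^8 * 2^(n+18) := Nat.mul_le_mul_left _ ihn
        have h5 : (13:ℕ)^8 ≤ 2 * 12^8 := by norm_num
        have h6 : (n+2)^8 * 12^8 ≤ 2 * 12^8 * 2^(n+18) := by
          calc (n+2)^8 * 12^8 ≤ 13^8 * 2^(n+18) := le_trans h3 h4
          _ ≤ 2 * 12^8 * 2^(n+18) := Nat.mul_le_mul_right _ h5
        have h7 : (n+2)^8 * 12^8 ≤ 2^(n+1+18) * 12^8 := by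
          have : 2 * 12^8 * 2^(n+18) = 2^(n+1+18) * 12^8 := by ring
          omega
        exact Nat.le_of_mul_le_mul_right h7 (by norm_num)


lemma d_pow8 (n : ℕ) (hn : n ≠ 0) : (d n)^8 ≤ 2^4608 * n := by
  have hd : d n = n.primeFactors.prod (n.factorization · + 1) := Nat.card_divisors hn
  have hnval : n.primeFactors.prod (fun p => p ^ n.factorization p) = n := by
    have := Nat.factorization_prod_pow_eq_self hn
    rwa [Nat.prod_factorization_eq_prod_primeFactors (fun p k => p ^ k)] at this
  -- pointwise bound
  have key : ∀ p ∈ n.primeFactors, (n.factorization p + 1)^8 ≤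
      (if p < 256 then 2^18 else 1) * p ^ n.factorization p := by
    intro p hp
    have hpp : p.Prime := Nat.prime_of_mem_primeFactors hp
    set k := n.factorization p
    by_cases h : p < 256
    · simp only [h, if_true]
      calc (k+1)^8 ≤ 2^(k+18) := pow8 k
      _ = 2^18 * 2^k := by ring
      _ ≤ 2^18 * p^k := Nat.mul_le_mul_left _ (Nat.pow_le_pow_left hpp.two_le k)
    · simp only [h, if_false, one_mul]
      push_neg at h
      have h2 : k + 1 ≤ 2^k := Nat.lt_two_pow_self (n := k)
      calc (k+1)^8 ≤ (2^k)^8 := Nat.pow_le_pow_left h2 8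
      _ = (2^8)^k := by rw [← pow_mul, ← pow_mul, Nat.mul_comm]
      _ ≤ p^k := Nat.pow_le_pow_left h k
  have step1 : (d n)^8 = n.primeFactors.prod (fun p => (n.factorization p + 1)^8) := by
    rw [hd, ← Finset.prod_pow]
  have step2 : (d n)^8 ≤ n.primeFactors.prod
      (fun p => (if p < 256 then 2^18 else 1) * p ^ n.factorization p) := by
    rw [step1]; exact Finset.prod_le_prod' key
  rw [Finset.prod_mul_distrib, hnval] at step2
  have step3 : n.primeFactors.prod (fun p => if p < 256 then 2^18 else (1:ℕ)) ≤ 2^4608 := by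
    rw [Finset.prod_ite, Finset.prod_const, Finset.prod_const, one_pow, mul_one]
    have hcard : (n.primeFactors.filter (fun p => p < 256)).card ≤ 256 := by
      have : n.primeFactors.filter (fun p => p < 256) ⊆ Finset.range 256 := by
        intro x hx
        simp only [Finset.mem_filter] at hx
        exact Finset.mem_range.mpr hx.2
      calc _ ≤ (Finset.range 256).card := Finset.card_le_card this
      _ = 256 := Finset.card_range 256
    calc (2^18)^(n.primeFactors.filter (fun p => p < 256)).card
        ≤ (2^18)^256 := Nat.pow_le_pow_right (by norm_num) hcard
      _ = 2^4608 := by rw [← pow_mul]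
  calc (d n)^8 ≤ _ := step2
  _ ≤ 2^4608 * n := Nat.mul_le_mul_right _ step3

-- If √A+√B+√C = q (rational) with A,B,C ≥ 1 naturals, then C is a perfect square.
lemma sq_of_sum_sqrt (A B C : ℕ) (hA : 1 ≤ A) (hB : 1 ≤ B) (hC : 1 ≤ C) (q : ℚ)
    (h : Real.sqrt A + Real.sqrt B + Real.sqrt C = (q:ℝ)) : IsSquare C := by
  set u := Real.sqrt A with hu
  set v := Real.sqrt B with hv
  set t := Real.sqrt C with ht
  have hu2 : u^2 = (A:ℝ) := Real.sq_sqrt (by positivity)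
  have hv2 : v^2 = (B:ℝ) := Real.sq_sqrt (by positivity)
  have ht2 : t^2 = (C:ℝ) := Real.sq_sqrt (by positivity)
  have hu1 : (1:ℝ) ≤ u := by
    rw [hu, show (1:ℝ) = Real.sqrt 1 by simp]
    exact Real.sqrt_le_sqrt (by exact_mod_cast hA)
  have hv1 : (1:ℝ) ≤ v := by
    rw [hv, show (1:ℝ) = Real.sqrt 1 by simp]
    exact Real.sqrt_le_sqrt (by exact_mod_cast hB)
  have ht1 : (1:ℝ) ≤ t := by
    rw [ht, show (1:ℝ) = Real.sqrt 1 by simp]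
    exact Real.sqrt_le_sqrt (by exact_mod_cast hC)
  have hq3 : (3:ℝ) ≤ (q:ℝ) := by rw [← h]; linarith
  set r : ℚ := (q^2 + C - A - B)/2 with hr
  have hr1 : u*v + (q:ℝ)*t = (r:ℝ) := by
    have h1 : u + v = (q:ℝ) - t := by linarith
    have h2 : (u+v)^2 = ((q:ℝ)-t)^2 := by rw [h1]
    have h3 : u^2 + 2*(u*v) + v^2 = (q:ℝ)^2 - 2*((q:ℝ)*t) + t^2 := by ring_nf; ring_nf at h2; linarith
    rw [hu2, hv2, ht2] at h3
    push_cast [hr]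
    linarith
  have huv2 : (u*v)^2 = (A:ℝ)*(B:ℝ) := by rw [mul_pow, hu2, hv2]
  have hrpos : (0:ℝ) < (r:ℝ) := by rw [← hr1]; nlinarith
  have h4 : ((r:ℝ) - (q:ℝ)*t)^2 = (A:ℝ)*(B:ℝ) := by
    rw [← hr1]; ring_nf; ring_nf at huv2; linarith
  -- r^2 - 2 r q t + q^2 C = A B
  have h5 : (r:ℝ)^2 - 2*(r:ℝ)*(q:ℝ)*t + (q:ℝ)^2*(C:ℝ) = (A:ℝ)*(B:ℝ) := by
    nlinarith [ht2, h4]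
  have hqr : (0:ℝ) < 2*(r:ℝ)*(q:ℝ) := by nlinarith
  set q' : ℚ := (r^2 + q^2*C - A*B)/(2*r*q) with hq'
  have htq : t = (q':ℝ) := by
    have hne : (2*(r:ℝ)*(q:ℝ)) ≠ 0 := ne_of_gt hqr
    have : t = ((r:ℝ)^2 + (q:ℝ)^2*(C:ℝ) - (A:ℝ)*(B:ℝ))/(2*(r:ℝ)*(q:ℝ)) := by
      field_simp
      linarith
    rw [this, hq']
    push_cast
    ring
  have : ¬ Irrational (Real.sqrt C) := by
    rw [ht] at htq
    rw [htq]
    exact Rat.not_irrational q'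
  exact not_not.mp (fun hns => this (irrational_sqrt_natCast_iff.mpr hns))

-- if n₁ = a₁^2 * m with m squarefree and n₁ * n₂ is a square, then n₂ = b^2 * m
lemma rep_of_mul_sq (m a₁ n₂ e : ℕ) (hm : Squarefree m) (ha₁ : 1 ≤ a₁) (hn₂ : 1 ≤ n₂)
    (h : (a₁^2 * m) * n₂ = e^2) : ∃ b, 1 ≤ b ∧ n₂ = b^2 * m := by
  obtain ⟨m₂, b, hbm, hm₂⟩ := Nat.sq_mul_squarefree n₂
  have hm0 : m ≠ 0 := hm.ne_zero
  have hb0 : b ≠ 0 := by rintro rfl; simp at hbm; omega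
  have hm₂0 : m₂ ≠ 0 := hm₂.ne_zero
  -- (a₁ b)^2 * (m * m₂) = e^2
  have he : (a₁*b)^2 * (m * m₂) = e^2 := by rw [← h, ← hbm]; ring
  have hdvd : (a₁*b)^2 ∣ e^2 := ⟨m*m₂, he.symm⟩
  have hab : a₁*b ∣ e := (Nat.pow_dvd_pow_iff two_ne_zero).mp hdvd
  obtain ⟨f, hf⟩ := hab
  have hab0 : a₁*b ≠ 0 := by positivity
  have hmm : m * m₂ = f^2 := by
    have : (a₁*b)^2 * (m*m₂) = (a₁*b)^2 * f^2 := by rw [he, hf]; ring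
    exact Nat.eq_of_mul_eq_mul_left (by positivity) this
  have hmf : m ∣ f := by
    have : m ∣ f^2 := ⟨m₂, by omega⟩
    exact (hm.dvd_pow_iff_dvd two_ne_zero).mp this
  obtain ⟨g, hg⟩ := hmf
  have hm₂g : m₂ = m * g^2 := by
    have : m * m₂ = m * (m * g^2) := by rw [hmm, hg]; ring
    exact Nat.eq_of_mul_eq_mul_left (Nat.pos_of_ne_zero hm0) this
  have hg1 : g = 1 := by
    have hdv : g*g ∣ m₂ := ⟨m, by rw [hm₂g]; ring⟩
    exact Nat.isUnit_iff.mp (hm₂ g hdv)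
  subst hg1
  refine ⟨b, Nat.one_le_iff_ne_zero.mpr hb0, ?_⟩
  rw [← hbm, hm₂g]
  ring

lemma structure_lemma (n₁ n₂ n₃ n₄ : ℕ) (h1 : 1 ≤ n₁) (h2 : 1 ≤ n₂) (h3 : 1 ≤ n₃)
    (heq : Real.sqrt n₁ + Real.sqrt n₂ + Real.sqrt n₃ = Real.sqrt n₄) :
    ∃ m a₁ a₂ a₃ : ℕ, 1 ≤ m ∧ 1 ≤ a₁ ∧ 1 ≤ a₂ ∧ 1 ≤ a₃ ∧
      n₁ = a₁^2*m ∧ n₂ = a₂^2*m ∧ n₃ = a₃^2*m ∧ n₄ = (a₁+a₂+a₃)^2*m := by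
  have s1 : Real.sqrt n₁ ^ 2 = (n₁:ℝ) := Real.sq_sqrt (by positivity)
  have s2 : Real.sqrt n₂ ^ 2 = (n₂:ℝ) := Real.sq_sqrt (by positivity)
  have s3 : Real.sqrt n₃ ^ 2 = (n₃:ℝ) := Real.sq_sqrt (by positivity)
  have s4 : Real.sqrt n₄ ^ 2 = (n₄:ℝ) := Real.sq_sqrt (by positivity)
  have m12 : Real.sqrt n₁ * Real.sqrt n₂ = Real.sqrt ((n₁*n₂:ℕ)) := by
    push_cast; rw [← Real.sqrt_mul (by positivity)]
  have m13 : Real.sqrt n₁ * Real.sqrt n₃ = Real.sqrt ((n₁*n₃:ℕ)) := by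
    push_cast; rw [← Real.sqrt_mul (by positivity)]
  have m23 : Real.sqrt n₂ * Real.sqrt n₃ = Real.sqrt ((n₂*n₃:ℕ)) := by
    push_cast; rw [← Real.sqrt_mul (by positivity)]
  set q : ℚ := ((n₄:ℚ) - n₁ - n₂ - n₃)/2 with hq
  have hsum : Real.sqrt (n₁*n₂:ℕ) + Real.sqrt (n₁*n₃:ℕ) + Real.sqrt (n₂*n₃:ℕ) = (q:ℝ) := by
    have hsq : (Real.sqrt n₁ + Real.sqrt n₂ + Real.sqrt n₃)^2 = (n₄:ℝ) := by rw [heq, s4]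
    have expand : (n₁:ℝ) + n₂ + n₃ + 2*(Real.sqrt n₁ * Real.sqrt n₂ +
        Real.sqrt n₁ * Real.sqrt n₃ + Real.sqrt n₂ * Real.sqrt n₃) = (n₄:ℝ) := by
      rw [← hsq]; ring_nf; nlinarith [s1, s2, s3]
    rw [m12, m13, m23] at expand
    rw [hq]
    push_cast at expand ⊢
    linarith
  have p12 : 1 ≤ n₁*n₂ := Nat.one_le_iff_ne_zero.mpr (by positivity)
  have p13 : 1 ≤ n₁*n₃ := Nat.one_le_iff_ne_zero.mpr (by positivity)
  have p23 : 1 ≤ n₂*n₃ := Nat.one_le_iff_ne_zero.mpr (by positivity)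
  obtain ⟨e₂₃, he₂₃⟩ := sq_of_sum_sqrt _ _ _ p12 p13 p23 q hsum
  obtain ⟨e₁₃, he₁₃⟩ := sq_of_sum_sqrt _ _ _ p12 p23 p13 q (by rw [← hsum]; ring)
  obtain ⟨e₁₂, he₁₂⟩ := sq_of_sum_sqrt _ _ _ p13 p23 p12 q (by rw [← hsum]; ring)
  obtain ⟨m, a₁, hrep, hm⟩ := Nat.sq_mul_squarefree n₁
  have ha₁ : 1 ≤ a₁ := by
    rcases Nat.eq_zero_or_pos a₁ with rfl | h; · simp at hrep; omega
    · exact h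
  obtain ⟨a₂, ha₂, hrep2⟩ := rep_of_mul_sq m a₁ n₂ e₁₂ hm ha₁ h2
      (by rw [hrep, he₁₂]; ring)
  obtain ⟨a₃, ha₃, hrep3⟩ := rep_of_mul_sq m a₁ n₃ e₁₃ hm ha₁ h3
      (by rw [hrep, he₁₃]; ring)
  have hm1 : 1 ≤ m := Nat.one_le_iff_ne_zero.mpr hm.ne_zero
  -- now n₄
  have sqrt_rep : ∀ a : ℕ, 1 ≤ a → Real.sqrt ((a^2*m : ℕ):ℝ) = a * Real.sqrt m := by
    intro a ha
    push_cast
    rw [Real.sqrt_mul (by positivity), Real.sqrt_sq (by positivity)]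
  have hs1 : Real.sqrt n₁ = a₁ * Real.sqrt m := by
    rw [show ((n₁:ℕ):ℝ) = ((a₁^2*m : ℕ):ℝ) by rw [hrep], sqrt_rep a₁ ha₁]
  have hs2 : Real.sqrt n₂ = a₂ * Real.sqrt m := by
    rw [show ((n₂:ℕ):ℝ) = ((a₂^2*m : ℕ):ℝ) by rw [hrep2], sqrt_rep a₂ ha₂]
  have hs3 : Real.sqrt n₃ = a₃ * Real.sqrt m := by
    rw [show ((n₃:ℕ):ℝ) = ((a₃^2*m : ℕ):ℝ) by rw [hrep3], sqrt_rep a₃ ha₃]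
  have hs4 : Real.sqrt n₄ = ((a₁+a₂+a₃:ℕ):ℝ) * Real.sqrt m := by
    rw [← heq, hs1, hs2, hs3]; push_cast; ring
  have hn₄ : n₄ = (a₁+a₂+a₃)^2 * m := by
    have hsm : Real.sqrt m ^ 2 = (m:ℝ) := Real.sq_sqrt (by positivity)
    have : (n₄:ℝ) = (((a₁+a₂+a₃)^2*m : ℕ):ℝ) := by
      rw [← s4, hs4, mul_pow, hsm]
      push_cast
      ring
    exact_mod_cast this
  exact ⟨m, a₁, a₂, a₃, hm1, ha₁, ha₂, ha₃, hrep.symm, hrep2, hrep3, hn₄⟩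

lemma d_le_real (n : ℕ) (hn : 1 ≤ n) : (d n : ℝ) ≤ 2^576 * (n:ℝ)^((1:ℝ)/8) := by
  have h8 : ((d n : ℝ))^(8:ℕ) ≤ 2^4608 * (n:ℝ) := by
    exact_mod_cast d_pow8 n (by omega)
  have hd0 : (0:ℝ) ≤ (d n : ℝ) := Nat.cast_nonneg _
  have key := Real.rpow_le_rpow (by positivity) h8 (by norm_num : (0:ℝ) ≤ 1/8)
  have lhs : (((d n : ℝ))^(8:ℕ))^((1:ℝ)/8) = (d n : ℝ) := by
    rw [← Real.rpow_natCast ((d n : ℝ)) 8, ← Real.rpow_mul hd0]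
    norm_num
  have rhs : ((2:ℝ)^(4608:ℕ) * (n:ℝ))^((1:ℝ)/8) = 2^576 * (n:ℝ)^((1:ℝ)/8) := by
    rw [Real.mul_rpow (by positivity) (by positivity),
      ← Real.rpow_natCast (2:ℝ) 4608, ← Real.rpow_mul (by norm_num)]
    norm_num
  rw [lhs, rhs] at key
  exact key

-- bound for structured term
lemma term_bound (m a₁ a₂ a₃ : ℕ) (hm : 1 ≤ m) (h₁ : 1 ≤ a₁) (h₂ : 1 ≤ a₂) (h₃ : 1 ≤ a₃) :
    (d (a₁^2*m) : ℝ) * d (a₂^2*m) * d (a₃^2*m) * d ((a₁+a₂+a₃)^2*m) /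
      ((((a₁^2*m : ℕ):ℝ) * ((a₂^2*m : ℕ):ℝ) * ((a₃^2*m : ℕ):ℝ)) ^ ((3:ℝ)/4) *
        (((a₁+a₂+a₃)^2*m : ℕ):ℝ) ^ ((1:ℝ)/4)) ≤
    2^2304 * (m:ℝ)^(-(2:ℝ)) * (a₁:ℝ)^(-(5:ℝ)/4) * (a₂:ℝ)^(-(5:ℝ)/4) * (a₃:ℝ)^(-(5:ℝ)/4) := by
  set a₄ := a₁ + a₂ + a₃ with ha₄
  have h₄ : 1 ≤ a₄ := by omega
  set n₁ := a₁^2*m; set n₂ := a₂^2*m; set n₃ := a₃^2*m; set n₄ := a₄^2*m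
  have hn₁ : 1 ≤ n₁ := Nat.one_le_iff_ne_zero.mpr (by positivity)
  have hn₂ : 1 ≤ n₂ := Nat.one_le_iff_ne_zero.mpr (by positivity)
  have hn₃ : 1 ≤ n₃ := Nat.one_le_iff_ne_zero.mpr (by positivity)
  have hn₄ : 1 ≤ n₄ := Nat.one_le_iff_ne_zero.mpr (by positivity)
  have c₁ : (0:ℝ) < (n₁:ℝ) := by exact_mod_cast hn₁
  have c₂ : (0:ℝ) < (n₂:ℝ) := by exact_mod_cast hn₂
  have c₃ : (0:ℝ) < (n₃:ℝ) := by exact_mod_cast hn₃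
  have c₄ : (0:ℝ) < (n₄:ℝ) := by exact_mod_cast hn₄
  have hD : (0:ℝ) < ((n₁:ℝ) * (n₂:ℝ) * (n₃:ℝ)) ^ ((3:ℝ)/4) * (n₄:ℝ) ^ ((1:ℝ)/4) := by
    positivity
  have hnum : (d n₁ : ℝ) * d n₂ * d n₃ * d n₄ ≤
      2^2304 * ((n₁:ℝ)^((1:ℝ)/8) * (n₂:ℝ)^((1:ℝ)/8) * (n₃:ℝ)^((1:ℝ)/8) * (n₄:ℝ)^((1:ℝ)/8)) := by
    have b₁ := d_le_real n₁ hn₁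
    have b₂ := d_le_real n₂ hn₂
    have b₃ := d_le_real n₃ hn₃
    have b₄ := d_le_real n₄ hn₄
    have : (d n₁ : ℝ) * d n₂ * d n₃ * d n₄ ≤
        (2^576 * (n₁:ℝ)^((1:ℝ)/8)) * (2^576 * (n₂:ℝ)^((1:ℝ)/8)) *
        (2^576 * (n₃:ℝ)^((1:ℝ)/8)) * (2^576 * (n₄:ℝ)^((1:ℝ)/8)) := by
      have p1 : (0:ℝ) ≤ (d n₁ : ℝ) := Nat.cast_nonneg _
      have p2 : (0:ℝ) ≤ (d n₂ : ℝ) := Nat.cast_nonneg _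
      have p3 : (0:ℝ) ≤ (d n₃ : ℝ) := Nat.cast_nonneg _
      have p4 : (0:ℝ) ≤ (d n₄ : ℝ) := Nat.cast_nonneg _
      gcongr <;> positivity
    calc (d n₁ : ℝ) * d n₂ * d n₃ * d n₄ ≤ _ := this
    _ = 2^2304 * ((n₁:ℝ)^((1:ℝ)/8) * (n₂:ℝ)^((1:ℝ)/8) * (n₃:ℝ)^((1:ℝ)/8) * (n₄:ℝ)^((1:ℝ)/8)) := by
      norm_num; ring
  have step1 : (d n₁ : ℝ) * d n₂ * d n₃ * d n₄ /
      (((n₁:ℝ) * (n₂:ℝ) * (n₃:ℝ)) ^ ((3:ℝ)/4) * (n₄:ℝ) ^ ((1:ℝ)/4)) ≤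
      2^2304 * ((n₁:ℝ)^(-(5:ℝ)/8) * (n₂:ℝ)^(-(5:ℝ)/8) * (n₃:ℝ)^(-(5:ℝ)/8) * (n₄:ℝ)^(-(1:ℝ)/8)) := by
    rw [div_le_iff₀ hD]
    calc (d n₁ : ℝ) * d n₂ * d n₃ * d n₄ ≤
        2^2304 * ((n₁:ℝ)^((1:ℝ)/8) * (n₂:ℝ)^((1:ℝ)/8) * (n₃:ℝ)^((1:ℝ)/8) * (n₄:ℝ)^((1:ℝ)/8)) := hnum
    _ = 2^2304 * ((n₁:ℝ)^(-(5:ℝ)/8) * (n₂:ℝ)^(-(5:ℝ)/8) * (n₃:ℝ)^(-(5:ℝ)/8) * (n₄:ℝ)^(-(1:ℝ)/8)) *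
        (((n₁:ℝ) * (n₂:ℝ) * (n₃:ℝ)) ^ ((3:ℝ)/4) * (n₄:ℝ) ^ ((1:ℝ)/4)) := by
      rw [Real.mul_rpow (by positivity) (by positivity),
          Real.mul_rpow (by positivity) (by positivity)]
      have e1 : (n₁:ℝ)^(-(5:ℝ)/8) * (n₁:ℝ)^((3:ℝ)/4) = (n₁:ℝ)^((1:ℝ)/8) := by
        rw [← Real.rpow_add c₁]; norm_num
      have e2 : (n₂:ℝ)^(-(5:ℝ)/8) * (n₂:ℝ)^((3:ℝ)/4) = (n₂:ℝ)^((1:ℝ)/8) := by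
        rw [← Real.rpow_add c₂]; norm_num
      have e3 : (n₃:ℝ)^(-(5:ℝ)/8) * (n₃:ℝ)^((3:ℝ)/4) = (n₃:ℝ)^((1:ℝ)/8) := by
        rw [← Real.rpow_add c₃]; norm_num
      have e4 : (n₄:ℝ)^(-(1:ℝ)/8) * (n₄:ℝ)^((1:ℝ)/4) = (n₄:ℝ)^((1:ℝ)/8) := by
        rw [← Real.rpow_add c₄]; norm_num
      rw [← e1, ← e2, ← e3, ← e4]
      ring
  have ca : ∀ (a : ℕ), 1 ≤ a → ((a^2*m : ℕ):ℝ) = ((a:ℝ))^2 * (m:ℝ) := by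
    intro a _; push_cast; ring
  have f : ∀ (a : ℕ), 1 ≤ a → (((a^2*m : ℕ)):ℝ)^(-(5:ℝ)/8) = (a:ℝ)^(-(5:ℝ)/4) * (m:ℝ)^(-(5:ℝ)/8) := by
    intro a ha
    have ha0 : (0:ℝ) < (a:ℝ) := by exact_mod_cast ha
    rw [ca a ha, Real.mul_rpow (by positivity) (by positivity),
      ← Real.rpow_natCast ((a:ℝ)) 2, ← Real.rpow_mul (by positivity)]
    norm_num
  have f4 : ((n₄:ℕ):ℝ)^(-(1:ℝ)/8) = (a₄:ℝ)^(-(1:ℝ)/4) * (m:ℝ)^(-(1:ℝ)/8) := by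
    have ha0 : (0:ℝ) < (a₄:ℝ) := by exact_mod_cast h₄
    rw [ca a₄ h₄, Real.mul_rpow (by positivity) (by positivity),
      ← Real.rpow_natCast ((a₄:ℝ)) 2, ← Real.rpow_mul (by positivity)]
    norm_num
  have hm0 : (0:ℝ) < (m:ℝ) := by exact_mod_cast hm
  have hm2 : (m:ℝ)^(-(5:ℝ)/8) * (m:ℝ)^(-(5:ℝ)/8) * (m:ℝ)^(-(5:ℝ)/8) * (m:ℝ)^(-(1:ℝ)/8)
      = (m:ℝ)^(-(2:ℝ)) := by
    rw [← Real.rpow_add hm0, ← Real.rpow_add hm0, ← Real.rpow_add hm0]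
    norm_num
  have ha₄1 : (a₄:ℝ)^(-(1:ℝ)/4) ≤ 1 :=
    Real.rpow_le_one_of_one_le_of_nonpos (by exact_mod_cast h₄) (by norm_num)
  calc (d n₁ : ℝ) * d n₂ * d n₃ * d n₄ /
      (((n₁:ℝ) * (n₂:ℝ) * (n₃:ℝ)) ^ ((3:ℝ)/4) * (n₄:ℝ) ^ ((1:ℝ)/4))
      ≤ 2^2304 * ((n₁:ℝ)^(-(5:ℝ)/8) * (n₂:ℝ)^(-(5:ℝ)/8) * (n₃:ℝ)^(-(5:ℝ)/8) * (n₄:ℝ)^(-(1:ℝ)/8)) := step1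
    _ = 2^2304 * ((a₁:ℝ)^(-(5:ℝ)/4) * (a₂:ℝ)^(-(5:ℝ)/4) * (a₃:ℝ)^(-(5:ℝ)/4) * (a₄:ℝ)^(-(1:ℝ)/4))
        * (m:ℝ)^(-(2:ℝ)) := by
      rw [show ((n₁:ℕ):ℝ) = (((a₁^2*m : ℕ)):ℝ) from rfl, f a₁ h₁,
          show ((n₂:ℕ):ℝ) = (((a₂^2*m : ℕ)):ℝ) from rfl, f a₂ h₂,
          show ((n₃:ℕ):ℝ) = (((a₃^2*m : ℕ)):ℝ) from rfl, f a₃ h₃, f4, ← hm2]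
      ring
    _ ≤ 2^2304 * ((a₁:ℝ)^(-(5:ℝ)/4) * (a₂:ℝ)^(-(5:ℝ)/4) * (a₃:ℝ)^(-(5:ℝ)/4) * 1)
        * (m:ℝ)^(-(2:ℝ)) := by
      gcongr
    _ = 2^2304 * (m:ℝ)^(-(2:ℝ)) * (a₁:ℝ)^(-(5:ℝ)/4) * (a₂:ℝ)^(-(5:ℝ)/4) * (a₃:ℝ)^(-(5:ℝ)/4) := by
      ring

def Pred (p w : ℕ×ℕ×ℕ×ℕ) : Prop :=
  1 ≤ w.1 ∧ 1 ≤ w.2.1 ∧ 1 ≤ w.2.2.1 ∧ 1 ≤ w.2.2.2 ∧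
  p.1 = w.2.1^2*w.1 ∧ p.2.1 = w.2.2.1^2*w.1 ∧ p.2.2.1 = w.2.2.2^2*w.1 ∧
  p.2.2.2 = (w.2.1+w.2.2.1+w.2.2.2)^2*w.1

lemma le_sq_mul (a m : ℕ) (ha : 1 ≤ a) (hm : 1 ≤ m) : a ≤ a^2*m :=
  calc a ≤ a^2 := Nat.le_self_pow two_ne_zero a
  _ ≤ a^2*m := Nat.le_mul_of_pos_right _ hm

lemma le_sq_mul' (a m : ℕ) (ha : 1 ≤ a) (hm : 1 ≤ m) : m ≤ a^2*m :=
  Nat.le_mul_of_pos_left m (by positivity)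

open Classical in
noncomputable def idx (p : ℕ×ℕ×ℕ×ℕ) : ℕ×ℕ×ℕ×ℕ :=
  if h : ∃ w, Pred p w then h.choose else p

lemma idx_spec {p : ℕ×ℕ×ℕ×ℕ} (h : ∃ w, Pred p w) : Pred p (idx p) := by
  classical
  rw [idx]
  rw [dif_pos h]
  exact h.choose_spec

lemma pred_unique {p q w : ℕ×ℕ×ℕ×ℕ} (hp : Pred p w) (hq : Pred q w) : p = q := by
  obtain ⟨-, -, -, -, e1, e2, e3, e4⟩ := hp
  obtain ⟨-, -, -, -, f1, f2, f3, f4⟩ := hq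
  refine Prod.ext (e1.trans f1.symm) (Prod.ext (e2.trans f2.symm)
    (Prod.ext (e3.trans f3.symm) (e4.trans f4.symm)))

noncomputable def G (w : ℕ×ℕ×ℕ×ℕ) : ℝ :=
  2^2304 * (w.1:ℝ)^(-(2:ℝ)) * (w.2.1:ℝ)^(-(5:ℝ)/4) * (w.2.2.1:ℝ)^(-(5:ℝ)/4) *
    (w.2.2.2:ℝ)^(-(5:ℝ)/4)

lemma G_nonneg (w : ℕ×ℕ×ℕ×ℕ) : 0 ≤ G w := by
  unfold G; positivity

theorem stmt10 :
    ∃ C : ℝ, 0 < C ∧ ∀ z : ℝ, 10 ≤ z →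
      (∑ n₁ ∈ Finset.Icc 1 ⌊z⌋₊, ∑ n₂ ∈ Finset.Icc 1 ⌊z⌋₊,
       ∑ n₃ ∈ Finset.Icc 1 ⌊z⌋₊, ∑ n₄ ∈ Finset.Icc 1 ⌊z⌋₊,
        if Real.sqrt n₁ + Real.sqrt n₂ + Real.sqrt n₃ = Real.sqrt n₄ then
          (d n₁ : ℝ) * d n₂ * d n₃ * d n₄ /
            (((n₁ : ℝ) * n₂ * n₃) ^ ((3 : ℝ) / 4) * (n₄ : ℝ) ^ ((1 : ℝ) / 4))
        else 0) ≤ C := by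
  classical
  have hSsum : Summable (fun n : ℕ => (n:ℝ) ^ (-(5:ℝ)/4)) := by
    rw [show (-(5:ℝ)/4) = -(5/4) by norm_num]
    exact Real.summable_nat_rpow.mpr (by norm_num)
  have hTsum : Summable (fun n : ℕ => (n:ℝ) ^ (-(2:ℝ))) := by
    exact Real.summable_nat_rpow.mpr (by norm_num)
  set S : ℝ := ∑' n : ℕ, (n:ℝ) ^ (-(5:ℝ)/4) with hS
  set T : ℝ := ∑' n : ℕ, (n:ℝ) ^ (-(2:ℝ)) with hT
  have hS0 : 0 ≤ S := tsum_nonneg (fun n => Real.rpow_nonneg (Nat.cast_nonneg n) _)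
  have hT0 : 0 ≤ T := tsum_nonneg (fun n => Real.rpow_nonneg (Nat.cast_nonneg n) _)
  refine ⟨2^2304 * T * S^3 + 1, by positivity, ?_⟩
  intro z hz
  set Z := ⌊z⌋₊ with hZ
  set A : Finset ℕ := Finset.Icc 1 Z with hA
  set F : ℕ×ℕ×ℕ×ℕ → ℝ := fun p =>
    if Real.sqrt p.1 + Real.sqrt p.2.1 + Real.sqrt p.2.2.1 = Real.sqrt p.2.2.2 then
      (d p.1 : ℝ) * d p.2.1 * d p.2.2.1 * d p.2.2.2 /
        (((p.1 : ℝ) * p.2.1 * p.2.2.1) ^ ((3 : ℝ) / 4) * (p.2.2.2 : ℝ) ^ ((1 : ℝ) / 4))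
    else 0 with hF
  set P : Finset (ℕ×ℕ×ℕ×ℕ) := A ×ˢ A ×ˢ A ×ˢ A with hP
  have hconv : (∑ n₁ ∈ A, ∑ n₂ ∈ A, ∑ n₃ ∈ A, ∑ n₄ ∈ A,
      if Real.sqrt n₁ + Real.sqrt n₂ + Real.sqrt n₃ = Real.sqrt n₄ then
        (d n₁ : ℝ) * d n₂ * d n₃ * d n₄ /
          (((n₁ : ℝ) * n₂ * n₃) ^ ((3 : ℝ) / 4) * (n₄ : ℝ) ^ ((1 : ℝ) / 4))
      else 0) = ∑ p ∈ P, F p := by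
    rw [hP]
    simp only [Finset.sum_product, hF]
  rw [hconv]
  -- filter step
  set Q : Finset (ℕ×ℕ×ℕ×ℕ) := P.filter (fun p =>
    Real.sqrt p.1 + Real.sqrt p.2.1 + Real.sqrt p.2.2.1 = Real.sqrt p.2.2.2) with hQ
  have hfil : ∑ p ∈ P, F p = ∑ p ∈ Q, F p := by
    rw [hQ]
    refine (Finset.sum_filter_of_ne ?_).symm
    intro x hx hne
    by_contra hc
    simp only [hF, if_neg hc] at hne
    exact hne rfl
  rw [hfil]
  -- membership facts
  have hQmem : ∀ p ∈ Q, p ∈ P ∧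
      Real.sqrt p.1 + Real.sqrt p.2.1 + Real.sqrt p.2.2.1 = Real.sqrt p.2.2.2 := by
    intro p hp
    rw [hQ, Finset.mem_filter] at hp
    exact ⟨hp.1, hp.2⟩
  have hPmem : ∀ p : ℕ×ℕ×ℕ×ℕ, p ∈ P ↔ (p.1 ∈ A ∧ p.2.1 ∈ A ∧ p.2.2.1 ∈ A ∧ p.2.2.2 ∈ A) := by
    intro p
    rw [hP]
    simp [Finset.mem_product]
  have hex : ∀ p ∈ Q, ∃ w, Pred p w := by
    intro p hp
    obtain ⟨hpP, heq⟩ := hQmem p hp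
    rw [hPmem] at hpP
    obtain ⟨h1, h2, h3, h4⟩ := hpP
    rw [hA, Finset.mem_Icc] at h1 h2 h3 h4
    obtain ⟨m, a₁, a₂, a₃, hm, ha₁, ha₂, ha₃, e1, e2, e3, e4⟩ :=
      structure_lemma p.1 p.2.1 p.2.2.1 p.2.2.2 h1.1 h2.1 h3.1 heq
    exact ⟨(m, a₁, a₂, a₃), hm, ha₁, ha₂, ha₃, e1, e2, e3, e4⟩
  -- pointwise bound
  have hpoint : ∀ p ∈ Q, F p ≤ G (idx p) := by
    intro p hp
    obtain ⟨hpP, heq⟩ := hQmem p hp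
    have hpred := idx_spec (hex p hp)
    obtain ⟨hm, ha₁, ha₂, ha₃, e1, e2, e3, e4⟩ := hpred
    have : F p = (d p.1 : ℝ) * d p.2.1 * d p.2.2.1 * d p.2.2.2 /
        (((p.1 : ℝ) * p.2.1 * p.2.2.1) ^ ((3 : ℝ) / 4) * (p.2.2.2 : ℝ) ^ ((1 : ℝ) / 4)) := by
      rw [hF]; exact if_pos heq
    rw [this, e1, e2, e3, e4]
    exact term_bound _ _ _ _ hm ha₁ ha₂ ha₃
  have step1 : ∑ p ∈ Q, F p ≤ ∑ p ∈ Q, G (idx p) := Finset.sum_le_sum hpoint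
  -- reindex
  have hinj : ∀ x ∈ Q, ∀ y ∈ Q, idx x = idx y → x = y := by
    intro x hx y hy hxy
    have px := idx_spec (hex x hx)
    have py := idx_spec (hex y hy)
    rw [hxy] at px
    exact pred_unique px py
  have step2 : ∑ p ∈ Q, G (idx p) = ∑ w ∈ Q.image idx, G w := (Finset.sum_image hinj).symm
  have hsub : Q.image idx ⊆ P := by
    intro w hw
    rw [Finset.mem_image] at hw
    obtain ⟨p, hp, rfl⟩ := hw
    obtain ⟨hpP, -⟩ := hQmem p hp
    rw [hPmem] at hpP ⊢
    obtain ⟨h1, h2, h3, h4⟩ := hpP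
    rw [hA, Finset.mem_Icc] at h1 h2 h3 h4 ⊢
    rw [Finset.mem_Icc, Finset.mem_Icc, Finset.mem_Icc]
    obtain ⟨hm, ha₁, ha₂, ha₃, e1, e2, e3, e4⟩ := idx_spec (hex p hp)
    refine ⟨⟨hm, ?_⟩, ⟨ha₁, ?_⟩, ⟨ha₂, ?_⟩, ⟨ha₃, ?_⟩⟩
    · calc (idx p).1 ≤ (idx p).2.1^2 * (idx p).1 := le_sq_mul' _ _ ha₁ hm
      _ = p.1 := e1.symm
      _ ≤ Z := h1.2
    · calc (idx p).2.1 ≤ (idx p).2.1^2 * (idx p).1 := le_sq_mul _ _ ha₁ hm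
      _ = p.1 := e1.symm
      _ ≤ Z := h1.2
    · calc (idx p).2.2.1 ≤ (idx p).2.2.1^2 * (idx p).1 := le_sq_mul _ _ ha₂ hm
      _ = p.2.1 := e2.symm
      _ ≤ Z := h2.2
    · calc (idx p).2.2.2 ≤ (idx p).2.2.2^2 * (idx p).1 := le_sq_mul _ _ ha₃ hm
      _ = p.2.2.1 := e3.symm
      _ ≤ Z := h3.2
  have step3 : ∑ w ∈ Q.image idx, G w ≤ ∑ w ∈ P, G w :=
    Finset.sum_le_sum_of_subset_of_nonneg hsub (fun w _ _ => G_nonneg w)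
  -- factor the product sum
  have hSA : ∑ a ∈ A, (a:ℝ)^(-(5:ℝ)/4) ≤ S :=
    Summable.sum_le_tsum A (fun i _ => Real.rpow_nonneg (Nat.cast_nonneg i) _) hSsum
  have hTA : ∑ m ∈ A, (m:ℝ)^(-(2:ℝ)) ≤ T :=
    Summable.sum_le_tsum A (fun i _ => Real.rpow_nonneg (Nat.cast_nonneg i) _) hTsum
  have hSA0 : 0 ≤ ∑ a ∈ A, (a:ℝ)^(-(5:ℝ)/4) :=
    Finset.sum_nonneg (fun i _ => Real.rpow_nonneg (Nat.cast_nonneg i) _)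
  have hTA0 : 0 ≤ ∑ m ∈ A, (m:ℝ)^(-(2:ℝ)) :=
    Finset.sum_nonneg (fun i _ => Real.rpow_nonneg (Nat.cast_nonneg i) _)
  have hfact : ∑ w ∈ P, G w = 2^2304 * (∑ m ∈ A, (m:ℝ)^(-(2:ℝ))) *
      (∑ a ∈ A, (a:ℝ)^(-(5:ℝ)/4))^3 := by
    rw [hP]
    simp only [Finset.sum_product, G]
    simp only [← Finset.sum_mul, ← Finset.mul_sum]
    ring
  have hK0 : (0:ℝ) ≤ 2^2304 := by positivity
  have step4 : ∑ w ∈ P, G w ≤ 2^2304 * T * S^3 := by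
    rw [hfact]
    have m1 : (2:ℝ)^2304 * (∑ m ∈ A, (m:ℝ)^(-(2:ℝ))) ≤ 2^2304 * T :=
      mul_le_mul_of_nonneg_left hTA hK0
    have m2 : (∑ a ∈ A, (a:ℝ)^(-(5:ℝ)/4))^3 ≤ S^3 := by
      exact pow_le_pow_left₀ hSA0 hSA 3
    exact mul_le_mul m1 m2 (pow_nonneg hSA0 3) (mul_nonneg hK0 hT0)
  calc ∑ p ∈ Q, F p ≤ ∑ p ∈ Q, G (idx p) := step1
  _ = ∑ w ∈ Q.image idx, G w := step2
  _ ≤ ∑ w ∈ P, G w := step3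
  _ ≤ 2^2304 * T * S^3 := step4
  _ ≤ 2^2304 * T * S^3 + 1 := by linarith
end

section
/- If positive integers n_1, n_2, n_3, n_4 satisfy √n_1 + √n_2 + √n_3 = √n_4, then there exist a squarefree positive integer l and positive integers m_1, m_2, m_3, m_4 with m_1 + m_2 + m_3 = m_4 such that n_j = l·m_j² for j = 1, 2, 3, 4. -/
open Real

-- squarefree a, squarefree b, a*b square → a = b
lemma sqfree_eq_of_isSquare {a b : ℕ} (ha : Squarefree a) (hb : Squarefree b)
    (h : IsSquare (a * b)) : a = b := by
  have ha0 : a ≠ 0 := ha.ne_zero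
  have hb0 : b ≠ 0 := hb.ne_zero
  apply Nat.eq_of_factorization_eq ha0 hb0
  intro p
  obtain ⟨k, hk⟩ := h
  have hk0 : k ≠ 0 := by rintro rfl; simp at hk; tauto
  have hfa := (Nat.squarefree_iff_factorization_le_one ha0).mp ha p
  have hfb := (Nat.squarefree_iff_factorization_le_one hb0).mp hb p
  have hsum : a.factorization p + b.factorization p = 2 * k.factorization p := by
    have := congrArg (fun n => n.factorization p) hk
    simpa [Nat.factorization_mul ha0 hb0, Nat.factorization_mul hk0 hk0, two_mul] using this
  omega

-- key analytic lemma
lemma key_isSquare {a b c d : ℕ} (ha : 0 < a) (hb : 0 < b) (hc : 0 < c) (hd : 0 < d)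
    (h : √a + √b + √c = √d) : IsSquare (a * b) ∧ IsSquare (c * d) := by
  have sa : √(a:ℝ) ^ 2 = a := Real.sq_sqrt (by positivity)
  have sb : √(b:ℝ) ^ 2 = b := Real.sq_sqrt (by positivity)
  have sc : √(c:ℝ) ^ 2 = c := Real.sq_sqrt (by positivity)
  have sd : √(d:ℝ) ^ 2 = d := Real.sq_sqrt (by positivity)
  have pa : 0 < √(a:ℝ) := Real.sqrt_pos.mpr (by positivity)
  have pb : 0 < √(b:ℝ) := Real.sqrt_pos.mpr (by positivity)
  have pc : 0 < √(c:ℝ) := Real.sqrt_pos.mpr (by positivity)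
  have pd : 0 < √(d:ℝ) := Real.sqrt_pos.mpr (by positivity)
  set x := √(a:ℝ) * √(b:ℝ) with hxdef
  set y := √(c:ℝ) * √(d:ℝ) with hydef
  have hx2 : x ^ 2 = (a:ℝ) * b := by rw [hxdef, mul_pow, sa, sb]
  have hy2 : y ^ 2 = (c:ℝ) * d := by rw [hydef, mul_pow, sc, sd]
  have hxpos : 0 < x := by positivity
  have hypos : 0 < y := by positivity
  have h' : √(a:ℝ) + √b = √d - √c := by linarith
  have e : (√(a:ℝ) + √b) ^ 2 = (√(d:ℝ) - √c) ^ 2 := by rw [h']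
  have e1 : (a:ℝ) + b + 2 * x = (d:ℝ) + c - 2 * y := by
    rw [hxdef, hydef]; linear_combination e - sa - sb + sc + sd
  set q : ℚ := ((c:ℚ) + d - a - b) / 2 with hqdef
  have hQ : (q:ℝ) = x + y := by rw [hqdef]; push_cast; linarith
  have hq0 : (q:ℝ) ≠ 0 := by rw [hQ]; positivity
  have hq0' : q ≠ 0 := by exact_mod_cast fun hh => hq0 (by rw [hh]; simp)
  have k1 : 2 * (q:ℝ) * x = (q:ℝ) ^ 2 + (a:ℝ) * b - (c:ℝ) * d := by
    have hy' : y = (q:ℝ) - x := by linarith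
    rw [hy'] at hy2
    linear_combination hx2 - hy2
  set r : ℚ := (q ^ 2 + (a:ℚ) * b - (c:ℚ) * d) / (2 * q) with hrdef
  have hr : (r:ℝ) = x := by
    rw [hrdef]; push_cast
    field_simp
    linarith [k1]
  have hr' : ((q - r : ℚ):ℝ) = y := by push_cast; rw [hr] at *; linarith
  constructor
  · by_contra hs
    have hirr : Irrational (√((a*b : ℕ):ℝ)) := irrational_sqrt_natCast_iff.mpr hs
    have : √((a*b : ℕ):ℝ) = x := by
      push_cast; rw [hxdef, ← Real.sqrt_mul (by positivity)]
    rw [this, ← hr] at hirr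
    exact r.not_irrational hirr
  · by_contra hs
    have hirr : Irrational (√((c*d : ℕ):ℝ)) := irrational_sqrt_natCast_iff.mpr hs
    have : √((c*d : ℕ):ℝ) = y := by
      push_cast; rw [hydef, ← Real.sqrt_mul (by positivity)]
    rw [this, ← hr'] at hirr
    exact (q - r).not_irrational hirr

lemma isSquare_of_sq_mul {m t : ℕ} (hm : m ≠ 0) (h : IsSquare (m ^ 2 * t)) : IsSquare t := by
  obtain ⟨k, hk⟩ := h
  have hdvd : m ∣ k := by
    have : m ^ 2 ∣ k ^ 2 := ⟨t, by rw [sq]; linarith [hk]⟩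
    exact (Nat.pow_dvd_pow_iff two_ne_zero).mp this
  obtain ⟨j, rfl⟩ := hdvd
  refine ⟨j, Nat.eq_of_mul_eq_mul_left (n := m ^ 2) (by positivity) ?_⟩
  calc m ^ 2 * t = m * j * (m * j) := hk
    _ = m ^ 2 * (j * j) := by ring

theorem stmt12 (n₁ n₂ n₃ n₄ : ℕ) (h₁ : 0 < n₁) (h₂ : 0 < n₂) (h₃ : 0 < n₃) (h₄ : 0 < n₄)
    (h : Real.sqrt n₁ + Real.sqrt n₂ + Real.sqrt n₃ = Real.sqrt n₄) :
    ∃ (l m₁ m₂ m₃ m₄ : ℕ), Squarefree l ∧ 0 < m₁ ∧ 0 < m₂ ∧ 0 < m₃ ∧ 0 < m₄ ∧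
      m₁ + m₂ + m₃ = m₄ ∧
      n₁ = l * m₁ ^ 2 ∧ n₂ = l * m₂ ^ 2 ∧ n₃ = l * m₃ ^ 2 ∧ n₄ = l * m₄ ^ 2 := by
  obtain ⟨l₁, m₁, hl₁, hm₁, he₁, hs₁⟩ := Nat.sq_mul_squarefree_of_pos h₁
  obtain ⟨l₂, m₂, hl₂, hm₂, he₂, hs₂⟩ := Nat.sq_mul_squarefree_of_pos h₂
  obtain ⟨l₃, m₃, hl₃, hm₃, he₃, hs₃⟩ := Nat.sq_mul_squarefree_of_pos h₃
  obtain ⟨l₄, m₄, hl₄, hm₄, he₄, hs₄⟩ := Nat.sq_mul_squarefree_of_pos h₄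
  -- squarefree parts are pairwise equal
  obtain ⟨hsq12, hsq34⟩ := key_isSquare h₁ h₂ h₃ h₄ h
  have h' : √(n₁:ℝ) + √n₃ + √n₂ = √n₄ := by linarith
  obtain ⟨hsq13, -⟩ := key_isSquare h₁ h₃ h₂ h₄ h'
  have eq12 : l₁ = l₂ := by
    apply sqfree_eq_of_isSquare hs₁ hs₂
    apply isSquare_of_sq_mul (m := m₁ * m₂) (by positivity)
    have : (m₁ * m₂) ^ 2 * (l₁ * l₂) = n₁ * n₂ := by rw [← he₁, ← he₂]; ring
    rwa [this]
  have eq13 : l₁ = l₃ := by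
    apply sqfree_eq_of_isSquare hs₁ hs₃
    apply isSquare_of_sq_mul (m := m₁ * m₃) (by positivity)
    have : (m₁ * m₃) ^ 2 * (l₁ * l₃) = n₁ * n₃ := by rw [← he₁, ← he₃]; ring
    rwa [this]
  have eq34 : l₃ = l₄ := by
    apply sqfree_eq_of_isSquare hs₃ hs₄
    apply isSquare_of_sq_mul (m := m₃ * m₄) (by positivity)
    have : (m₃ * m₄) ^ 2 * (l₃ * l₄) = n₃ * n₄ := by rw [← he₃, ← he₄]; ring
    rwa [this]
  subst eq12 eq13 eq34
  -- now n_j = m_j ^ 2 * l₁ for all j; derive the sum equation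
  have sqrt_eq : ∀ (m : ℕ), √(((m ^ 2 * l₁ : ℕ)):ℝ) = m * √l₁ := by
    intro m
    push_cast
    rw [Real.sqrt_mul (by positivity), Real.sqrt_sq (by positivity)]
  rw [← he₁, ← he₂, ← he₃, ← he₄, sqrt_eq, sqrt_eq, sqrt_eq, sqrt_eq] at h
  have hlpos : (0:ℝ) < √l₁ := Real.sqrt_pos.mpr (by positivity)
  have hsum : (m₁:ℝ) + m₂ + m₃ = m₄ := by
    have := mul_right_cancel₀ (ne_of_gt hlpos) (by linarith [h] : ((m₁:ℝ) + m₂ + m₃) * √l₁ = (m₄:ℝ) * √l₁)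
    linarith
  have hsumn : m₁ + m₂ + m₃ = m₄ := by exact_mod_cast hsum
  exact ⟨l₁, m₁, m₂, m₃, m₄, hs₁, hm₁, hm₂, hm₃, hm₄, hsumn,
    by rw [← he₁]; ring, by rw [← he₂]; ring, by rw [← he₃]; ring, by rw [← he₄]; ring⟩
end

section
/- If positive integers n_1, n_2, n_3, n_4 satisfy √n_1 + √n_2 = √n_3 + √n_4 and n_1 ≠ n_3 and n_1 ≠ n_4, then there exist a squarefree positive integer l and positive integers m_1, m_2, m_3, m_4 with m_1 + m_2 = m_3 + m_4 such that n_j = l·m_j² for j = 1, 2, 3, 4. -/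
lemma sqfree_aux {l l' a a' : ℕ} (hl : Squarefree l) (hl' : Squarefree l')
    (ha : a ≠ 0) (ha' : a' ≠ 0) (h : l * a ^ 2 = l' * a' ^ 2) : l = l' ∧ a = a' := by
  have hl0 : l ≠ 0 := hl.ne_zero
  have hl'0 : l' ≠ 0 := hl'.ne_zero
  have hll' : l = l' := by
    refine Nat.eq_of_factorization_eq hl0 hl'0 fun p => ?_
    have := congrArg (fun n => n.factorization p) h
    simp only [Nat.factorization_mul hl0 (pow_ne_zero 2 ha),
      Nat.factorization_mul hl'0 (pow_ne_zero 2 ha'),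
      Nat.factorization_pow, Finsupp.add_apply, Finsupp.smul_apply, smul_eq_mul] at this
    have h1 : l.factorization p ≤ 1 := hl.natFactorization_le_one p
    have h2 : l'.factorization p ≤ 1 := hl'.natFactorization_le_one p
    omega
  subst hll'
  have : a ^ 2 = a' ^ 2 := Nat.eq_of_mul_eq_mul_left (Nat.pos_of_ne_zero hl0) h
  exact ⟨rfl, Nat.pow_left_injective (by norm_num) this⟩

theorem stmt13 (n₁ n₂ n₃ n₄ : ℕ) (h₁ : 0 < n₁) (h₂ : 0 < n₂) (h₃ : 0 < n₃) (h₄ : 0 < n₄)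
    (h : Real.sqrt n₁ + Real.sqrt n₂ = Real.sqrt n₃ + Real.sqrt n₄)
    (h13 : n₁ ≠ n₃) (h14 : n₁ ≠ n₄) :
    ∃ (l m₁ m₂ m₃ m₄ : ℕ), Squarefree l ∧ 0 < m₁ ∧ 0 < m₂ ∧ 0 < m₃ ∧ 0 < m₄ ∧
      m₁ + m₂ = m₃ + m₄ ∧
      n₁ = l * m₁ ^ 2 ∧ n₂ = l * m₂ ^ 2 ∧ n₃ = l * m₃ ^ 2 ∧ n₄ = l * m₄ ^ 2 := by
  have q₁ : Real.sqrt n₁ ^ 2 = (n₁ : ℝ) := Real.sq_sqrt (Nat.cast_nonneg _)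
  have q₂ : Real.sqrt n₂ ^ 2 = (n₂ : ℝ) := Real.sq_sqrt (Nat.cast_nonneg _)
  have q₃ : Real.sqrt n₃ ^ 2 = (n₃ : ℝ) := Real.sq_sqrt (Nat.cast_nonneg _)
  have q₄ : Real.sqrt n₄ ^ 2 = (n₄ : ℝ) := Real.sq_sqrt (Nat.cast_nonneg _)
  have p12 : Real.sqrt n₁ * Real.sqrt n₂ = Real.sqrt ((n₁ * n₂ : ℕ) : ℝ) := by
    push_cast
    rw [Real.sqrt_mul (Nat.cast_nonneg _)]
  have p34 : Real.sqrt n₃ * Real.sqrt n₄ = Real.sqrt ((n₃ * n₄ : ℕ) : ℝ) := by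
    push_cast
    rw [Real.sqrt_mul (Nat.cast_nonneg _)]
  have e : (Real.sqrt n₁ + Real.sqrt n₂) ^ 2 = (Real.sqrt n₃ + Real.sqrt n₄) ^ 2 := by rw [h]
  have key : (n₁ : ℝ) + n₂ + 2 * Real.sqrt ((n₁ * n₂ : ℕ) : ℝ)
      = (n₃ : ℝ) + n₄ + 2 * Real.sqrt ((n₃ * n₄ : ℕ) : ℝ) := by
    linear_combination e - q₁ - q₂ + q₃ + q₄ - 2 * p12 + 2 * p34
  have hq12 : Real.sqrt ((n₁ * n₂ : ℕ) : ℝ) ^ 2 = ((n₁ * n₂ : ℕ) : ℝ) :=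
    Real.sq_sqrt (Nat.cast_nonneg _)
  have hq34 : Real.sqrt ((n₃ * n₄ : ℕ) : ℝ) ^ 2 = ((n₃ * n₄ : ℕ) : ℝ) :=
    Real.sq_sqrt (Nat.cast_nonneg _)
  rcases em (IsSquare (n₁ * n₂)) with hsq | hns
  · -- main case
    obtain ⟨k, hk⟩ := id hsq
    have hk0 : k ≠ 0 := by
      rintro rfl
      simp only [mul_zero] at hk
      rcases Nat.mul_eq_zero.mp hk with h0 | h0 <;> omega
    have h12r : Real.sqrt ((n₁ * n₂ : ℕ) : ℝ) = (k : ℝ) := by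
      have : ((n₁ * n₂ : ℕ) : ℝ) = (k : ℝ) * k := by rw [hk]; push_cast; ring
      rw [this, Real.sqrt_mul_self (Nat.cast_nonneg k)]
    have hsq34 : IsSquare (n₃ * n₄) := by
      by_contra hns34
      have irr := irrational_sqrt_natCast_iff.mpr hns34
      refine irr ⟨(k : ℚ) + ((n₁ : ℚ) + n₂ - n₃ - n₄) / 2, ?_⟩
      push_cast at key h12r ⊢
      linarith [key, h12r]
    obtain ⟨k', hk'⟩ := hsq34
    have hk'0 : k' ≠ 0 := by
      rintro rfl
      simp only [mul_zero] at hk'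
      rcases Nat.mul_eq_zero.mp hk' with h0 | h0 <;> omega
    obtain ⟨l₁, m₁, hl₁, hm₁, he₁, hs₁⟩ := Nat.sq_mul_squarefree_of_pos h₁
    obtain ⟨l₂, m₂, hl₂, hm₂, he₂, hs₂⟩ := Nat.sq_mul_squarefree_of_pos h₂
    obtain ⟨l₃, m₃, hl₃, hm₃, he₃, hs₃⟩ := Nat.sq_mul_squarefree_of_pos h₃
    obtain ⟨l₄, m₄, hl₄, hm₄, he₄, hs₄⟩ := Nat.sq_mul_squarefree_of_pos h₄
    have h12 : l₁ = l₂ := by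
      refine (sqfree_aux (a := l₂ * m₁ * m₂) hs₁ hs₂ ?_ hk0 ?_).1
      · positivity
      · zify
        zify at hk he₁ he₂
        linear_combination (l₂ : ℤ) * hk + (l₂ : ℤ) * n₂ * he₁ + (l₂ : ℤ) * m₁ ^ 2 * l₁ * he₂
    have h34 : l₃ = l₄ := by
      refine (sqfree_aux (a := l₄ * m₃ * m₄) hs₃ hs₄ ?_ hk'0 ?_).1
      · positivity
      · zify
        zify at hk' he₃ he₄
        linear_combination (l₄ : ℤ) * hk' + (l₄ : ℤ) * n₄ * he₃ + (l₄ : ℤ) * m₃ ^ 2 * l₃ * he₄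
    subst h12 h34
    -- rewrite h in terms of sqrt l₁, sqrt l₃
    have r₁ : Real.sqrt n₁ = (m₁ : ℝ) * Real.sqrt l₁ := by
      rw [← he₁]; push_cast
      rw [Real.sqrt_mul (by positivity), Real.sqrt_sq (by positivity)]
    have r₂ : Real.sqrt n₂ = (m₂ : ℝ) * Real.sqrt l₁ := by
      rw [← he₂]; push_cast
      rw [Real.sqrt_mul (by positivity), Real.sqrt_sq (by positivity)]
    have r₃ : Real.sqrt n₃ = (m₃ : ℝ) * Real.sqrt l₃ := by
      rw [← he₃]; push_cast
      rw [Real.sqrt_mul (by positivity), Real.sqrt_sq (by positivity)]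
    have r₄ : Real.sqrt n₄ = (m₄ : ℝ) * Real.sqrt l₃ := by
      rw [← he₄]; push_cast
      rw [Real.sqrt_mul (by positivity), Real.sqrt_sq (by positivity)]
    have hl₁r : Real.sqrt l₁ ^ 2 = (l₁ : ℝ) := Real.sq_sqrt (Nat.cast_nonneg _)
    have hl₃r : Real.sqrt l₃ ^ 2 = (l₃ : ℝ) := Real.sq_sqrt (Nat.cast_nonneg _)
    have hsum : ((m₁ + m₂ : ℕ) : ℝ) * Real.sqrt l₁ = ((m₃ + m₄ : ℕ) : ℝ) * Real.sqrt l₃ := by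
      push_cast
      rw [r₁, r₂, r₃, r₄] at h
      linarith [h]
    have hfin : l₁ * (m₁ + m₂) ^ 2 = l₃ * (m₃ + m₄) ^ 2 := by
      have := congrArg (· ^ 2) hsum
      simp only [mul_pow] at this
      rw [hl₁r, hl₃r] at this
      have : ((l₁ * (m₁ + m₂) ^ 2 : ℕ) : ℝ) = ((l₃ * (m₃ + m₄) ^ 2 : ℕ) : ℝ) := by
        push_cast at this ⊢
        linear_combination this
      exact_mod_cast this
    obtain ⟨hll, hmm⟩ := sqfree_aux hs₁ hs₃ (by positivity) (by positivity) hfin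
    subst hll
    exact ⟨l₁, m₁, m₂, m₃, m₄, hs₁, hm₁, hm₂, hm₃, hm₄, hmm,
      by rw [← he₁]; ring, by rw [← he₂]; ring, by rw [← he₃]; ring, by rw [← he₄]; ring⟩
  · -- impossible case: leads to contradiction with h13/h14
    exfalso
    have irr : Irrational (Real.sqrt ((n₁ * n₂ : ℕ) : ℝ)) := irrational_sqrt_natCast_iff.mpr hns
    have hsum : n₁ + n₂ = n₃ + n₄ := by
      by_contra hne
      have hr0 : ((n₁ : ℚ) + n₂ - n₃ - n₄) ≠ 0 := by
        intro hc
        exact hne (by exact_mod_cast (by linarith : (n₁ : ℚ) + n₂ = (n₃ : ℚ) + n₄))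
      have hr0' : ((n₁ : ℝ) + n₂ - n₃ - n₄) ≠ 0 := by
        have := (Rat.cast_ne_zero (α := ℝ)).mpr hr0
        push_cast at this
        exact this
      refine irr ⟨(4 * (n₃ : ℚ) * n₄ - 4 * n₁ * n₂ - ((n₁ : ℚ) + n₂ - n₃ - n₄) ^ 2)
          / (4 * ((n₁ : ℚ) + n₂ - n₃ - n₄)), ?_⟩
      have h34 : Real.sqrt ((n₃ * n₄ : ℕ) : ℝ)
          = Real.sqrt ((n₁ * n₂ : ℕ) : ℝ) + ((n₁ : ℝ) + n₂ - n₃ - n₄) / 2 := by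
        linarith [key]
      rw [h34] at hq34
      push_cast
      rw [div_eq_iff (by positivity : (4 : ℝ) * ((n₁ : ℝ) + n₂ - n₃ - n₄) ≠ 0)]
      push_cast at hq12 hq34
      linear_combination 4 * hq12 - 4 * hq34
    have hprod : n₁ * n₂ = n₃ * n₄ := by
      have hs' : (n₁ : ℝ) + n₂ = (n₃ : ℝ) + n₄ := by exact_mod_cast hsum
      have h12 : Real.sqrt ((n₁ * n₂ : ℕ) : ℝ) = Real.sqrt ((n₃ * n₄ : ℕ) : ℝ) := by
        linarith [key]
      have : ((n₁ * n₂ : ℕ) : ℝ) = ((n₃ * n₄ : ℕ) : ℝ) := by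
        rw [← hq12, ← hq34, h12]
      exact_mod_cast this
    have hz : ((n₁ : ℤ) - n₃) * ((n₁ : ℤ) - n₄) = 0 := by
      have e1 : (n₁ : ℤ) + n₂ = n₃ + n₄ := by exact_mod_cast hsum
      have e2 : (n₁ : ℤ) * n₂ = n₃ * n₄ := by exact_mod_cast hprod
      linear_combination (n₁ : ℤ) * e1 - e2
    rcases mul_eq_zero.mp hz with hc | hc
    · exact h13 (by exact_mod_cast sub_eq_zero.mp hc)
    · exact h14 (by exact_mod_cast sub_eq_zero.mp hc)
end

section
/- Square roots of distinct squarefree positive integers are linearly independent over the rational numbers: if l_1 < l_2 < ... < l_k are distinct squarefree positive integers and q_1, ..., q_k are rationals with q_1√l_1 + ... + q_k√l_k = 0, then q_1 = ... = q_k = 0. -/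
open Finset

namespace SqrtAux

/-- squarefree numbers all of whose prime factors lie in `S` -/
def DD (S : Finset ℕ) : Set ℕ :=
  {d | Squarefree d ∧ ∀ q : ℕ, q.Prime → q ∣ d → q ∈ S}

noncomputable def AA (S : Finset ℕ) : Subalgebra ℚ ℝ :=
  Algebra.adjoin ℚ ((fun n : ℕ => Real.sqrt n) '' ↑S)

lemma one_mem_DD (S : Finset ℕ) : 1 ∈ DD S := by
  refine ⟨squarefree_one, fun q hq hdvd => ?_⟩
  exact absurd (Nat.le_of_dvd one_pos hdvd) (by have := hq.two_le; omega)

lemma DD_mono {S S' : Finset ℕ} (h : S ⊆ S') : DD S ⊆ DD S' :=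
  fun d hd => ⟨hd.1, fun q hq hdvd => h (hd.2 q hq hdvd)⟩

lemma ratCast_mem_AA (S : Finset ℕ) (r : ℚ) : ((r : ℝ)) ∈ AA S := by
  have := (AA S).algebraMap_mem r
  rwa [eq_ratCast (algebraMap ℚ ℝ) r] at this

lemma natCast_mem_AA (S : Finset ℕ) (n : ℕ) : ((n : ℝ)) ∈ AA S := by
  have := ratCast_mem_AA S (n : ℚ)
  simpa using this

lemma sqrt_nat_integral (n : ℕ) : IsIntegral ℚ (Real.sqrt n) := by
  refine ⟨Polynomial.X ^ 2 - Polynomial.C (n : ℚ), ?_, ?_⟩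
  · apply Polynomial.monic_X_pow_sub_C _ (by norm_num)
  · simp [Polynomial.eval₂_sub, Real.sq_sqrt (by positivity : (0:ℝ) ≤ (n:ℝ))]

lemma integral_of_mem_AA {S : Finset ℕ} {x : ℝ} (hx : x ∈ AA S) : IsIntegral ℚ x := by
  have hfin : ((fun n : ℕ => Real.sqrt n) '' ↑S).Finite :=
    (S.finite_toSet).image _
  have hfg := fg_adjoin_of_finite (R := ℚ) (A := ℝ) hfin
    (fun y hy => by obtain ⟨n, -, rfl⟩ := hy; exact sqrt_nat_integral n)
  exact IsIntegral.of_mem_of_fg (AA S) hfg x hx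

lemma inv_mem_AA {S : Finset ℕ} {x : ℝ} (hx : x ∈ AA S) : x⁻¹ ∈ AA S :=
  (integral_of_mem_AA hx).inv_mem hx

lemma sqrt_mem_AA {S : Finset ℕ} : ∀ d : ℕ, d ∈ DD S → Real.sqrt d ∈ AA S := by
  intro d
  induction d using Nat.strong_induction_on with
  | _ d ih =>
    intro hd
    have hd0 : d ≠ 0 := hd.1.ne_zero
    rcases eq_or_ne d 1 with rfl | hd1
    · simpa using (AA S).one_mem
    · set m := d.minFac with hm
      have hmp : m.Prime := Nat.minFac_prime hd1
      have hmd : m ∣ d := Nat.minFac_dvd d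
      have hmS : m ∈ S := hd.2 m hmp hmd
      have hdm : d / m ∣ d := Nat.div_dvd_of_dvd hmd
      have hdm_mem : d / m ∈ DD S :=
        ⟨hd.1.squarefree_of_dvd hdm, fun q hq hdvd => hd.2 q hq (hdvd.trans hdm)⟩
      have hlt : d / m < d := Nat.div_lt_self (Nat.pos_of_ne_zero hd0) hmp.one_lt
      have hsplit : Real.sqrt d = Real.sqrt m * Real.sqrt (d / m : ℕ) := by
        rw [← Real.sqrt_mul (by positivity)]
        congr 1
        rw [← Nat.cast_mul, Nat.mul_div_cancel' hmd]
      rw [hsplit]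
      exact mul_mem (Algebra.subset_adjoin ⟨m, by simpa using hmS, rfl⟩)
        (ih _ hlt hdm_mem)

lemma decomp {S : Finset ℕ} {p : ℕ} {x : ℝ} (hx : x ∈ AA (insert p S)) :
    ∃ a ∈ AA S, ∃ b ∈ AA S, x = a + b * Real.sqrt p := by
  have hps : Real.sqrt p * Real.sqrt p = (p : ℝ) := Real.mul_self_sqrt (by positivity)
  rw [AA, coe_insert, Set.image_insert_eq] at hx
  induction hx using Algebra.adjoin_induction with
  | mem y hy =>
    rcases hy with rfl | hy
    · exact ⟨0, zero_mem _, 1, one_mem _, by ring⟩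
    · exact ⟨y, Algebra.subset_adjoin hy, 0, zero_mem _, by ring⟩
  | algebraMap r => exact ⟨algebraMap ℚ ℝ r, (AA S).algebraMap_mem r, 0, zero_mem _, by ring⟩
  | add x y hx hy ihx ihy =>
    obtain ⟨a, ha, b, hb, rfl⟩ := ihx
    obtain ⟨c, hc, e, he, rfl⟩ := ihy
    exact ⟨a + c, add_mem ha hc, b + e, add_mem hb he, by ring⟩
  | mul x y hx hy ihx ihy =>
    obtain ⟨a, ha, b, hb, rfl⟩ := ihx
    obtain ⟨c, hc, e, he, rfl⟩ := ihy
    refine ⟨a * c + b * e * (p : ℝ),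
      add_mem (mul_mem ha hc) (mul_mem (mul_mem hb he) (natCast_mem_AA S p)),
      a * e + b * c, add_mem (mul_mem ha he) (mul_mem hb hc), ?_⟩
    linear_combination b * e * hps

lemma no_rep {S : Finset ℕ} {p : ℕ} (hp : p.Prime) (hpS : p ∉ S)
    {d : ℕ} (hd : d ∈ DD S) (c : ℚ) : Real.sqrt p ≠ (c : ℝ) * Real.sqrt d := by
  intro heq
  have hd0 : d ≠ 0 := hd.1.ne_zero
  have hpd : ¬ p ∣ d := fun hdvd => hpS (hd.2 p hp hdvd)
  have hsp : (0:ℝ) < Real.sqrt p := Real.sqrt_pos.mpr (by exact_mod_cast hp.pos)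
  have hsd : (0:ℝ) < Real.sqrt d := Real.sqrt_pos.mpr
    (by exact_mod_cast Nat.pos_of_ne_zero hd0)
  have hc : (0:ℝ) < (c:ℝ) := by
    by_contra hc
    push_neg at hc
    nlinarith
  have hcQ : 0 < c := by exact_mod_cast hc
  -- square the relation
  have hsq : (p : ℝ) = (c:ℝ)^2 * (d:ℝ) := by
    have := congrArg (fun x => x * x) heq
    rw [Real.mul_self_sqrt (by positivity)] at this
    rw [this]
    rw [show (c:ℝ) * Real.sqrt d * ((c:ℝ) * Real.sqrt d)
        = (c:ℝ)^2 * (Real.sqrt d * Real.sqrt d) by ring,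
      Real.mul_self_sqrt (by positivity)]
  have hQ : (p : ℚ) = c^2 * (d:ℚ) := by exact_mod_cast hsq
  -- to naturals
  set a := c.num.toNat with ha
  have hnum : (c.num : ℚ) = (a : ℚ) := by
    rw [ha]; exact_mod_cast (Int.toNat_of_nonneg (le_of_lt (Rat.num_pos.mpr hcQ))).symm
  have ha0 : a ≠ 0 := by
    intro h0
    have h1 := Rat.num_pos.mpr hcQ
    omega
  have hcab : c = (a : ℚ) / (c.den : ℚ) := by
    rw [← hnum, Rat.num_div_den]
  have hden0 : (c.den : ℚ) ≠ 0 := by exact_mod_cast c.den_nz 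
  -- natural number equation  p * den^2 = a^2 * d
  have hNQ : ((p * c.den^2 : ℕ) : ℚ) = ((a^2 * d : ℕ) : ℚ) := by
    push_cast
    rw [hcab] at hQ
    field_simp at hQ
    linarith [hQ]
  have hN : p * c.den^2 = a^2 * d := by exact_mod_cast hNQ
  -- valuation parity
  have hden0' : c.den ≠ 0 := c.den_nz
  have h1 : (p * c.den^2).factorization p = 1 + 2 * c.den.factorization p := by
    simp [Nat.factorization_mul hp.ne_zero (pow_ne_zero 2 hden0'), Nat.factorization_pow,
      Nat.Prime.factorization_self hp, mul_comm]
  have h2 : (a^2 * d).factorization p = 2 * a.factorization p := by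
    rw [Nat.factorization_mul (pow_ne_zero 2 ha0) hd0, Nat.factorization_pow]
    simp [Nat.factorization_eq_zero_of_not_dvd hpd, mul_comm]
  rw [hN, h2] at h1
  omega



theorem rep_and_ind : ∀ S : Finset ℕ, (∀ p ∈ S, p.Prime) →
    (∀ b : ℚ, 0 < b → Real.sqrt b ∈ AA S →
        ∃ d ∈ DD S, ∃ c : ℚ, Real.sqrt b = (c : ℝ) * Real.sqrt d) ∧
    (∀ T : Finset ℕ, ↑T ⊆ DD S → ∀ f : ℕ → ℚ,
        ∑ d ∈ T, (f d : ℝ) * Real.sqrt d = 0 → ∀ d ∈ T, f d = 0) := by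
  classical
  intro S
  induction S using Finset.induction_on with
  | empty =>
    intro _
    constructor
    · intro b hb hmem
      rw [AA, coe_empty, Set.image_empty, Algebra.adjoin_empty] at hmem
      obtain ⟨r, hr⟩ := Algebra.mem_bot.mp hmem
      refine ⟨1, one_mem_DD _, r, ?_⟩
      rw [← hr, eq_ratCast]
      simp
    · intro T hT f hsum d hd
      have h1 : ∀ e ∈ T, e = 1 := by
        intro e he
        by_contra hne
        obtain ⟨r, hr, hdvd⟩ := Nat.exists_prime_and_dvd hne
        exact Finset.notMem_empty r ((hT he).2 r hr hdvd)
      have hd1 : d = 1 := h1 d hd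
      have hT1 : T = {1} := Finset.eq_singleton_iff_unique_mem.mpr ⟨hd1 ▸ hd, h1⟩
      rw [hT1] at hsum
      simp at hsum
      rw [hd1]
      exact_mod_cast hsum
  | @insert p S hpS ih =>
    intro hS
    have hp : p.Prime := hS p (mem_insert_self p S)
    have hS' : ∀ r ∈ S, r.Prime := fun r hr => hS r (mem_insert_of_mem hr)
    obtain ⟨Rep, Ind⟩ := ih hS'
    have hcast : (((p : ℚ)) : ℝ) = ((p : ℕ) : ℝ) := by push_cast; ring
    have hpnot : Real.sqrt p ∉ AA S := by
      intro hmem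
      obtain ⟨d, hd, c, hc⟩ := Rep (p : ℚ) (by exact_mod_cast hp.pos)
        (by rwa [hcast])
      rw [hcast] at hc
      exact no_rep hp hpS hd c hc
    have hps : Real.sqrt p * Real.sqrt p = (p : ℝ) := Real.mul_self_sqrt (by positivity)
    have hsp0 : (0:ℝ) < Real.sqrt p := Real.sqrt_pos.mpr (by exact_mod_cast hp.pos)
    constructor
    · -- representation
      intro b hb hmem
      obtain ⟨x, hx, y, hy, hxy⟩ := decomp hmem
      have hbR : (0:ℝ) < (b:ℝ) := by exact_mod_cast hb
      have hb0 : (0:ℝ) < Real.sqrt b := Real.sqrt_pos.mpr hbR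
      have hsq : (b:ℝ) = x^2 + y^2*(p:ℝ) + 2*x*y*Real.sqrt p := by
        have h2 : (b:ℝ) = (x + y*Real.sqrt p)*(x + y*Real.sqrt p) := by
          rw [← hxy, Real.mul_self_sqrt (le_of_lt hbR)]
        linear_combination h2 + y^2*hps
      have hxy0 : x*y = 0 := by
        by_contra hne
        have heq : Real.sqrt p = ((b:ℝ) - x^2 - y^2*(p:ℝ)) * (2*x*y)⁻¹ := by
          rw [eq_mul_inv_iff_mul_eq₀ (by simpa [mul_assoc] using hne : 2*x*y ≠ 0)]
          linear_combination -hsq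
        apply hpnot
        rw [heq]
        refine mul_mem (sub_mem (sub_mem (ratCast_mem_AA S b) (pow_mem hx 2))
          (mul_mem (pow_mem hy 2) (natCast_mem_AA S p))) (inv_mem_AA ?_)
        exact mul_mem (mul_mem (by simpa using natCast_mem_AA S 2) hx) hy
      rcases mul_eq_zero.mp hxy0 with hx0 | hy0
      · -- x = 0 : sqrt b = y * sqrt p
        have hby : Real.sqrt b = y * Real.sqrt p := by rw [hxy, hx0]; ring
        have hbp : (0:ℚ) < b / p := div_pos hb (by exact_mod_cast hp.pos)
        have hyv : y = Real.sqrt ((b / p : ℚ)) := by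
          rw [show (((b / p : ℚ)) : ℝ) = (b:ℝ) / ((p:ℕ):ℝ) by push_cast; ring,
            Real.sqrt_div (le_of_lt hbR), hby]
          field_simp
        obtain ⟨d, hd, c, hc⟩ := Rep (b / p) hbp (by rw [← hyv]; exact hy)
        have hpd : ¬ p ∣ d := fun hdvd => hpS (hd.2 p hp hdvd)
        refine ⟨d * p, ?_, c, ?_⟩
        · refine ⟨(Nat.squarefree_mul ?_).mpr ⟨hd.1, hp.squarefree⟩, ?_⟩
          · exact ((hp.coprime_iff_not_dvd).mpr hpd).symm
          · intro r hr hdvd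
            rcases (hr.dvd_mul).mp hdvd with h | h
            · exact mem_insert_of_mem (hd.2 r hr h)
            · rw [(Nat.prime_dvd_prime_iff_eq hr hp).mp h]
              exact mem_insert_self p S
        · rw [hby, hyv, hc,
            show ((d * p : ℕ) : ℝ) = ((d:ℕ):ℝ) * ((p:ℕ):ℝ) by push_cast; ring,
            Real.sqrt_mul (by positivity)]
          ring
      · -- y = 0 : sqrt b ∈ AA S
        have hbx : Real.sqrt b = x := by rw [hxy, hy0]; ring
        obtain ⟨d, hd, c, hc⟩ := Rep b hb (hbx ▸ hx)
        exact ⟨d, DD_mono (subset_insert p S) hd, c, hc⟩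
    · -- independence
      intro T hT f hsum d₀ hd₀T
      set T₀ := T.filter (fun d => ¬ p ∣ d) with hT₀
      set T₁ := T.filter (fun d => p ∣ d) with hT₁
      have hT₀DD : ∀ d ∈ T₀, d ∈ DD S := by
        intro d hd
        obtain ⟨hdT, hnd⟩ := mem_filter.mp hd
        refine ⟨(hT hdT).1, fun r hr hdvd => ?_⟩
        rcases mem_insert.mp ((hT hdT).2 r hr hdvd) with rfl | h
        · exact absurd hdvd hnd
        · exact h
      have hT₁fact : ∀ d ∈ T₁, p * (d / p) = d := by
        intro d hd
        exact Nat.mul_div_cancel' (mem_filter.mp hd).2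
      have hT₁DD : ∀ d ∈ T₁, d / p ∈ DD S := by
        intro d hd
        obtain ⟨hdT, hpd⟩ := mem_filter.mp hd
        have hdvd : d / p ∣ d := Nat.div_dvd_of_dvd hpd
        refine ⟨(hT hdT).1.squarefree_of_dvd hdvd, fun r hr hrd => ?_⟩
        rcases mem_insert.mp ((hT hdT).2 r hr (hrd.trans hdvd)) with rfl | h
        · exfalso
          have : r * r ∣ d := by
            calc r * r ∣ r * (d / r) := mul_dvd_mul_left r hrd
            _ = d := hT₁fact d hd
          exact hr.one_lt.ne' (Nat.isUnit_iff.mp ((hT hdT).1 r this))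
        · exact h
      set A := ∑ d ∈ T₀, (f d : ℝ) * Real.sqrt d with hA
      set B := ∑ d ∈ T₁, (f d : ℝ) * Real.sqrt ((d / p : ℕ)) with hB
      have hsplit : A + Real.sqrt p * B = 0 := by
        rw [hA, hB, Finset.mul_sum, ← hsum,
          ← Finset.sum_filter_add_sum_filter_not T (fun d => p ∣ d)]
        rw [add_comm]
        congr 1
        apply Finset.sum_congr rfl
        intro d hd
        rw [show ((d:ℕ):ℝ) = ((p:ℕ):ℝ) * (((d/p : ℕ)):ℝ) by
            exact_mod_cast congrArg (Nat.cast (R := ℝ)) (hT₁fact d hd).symm,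
          Real.sqrt_mul (by positivity)]
        ring
      have hAmem : A ∈ AA S :=
        sum_mem fun d hd => mul_mem (ratCast_mem_AA S (f d)) (sqrt_mem_AA d (hT₀DD d hd))
      have hBmem : B ∈ AA S :=
        sum_mem fun d hd => mul_mem (ratCast_mem_AA S (f d)) (sqrt_mem_AA _ (hT₁DD d hd))
      have hB0 : B = 0 := by
        by_contra hBne
        apply hpnot
        have heq : Real.sqrt p = -A * B⁻¹ := by
          rw [eq_mul_inv_iff_mul_eq₀ hBne]
          linear_combination hsplit
        rw [heq]
        exact mul_mem (neg_mem hAmem) (inv_mem_AA hBmem)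
      have hA0 : A = 0 := by
        rw [hB0, mul_zero, add_zero] at hsplit
        exact hsplit
      have hf₀ : ∀ d ∈ T₀, f d = 0 := by
        refine Ind T₀ (fun d hd => hT₀DD d (mem_coe.mp hd)) f hA0
      have hf₁ : ∀ d ∈ T₁, f d = 0 := by
        have hinj : ∀ a ∈ T₁, ∀ b ∈ T₁, a / p = b / p → a = b := by
          intro a ha b hb hab
          rw [← hT₁fact a ha, ← hT₁fact b hb, hab]
        have himg : ∑ e ∈ T₁.image (· / p), ((f (p * e) : ℚ) : ℝ) * Real.sqrt e = B := by
          rw [Finset.sum_image hinj]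
          exact Finset.sum_congr rfl fun d hd => by rw [hT₁fact d hd]
        have hz := Ind (T₁.image (· / p))
          (fun e he => by
            obtain ⟨d, hd, rfl⟩ := mem_image.mp (mem_coe.mp he)
            exact hT₁DD d hd)
          (fun e => f (p * e)) (by rw [himg, hB0])
        intro d hd
        have h2 : f (p * (d / p)) = 0 := hz (d / p) (mem_image_of_mem _ hd)
        rwa [hT₁fact d hd] at h2
      rcases em (p ∣ d₀) with h | h
      · exact hf₁ d₀ (mem_filter.mpr ⟨hd₀T, h⟩)
      · exact hf₀ d₀ (mem_filter.mpr ⟨hd₀T, h⟩)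

end SqrtAux

theorem stmt14 (k : ℕ) (l : Fin k → ℕ) (hpos : ∀ i, 0 < l i)
    (hsf : ∀ i, Squarefree (l i)) (hmono : StrictMono l)
    (q : Fin k → ℚ) (h : ∑ i, (q i : ℝ) * Real.sqrt (l i) = 0) :
    ∀ i, q i = 0 := by
  classical
  intro i
  set S : Finset ℕ := Finset.univ.biUnion (fun j : Fin k => (l j).primeFactors) with hSdef
  have hS : ∀ p ∈ S, p.Prime := by
    intro p hp
    obtain ⟨j, -, hj⟩ := Finset.mem_biUnion.mp hp
    exact Nat.prime_of_mem_primeFactors hj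
  have hlDD : ∀ j, l j ∈ SqrtAux.DD S := by
    intro j
    refine ⟨hsf j, fun r hr hdvd => ?_⟩
    exact Finset.mem_biUnion.mpr ⟨j, Finset.mem_univ j,
      Nat.mem_primeFactors.mpr ⟨hr, hdvd, (hpos j).ne'⟩⟩
  have hinj : Function.Injective l := hmono.injective
  set c : ℕ → ℚ := fun d => if h : ∃ j, l j = d then q h.choose else 0 with hc
  have hcl : ∀ j, c (l j) = q j := by
    intro j
    have h : ∃ j', l j' = l j := ⟨j, rfl⟩
    simp only [hc, dif_pos h]
    exact congrArg q (hinj h.choose_spec)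
  set T : Finset ℕ := Finset.univ.image l with hT
  have hTDD : ↑T ⊆ SqrtAux.DD S := by
    intro d hd
    obtain ⟨j, -, rfl⟩ := Finset.mem_image.mp (Finset.mem_coe.mp hd)
    exact hlDD j
  have hsum : ∑ d ∈ T, (c d : ℝ) * Real.sqrt d = 0 := by
    rw [hT, Finset.sum_image (fun a _ b _ hab => hinj hab), ← h]
    exact Finset.sum_congr rfl fun j _ => by rw [hcl j]
  have := (SqrtAux.rep_and_ind S hS).2 T hTDD c hsum (l i)
    (Finset.mem_image.mpr ⟨i, Finset.mem_univ i, rfl⟩)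
  rwa [hcl i] at this
end
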